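/- arXiv:0906.5052 — 13 statements merged into one kernel-verified Lean document; each statement's English description precedes it below -/
import Mathlib

section
/- Every Kähler-type curvature-like tensor on an almost hypercomplex NH vector space is identically zero. That is, if R is a curvature-like tensor on V satisfying R(x,y,z,w) = ε_α·R(x,y,J_α z, J_α w) = ε_α·R(J_α x, J_α y, z, w) for all x,y,z,w ∈ V and each α ∈ {1,2,3}, then R = 0. -/
/-!
Regard `R` as a trilinear map with values in the dual of `V`. If `J² = -1` and
`R(Jx, Jy) = -R(x, y)`, the Bianchi identity at `(Jx, y, Jz)` forces `R(Jx, y, Jz) = -R(x, y, z)`.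
Applied to `J₂` and `J₃ = J₁J₂` this gives `R(J₁x, y, J₁z) = R(x, y, z)`. Since moreover
`R(J₁x, J₁y) = R(x, y)`, the Bianchi identity at `(J₁x, y, J₁z)` becomes
`R(x, y, z) - R(y, z, x) + R(z, x, y) = 0`; subtracting it from the Bianchi identity gives `2R = 0`.
-/

namespace LinearMap

section CommRing

variable {𝕜 V N : Type*} [CommRing 𝕜] [AddCommGroup V] [Module 𝕜 V] [AddCommGroup N] [Module 𝕜 N]

theorem map_left_eq_neg_map_right_of_invariant (B : V →ₗ[𝕜] V →ₗ[𝕜] N) {J : V →ₗ[𝕜] V}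
    (hJ : ∀ x, J (J x) = -x) (hB : ∀ x y, B (J x) (J y) = B x y) (x y : V) :
    B (J x) y = -B x (J y) := by
  simpa [hJ, neg_eq_iff_eq_neg] using hB x (J y)

theorem map_left_eq_map_right_of_antiInvariant (B : V →ₗ[𝕜] V →ₗ[𝕜] N) {J : V →ₗ[𝕜] V}
    (hJ : ∀ x, J (J x) = -x) (hB : ∀ x y, B (J x) (J y) = -B x y) (x y : V) :
    B (J x) y = B x (J y) := by
  simpa [hJ] using hB x (J y)

end CommRing

variable {𝕜 V M : Type*} [Field 𝕜] [NeZero (2 : 𝕜)] [AddCommGroup V] [Module 𝕜 V]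
  [AddCommGroup M] [Module 𝕜 M]
  {B : V →ₗ[𝕜] V →ₗ[𝕜] V →ₗ[𝕜] M} (hB : ∀ x y z, B x y z + B y z x + B z x y = 0)
include hB

theorem apply_map_apply_map_eq_neg_of_antiInvariant {J : V →ₗ[𝕜] V} (hJ : ∀ x, J (J x) = -x)
    (hBJ : ∀ x y, B (J x) (J y) = -B x y) (x y z : V) :
    B (J x) y (J z) = -B x y z := by
  have cyclic : ∀ x y z,
      B (J x) y (J z) + B x y z + (B (J y) z (J x) + B y z x) = 0 := by
    intro x y z
    have := hB (J x) y (J z)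
    rw [← map_left_eq_map_right_of_antiInvariant B hJ hBJ y z, hBJ, neg_apply] at this
    linear_combination (norm := module) this + hB x y z
  have two : (2 : 𝕜) • (B (J x) y (J z) + B x y z) = 0 := by
    linear_combination (norm := module) cyclic x y z - cyclic y z x + cyclic z x y
  rw [smul_eq_zero_iff_right two_ne_zero, add_eq_zero_iff_eq_neg] at two
  exact two

theorem eq_zero_of_bianchi_of_invariant {J : V →ₗ[𝕜] V} (hJ : ∀ x, J (J x) = -x)
    (hBJ : ∀ x y, B (J x) (J y) = B x y) (hBJJ : ∀ x y z, B (J x) y (J z) = B x y z) :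
    B = 0 := by
  have cyclic : ∀ x y z, B x y z - B y z x + B z x y = 0 := by
    intro x y z
    have := hB (J x) y (J z)
    rw [← neg_neg (B y (J z)), ← map_left_eq_neg_map_right_of_invariant B hJ hBJ y z] at this
    simp only [neg_apply, hBJ, hBJJ] at this
    linear_combination (norm := module) this
  ext x y z
  have two : (2 : 𝕜) • B x y z = 0 := by
    linear_combination (norm := module) hB x y z - cyclic z x y
  simpa [two_ne_zero] using two

end LinearMap

theorem stmt0_general
    (V : Type) [AddCommGroup V] [Module ℝ V]
    (J1 J2 J3 : V →ₗ[ℝ] V)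
    (hJ1 : ∀ x, J1 (J1 x) = -x) (hJ2 : ∀ x, J2 (J2 x) = -x) (hJ3 : ∀ x, J3 (J3 x) = -x)
    (h312 : ∀ x, J3 x = J1 (J2 x))
    (R : V →ₗ[ℝ] V →ₗ[ℝ] V →ₗ[ℝ] V →ₗ[ℝ] ℝ)
    (hRbianchi : ∀ x y z w, R x y z w + R y z x w + R z x y w = 0)
    (hK1x : ∀ x y z w, R x y z w = R (J1 x) (J1 y) z w)
    (hK2x : ∀ x y z w, R x y z w = -R (J2 x) (J2 y) z w)
    (hK3x : ∀ x y z w, R x y z w = -R (J3 x) (J3 y) z w) :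
    ∀ x y z w, R x y z w = 0 := by
  have bianchi : ∀ x y z, R x y z + R y z x + R z x y = 0 := fun x y z ↦
    LinearMap.ext (hRbianchi x y z)
  have invariant_J1 : ∀ x y, R (J1 x) (J1 y) = R x y := fun x y ↦
    LinearMap.ext₂ fun z w ↦ (hK1x x y z w).symm
  have antiInvariant : ∀ J : V →ₗ[ℝ] V, (∀ x y z w, R x y z w = -R (J x) (J y) z w) →
      ∀ x y, R (J x) (J y) = -R x y := fun J hK x y ↦
    LinearMap.ext₂ fun z w ↦ by simp [hK x y z w]
  have invariant_J1_J1 : ∀ x y z, R (J1 x) y (J1 z) = R x y z := by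
    have on_range_J2 : ∀ x y z, R (J1 (J2 x)) y (J1 (J2 z)) = R (J2 x) y (J2 z) := by
      intro x y z
      rw [← h312, ← h312,
        LinearMap.apply_map_apply_map_eq_neg_of_antiInvariant bianchi hJ3 (antiInvariant J3 hK3x),
        LinearMap.apply_map_apply_map_eq_neg_of_antiInvariant bianchi hJ2 (antiInvariant J2 hK2x)]
    intro x y z
    simpa [hJ2] using on_range_J2 (-J2 x) y (-J2 z)
  simp [LinearMap.eq_zero_of_bianchi_of_invariant bianchi hJ1 invariant_J1 invariant_J1_J1]

theorem stmt0
    (n : ℕ) (hn : 1 ≤ n)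
    (V : Type) [AddCommGroup V] [Module ℝ V] [FiniteDimensional ℝ V]
    (hdim : Module.finrank ℝ V = 4 * n)
    (J1 J2 J3 : V →ₗ[ℝ] V)
    (hJ1 : ∀ x, J1 (J1 x) = -x) (hJ2 : ∀ x, J2 (J2 x) = -x) (hJ3 : ∀ x, J3 (J3 x) = -x)
    (h123 : ∀ x, J1 x = J2 (J3 x)) (h132 : ∀ x, J1 x = -J3 (J2 x))
    (h231 : ∀ x, J2 x = J3 (J1 x)) (h213 : ∀ x, J2 x = -J1 (J3 x))
    (h312 : ∀ x, J3 x = J1 (J2 x)) (h321 : ∀ x, J3 x = -J2 (J1 x))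
    (g : V →ₗ[ℝ] V →ₗ[ℝ] ℝ)
    (hgsymm : ∀ x y, g x y = g y x)
    (hgnd : ∀ x, (∀ y, g x y = 0) → x = 0)
    (hgJ1 : ∀ x y, g (J1 x) (J1 y) = g x y)
    (hgJ2 : ∀ x y, g (J2 x) (J2 y) = -g x y)
    (hgJ3 : ∀ x y, g (J3 x) (J3 y) = -g x y)
    (R : V →ₗ[ℝ] V →ₗ[ℝ] V →ₗ[ℝ] V →ₗ[ℝ] ℝ)
    (hRa : ∀ x y z w, R x y z w = -R y x z w)
    (hRb : ∀ x y z w, R x y z w = -R x y w z)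
    (hRp : ∀ x y z w, R x y z w = R z w x y)
    (hRbianchi : ∀ x y z w, R x y z w + R y z x w + R z x y w = 0)
    (hK1z : ∀ x y z w, R x y z w = R x y (J1 z) (J1 w))
    (hK1x : ∀ x y z w, R x y z w = R (J1 x) (J1 y) z w)
    (hK2z : ∀ x y z w, R x y z w = -R x y (J2 z) (J2 w))
    (hK2x : ∀ x y z w, R x y z w = -R (J2 x) (J2 y) z w)
    (hK3z : ∀ x y z w, R x y z w = -R x y (J3 z) (J3 w))
    (hK3x : ∀ x y z w, R x y z w = -R (J3 x) (J3 y) z w) :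
    ∀ x y z w, R x y z w = 0 :=
  stmt0_general V J1 J2 J3 hJ1 hJ2 hJ3 h312 R hRbianchi hK1x hK2x hK3x
end

section
/- Suppose R : V×V×V×V → ℝ is multilinear and antisymmetric in its last two arguments, and η₁, η₂, η₃ are bilinear forms on V such that for each cyclic permutation (α,β,γ) of (1,2,3) and all x,y,z,w ∈ V: R(x,y,z,w) − ε_α·R(x,y,J_α z, J_α w) = η_β(x,y)·g(J_β z, w) + η_γ(x,y)·g(J_γ z, w). Then η₂ = 0 and η₃ = 0. -/
/-!
In the structure equation for `α = 1` the left side is antisymmetric in `(z, w)`, while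
`g (J₂ z) w` and `g (J₃ z) w` are symmetric in `(z, w)`, since `J₂` and `J₃` are anti-isometries
squaring to `-1`. Hence both sides vanish, and nondegeneracy of `g` gives
`η₂(x,y) J₂ + η₃(x,y) J₃ = 0`. Composing with `J₂` yields `η₂(x,y) · id = η₃(x,y) J₁`, and using
`J₁² = -1` once more, `(η₂(x,y)² + η₃(x,y)²) x = 0`; for `x = 0` the conclusion is trivial.
-/

section

variable {V : Type*} [AddCommGroup V] [Module ℝ V]

lemma apply_apply_comm_of_anti_isometry {g : V →ₗ[ℝ] V →ₗ[ℝ] ℝ} {J : V →ₗ[ℝ] V}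
    (hgsymm : ∀ x y, g x y = g y x) (hJ : ∀ x, J (J x) = -x)
    (hgJ : ∀ x y, g (J x) (J y) = -g x y) (z w : V) : g (J z) w = g (J w) z := by
  have h := hgJ z (J w)
  rw [hJ, map_neg, hgsymm z] at h
  linarith

lemma smul_add_smul_eq_zero_of_separating {g : V →ₗ[ℝ] V →ₗ[ℝ] ℝ}
    (hgnd : ∀ x, (∀ y, g x y = 0) → x = 0) {u v : V} {a b : ℝ}
    (h : ∀ w, a * g u w + b * g v w = 0) : a • u + b • v = 0 :=
  hgnd _ fun w => by simpa using h w

lemma mul_self_add_mul_self_smul_eq_zero {J1 J2 J3 : V →ₗ[ℝ] V}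
    (hJ1 : ∀ x, J1 (J1 x) = -x) (hJ2 : ∀ x, J2 (J2 x) = -x) (h123 : ∀ x, J1 x = J2 (J3 x))
    {a b : ℝ} (h : ∀ z, a • J2 z + b • J3 z = 0) (z : V) : (a * a + b * b) • z = 0 := by
  have ha : ∀ z, a • z = b • J1 z := fun z => by
    have := congrArg J2 (h z)
    rw [map_add, map_smul, map_smul, hJ2, ← h123, map_zero] at this
    linear_combination (norm := module) -this
  have hJ1z : a • J1 z = -b • z := by rw [ha, hJ1, smul_neg, neg_smul]
  linear_combination (norm := module) a • ha z + b • hJ1z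

end

theorem stmt1_general
    (V : Type) [AddCommGroup V] [Module ℝ V]
    (J1 J2 J3 : V →ₗ[ℝ] V)
    (hJ1 : ∀ x, J1 (J1 x) = -x) (hJ2 : ∀ x, J2 (J2 x) = -x) (hJ3 : ∀ x, J3 (J3 x) = -x)
    (h123 : ∀ x, J1 x = J2 (J3 x))
    (g : V →ₗ[ℝ] V →ₗ[ℝ] ℝ)
    (hgsymm : ∀ x y, g x y = g y x)
    (hgnd : ∀ x, (∀ y, g x y = 0) → x = 0)
    (hgJ2 : ∀ x y, g (J2 x) (J2 y) = -g x y)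
    (hgJ3 : ∀ x y, g (J3 x) (J3 y) = -g x y)
    (R : V →ₗ[ℝ] V →ₗ[ℝ] V →ₗ[ℝ] V →ₗ[ℝ] ℝ)
    (hRb : ∀ x y z w, R x y z w = -R x y w z)
    (η2 η3 : V →ₗ[ℝ] V →ₗ[ℝ] ℝ)
    (hc1 : ∀ x y z w, R x y z w - R x y (J1 z) (J1 w) = η2 x y * g (J2 z) w + η3 x y * g (J3 z) w) :
    (∀ x y, η2 x y = 0) ∧ (∀ x y, η3 x y = 0) := by
  have hg2 := apply_apply_comm_of_anti_isometry hgsymm hJ2 hgJ2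
  have hg3 := apply_apply_comm_of_anti_isometry hgsymm hJ3 hgJ3
  have hcomb : ∀ x y z w, η2 x y * g (J2 z) w + η3 x y * g (J3 z) w = 0 := by
    intro x y z w
    have hwz := hc1 x y w z
    rw [hRb x y w z, hRb x y (J1 w) (J1 z), hg2 w z, hg3 w z] at hwz
    linarith [hc1 x y z w]
  have hvanish : ∀ x y, η2 x y = 0 ∧ η3 x y = 0 := by
    intro x y
    have hx := mul_self_add_mul_self_smul_eq_zero hJ1 hJ2 h123
      (fun z => smul_add_smul_eq_zero_of_separating hgnd (hcomb x y z)) x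
    rcases smul_eq_zero.mp hx with hsq | rfl
    · exact mul_self_add_mul_self_eq_zero.mp hsq
    · simp
  exact ⟨fun x y => (hvanish x y).1, fun x y => (hvanish x y).2⟩

theorem stmt1
    (n : ℕ) (hn : 1 ≤ n)
    (V : Type) [AddCommGroup V] [Module ℝ V] [FiniteDimensional ℝ V]
    (hdim : Module.finrank ℝ V = 4 * n)
    (J1 J2 J3 : V →ₗ[ℝ] V)
    (hJ1 : ∀ x, J1 (J1 x) = -x) (hJ2 : ∀ x, J2 (J2 x) = -x) (hJ3 : ∀ x, J3 (J3 x) = -x)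
    (h123 : ∀ x, J1 x = J2 (J3 x)) (h132 : ∀ x, J1 x = -J3 (J2 x))
    (h231 : ∀ x, J2 x = J3 (J1 x)) (h213 : ∀ x, J2 x = -J1 (J3 x))
    (h312 : ∀ x, J3 x = J1 (J2 x)) (h321 : ∀ x, J3 x = -J2 (J1 x))
    (g : V →ₗ[ℝ] V →ₗ[ℝ] ℝ)
    (hgsymm : ∀ x y, g x y = g y x)
    (hgnd : ∀ x, (∀ y, g x y = 0) → x = 0)
    (hgJ1 : ∀ x y, g (J1 x) (J1 y) = g x y)
    (hgJ2 : ∀ x y, g (J2 x) (J2 y) = -g x y)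
    (hgJ3 : ∀ x y, g (J3 x) (J3 y) = -g x y)
    (R : V →ₗ[ℝ] V →ₗ[ℝ] V →ₗ[ℝ] V →ₗ[ℝ] ℝ)
    (hRb : ∀ x y z w, R x y z w = -R x y w z)
    (η1 η2 η3 : V →ₗ[ℝ] V →ₗ[ℝ] ℝ)
    (hc1 : ∀ x y z w, R x y z w - R x y (J1 z) (J1 w) = η2 x y * g (J2 z) w + η3 x y * g (J3 z) w)
    (hc2 : ∀ x y z w, R x y z w + R x y (J2 z) (J2 w) = η3 x y * g (J3 z) w + η1 x y * g (J1 z) w)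
    (hc3 : ∀ x y z w, R x y z w + R x y (J3 z) (J3 w) = η1 x y * g (J1 z) w + η2 x y * g (J2 z) w) :
    (∀ x y, η2 x y = 0) ∧ (∀ x y, η3 x y = 0) :=
  stmt1_general V J1 J2 J3 hJ1 hJ2 hJ3 h123 g hgsymm hgnd hgJ2 hgJ3 R hRb η2 η3 hc1
end

section
/- Let R be a curvature-like tensor on V satisfying the quaternionic Kähler curvature relations with associated alternating bilinear form η₁. Then R is of Kähler type, i.e. R(x,y,z,w) = ε_α·R(x,y,J_α z, J_α w) = ε_α·R(J_α x, J_α y, z, w) holds for all x,y,z,w and all α ∈ {1,2,3}, if and only if η₁ = 0. -/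
/-! Subtracting the Kähler relation for `J₂` from the quaternionic Kähler one leaves
`η(x,y) · g(J₁z,w) = 0`; since `J₁` is invertible and `g` nondegenerate, this forces `η = 0`.
Conversely, for `η = 0` the relations on the last pair of arguments are the Kähler ones, and
pair symmetry moves them to the first pair. -/

theorem eq_zero_of_forall_mul_nondegenerate_eq_zero {𝕜 V : Type*} [Field 𝕜] [AddCommGroup V]
    [Module 𝕜 V] (η : V →ₗ[𝕜] V →ₗ[𝕜] 𝕜) (g : V → V → 𝕜)
    (hg : ∀ x, (∀ y, g x y = 0) → x = 0) (J : V → V) (hJ : Function.Surjective J)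
    (h : ∀ x y z w, η x y * g (J z) w = 0) (x y : V) : η x y = 0 := by
  by_contra hxy
  have hx : x ≠ 0 := by
    rintro rfl
    simp at hxy
  obtain ⟨w, hw⟩ : ∃ w, g x w ≠ 0 := by
    by_contra! hgx
    exact hx (hg x hgx)
  obtain ⟨z, rfl⟩ := hJ x
  exact mul_ne_zero hxy hw (h _ y z w)

theorem forall_apply_eq_of_pair_symm {α β : Type*} (R : α → α → α → α → β)
    (hRp : ∀ x y z w, R x y z w = R z w x y) (J : α → α) (φ : β → β)
    (h : ∀ x y z w, R x y z w = φ (R x y (J z) (J w))) (x y z w : α) :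
    R x y z w = φ (R (J x) (J y) z w) := by
  rw [hRp, hRp (J x)]
  exact h z w x y

theorem stmt2_general
    (V : Type) [AddCommGroup V] [Module ℝ V]
    (J1 J2 J3 : V →ₗ[ℝ] V)
    (hJ1 : ∀ x, J1 (J1 x) = -x)
    (g : V →ₗ[ℝ] V →ₗ[ℝ] ℝ)
    (hgnd : ∀ x, (∀ y, g x y = 0) → x = 0)
    (R : V →ₗ[ℝ] V →ₗ[ℝ] V →ₗ[ℝ] V →ₗ[ℝ] ℝ)
    (hRp : ∀ x y z w, R x y z w = R z w x y)
    (η : V →ₗ[ℝ] V →ₗ[ℝ] ℝ)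
    (hQK1 : ∀ x y z w, R x y (J1 z) (J1 w) = R x y z w)
    (hQK2 : ∀ x y z w, R x y (J2 z) (J2 w) = -R x y z w + η x y * g (J1 z) w)
    (hQK3 : ∀ x y z w, R x y (J3 z) (J3 w) = -R x y z w + η x y * g (J1 z) w)
    :
    ((∀ x y z w, R x y z w = R x y (J1 z) (J1 w)) ∧
     (∀ x y z w, R x y z w = R (J1 x) (J1 y) z w) ∧
     (∀ x y z w, R x y z w = -R x y (J2 z) (J2 w)) ∧
     (∀ x y z w, R x y z w = -R (J2 x) (J2 y) z w) ∧
     (∀ x y z w, R x y z w = -R x y (J3 z) (J3 w)) ∧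
     (∀ x y z w, R x y z w = -R (J3 x) (J3 y) z w)) ↔
    (∀ x y, η x y = 0) := by
  constructor
  · rintro ⟨-, -, hK2, -, -, -⟩
    have hJ1_surj : Function.Surjective J1 := fun x => ⟨-J1 x, by simp [hJ1]⟩
    refine eq_zero_of_forall_mul_nondegenerate_eq_zero η (g · ·) hgnd J1 hJ1_surj ?_
    intro x y z w
    linarith [hQK2 x y z w, hK2 x y z w]
  · intro hη
    have hK1 (x y z w : V) : R x y z w = R x y (J1 z) (J1 w) := (hQK1 x y z w).symm
    have hK2 (x y z w : V) : R x y z w = -R x y (J2 z) (J2 w) := by rw [hQK2, hη]; ring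
    have hK3 (x y z w : V) : R x y z w = -R x y (J3 z) (J3 w) := by rw [hQK3, hη]; ring
    exact ⟨hK1, forall_apply_eq_of_pair_symm (R · · · ·) hRp J1 id hK1,
      hK2, forall_apply_eq_of_pair_symm (R · · · ·) hRp J2 Neg.neg hK2,
      hK3, forall_apply_eq_of_pair_symm (R · · · ·) hRp J3 Neg.neg hK3⟩

theorem stmt2
    (n : ℕ) (hn : 1 ≤ n)
    (V : Type) [AddCommGroup V] [Module ℝ V] [FiniteDimensional ℝ V]
    (hdim : Module.finrank ℝ V = 4 * n)
    (J1 J2 J3 : V →ₗ[ℝ] V)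
    (hJ1 : ∀ x, J1 (J1 x) = -x) (hJ2 : ∀ x, J2 (J2 x) = -x) (hJ3 : ∀ x, J3 (J3 x) = -x)
    (h123 : ∀ x, J1 x = J2 (J3 x)) (h132 : ∀ x, J1 x = -J3 (J2 x))
    (h231 : ∀ x, J2 x = J3 (J1 x)) (h213 : ∀ x, J2 x = -J1 (J3 x))
    (h312 : ∀ x, J3 x = J1 (J2 x)) (h321 : ∀ x, J3 x = -J2 (J1 x))
    (g : V →ₗ[ℝ] V →ₗ[ℝ] ℝ)
    (hgsymm : ∀ x y, g x y = g y x)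
    (hgnd : ∀ x, (∀ y, g x y = 0) → x = 0)
    (hgJ1 : ∀ x y, g (J1 x) (J1 y) = g x y)
    (hgJ2 : ∀ x y, g (J2 x) (J2 y) = -g x y)
    (hgJ3 : ∀ x y, g (J3 x) (J3 y) = -g x y)
    (R : V →ₗ[ℝ] V →ₗ[ℝ] V →ₗ[ℝ] V →ₗ[ℝ] ℝ)
    (hRa : ∀ x y z w, R x y z w = -R y x z w)
    (hRb : ∀ x y z w, R x y z w = -R x y w z)
    (hRp : ∀ x y z w, R x y z w = R z w x y)
    (hRbianchi : ∀ x y z w, R x y z w + R y z x w + R z x y w = 0)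
    (η : V →ₗ[ℝ] V →ₗ[ℝ] ℝ)
    (hηalt : ∀ x y, η x y = -η y x)
    (hQK1 : ∀ x y z w, R x y (J1 z) (J1 w) = R x y z w)
    (hQK2 : ∀ x y z w, R x y (J2 z) (J2 w) = -R x y z w + η x y * g (J1 z) w)
    (hQK3 : ∀ x y z w, R x y (J3 z) (J3 w) = -R x y z w + η x y * g (J1 z) w)
    :
    ((∀ x y z w, R x y z w = R x y (J1 z) (J1 w)) ∧
     (∀ x y z w, R x y z w = R (J1 x) (J1 y) z w) ∧
     (∀ x y z w, R x y z w = -R x y (J2 z) (J2 w)) ∧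
     (∀ x y z w, R x y z w = -R (J2 x) (J2 y) z w) ∧
     (∀ x y z w, R x y z w = -R x y (J3 z) (J3 w)) ∧
     (∀ x y z w, R x y z w = -R (J3 x) (J3 y) z w)) ↔
    (∀ x y, η x y = 0) :=
  stmt2_general V J1 J2 J3 hJ1 g hgnd R hRp η hQK1 hQK2 hQK3
end

section
/- Let R be a curvature-like tensor on V satisfying the quaternionic Kähler curvature relations with associated alternating bilinear form η₁. Then R = 0 if and only if η₁ = 0. -/
/-!
With `η₁ = 0` the relations say that `J₂` and `J₃` anti-preserve the second pair of slots
of `R`. Together with `J² = -1`, pair symmetry and the Bianchi identity this lets each of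
`J₂`, `J₃` move freely between the slots of `R`. Moving `J₂` and `J₃` out of the first slot
in the two possible orders gives `R(J₂J₃x, y, z, w) = R(J₃J₂x, y, z, w)`; as
`J₃J₂ = -J₂J₃ = -J₁` and `J₁` is onto, `R = 0`. Conversely, if `R = 0` the relations force
`η₁(x, y) g(J₁z, w) = 0`, and `g` is nondegenerate.
-/

section SlotSymmetric

variable {𝕜 V : Type*} [CommRing 𝕜] [AddCommGroup V] [Module 𝕜 V]
  (R : V →ₗ[𝕜] V →ₗ[𝕜] V →ₗ[𝕜] V →ₗ[𝕜] 𝕜) (J : V →ₗ[𝕜] V)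

structure IsSlotSymmetric : Prop where
  left : ∀ x y z w, R (J x) y z w = R x (J y) z w
  cross : ∀ x y z w, R (J x) y z w = R x y (J z) w

theorem move_right_of_anti_invariant (hJ : ∀ x, J (J x) = -x)
    (hRJ : ∀ x y z w, R x y (J z) (J w) = -R x y z w) (x y z w : V) :
    R x y (J z) w = R x y z (J w) := by
  simpa [hJ] using hRJ x y z (J w)

theorem isSlotSymmetric_of_anti_invariant [IsAddTorsionFree 𝕜]
    (hRp : ∀ x y z w, R x y z w = R z w x y)
    (hRbianchi : ∀ x y z w, R x y z w + R y z x w + R z x y w = 0)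
    (hJ : ∀ x, J (J x) = -x) (hRJ : ∀ x y z w, R x y (J z) (J w) = -R x y z w) :
    IsSlotSymmetric R J := by
  have right := move_right_of_anti_invariant R J hJ hRJ
  have left : ∀ x y z w, R (J x) y z w = R x (J y) z w := fun x y z w => by
    rw [hRp, right, hRp]
  refine ⟨left, fun x y z w => ?_⟩
  have h₁ := hRbianchi (J x) y z w
  have h₂ := hRbianchi x (J y) z w
  have h₃ := hRbianchi x y (J z) w
  have h₄ := hRbianchi x y z (J w)
  rw [← left z x y w] at h₁
  rw [← left x y z w] at h₂
  rw [← left y z x w] at h₃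
  rw [← right x y z w, ← right y z x w, ← right z x y w] at h₄
  -- `h₁ + h₂ + h₃ - h₄` is twice the cyclic sum below.
  have hcyc : R (J x) y z w + R (J y) z x w + R (J z) x y w = 0 :=
    self_eq_neg.mp (by linear_combination h₁ + h₂ + h₃ - h₄)
  linear_combination hcyc - h₃

variable {R}

theorem IsSlotSymmetric.apply_comm {K L : V →ₗ[𝕜] V} (hK : IsSlotSymmetric R K)
    (hL : IsSlotSymmetric R L) (x y z w : V) :
    R (K (L x)) y z w = R (L (K x)) y z w := by
  rw [hK.left, hL.cross, hL.cross, hK.left]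

theorem IsSlotSymmetric.apply_eq_zero_of_anticomm [IsAddTorsionFree 𝕜] {K L : V →ₗ[𝕜] V}
    (hK : IsSlotSymmetric R K) (hL : IsSlotSymmetric R L) (hKL : ∀ x, K (L x) + L (K x) = 0)
    (x y z w : V) : R (K (L x)) y z w = 0 := by
  have hsum : R (K (L x)) y z w + R (L (K x)) y z w = 0 := by
    simp [← LinearMap.add_apply, ← map_add, hKL]
  refine self_eq_neg.mp ?_
  linear_combination hsum + hK.apply_comm hL x y z w

end SlotSymmetric

theorem stmt3_general
    (V : Type) [AddCommGroup V] [Module ℝ V]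
    (J1 J2 J3 : V →ₗ[ℝ] V)
    (hJ1 : ∀ x, J1 (J1 x) = -x) (hJ2 : ∀ x, J2 (J2 x) = -x) (hJ3 : ∀ x, J3 (J3 x) = -x)
    (h123 : ∀ x, J1 x = J2 (J3 x)) (h132 : ∀ x, J1 x = -J3 (J2 x))
    (g : V →ₗ[ℝ] V →ₗ[ℝ] ℝ)
    (hgnd : ∀ x, (∀ y, g x y = 0) → x = 0)
    (R : V →ₗ[ℝ] V →ₗ[ℝ] V →ₗ[ℝ] V →ₗ[ℝ] ℝ)
    (hRp : ∀ x y z w, R x y z w = R z w x y)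
    (hRbianchi : ∀ x y z w, R x y z w + R y z x w + R z x y w = 0)
    (η : V →ₗ[ℝ] V →ₗ[ℝ] ℝ)
    (hQK2 : ∀ x y z w, R x y (J2 z) (J2 w) = -R x y z w + η x y * g (J1 z) w)
    (hQK3 : ∀ x y z w, R x y (J3 z) (J3 w) = -R x y z w + η x y * g (J1 z) w)
    :
    (∀ x y z w, R x y z w = 0) ↔ (∀ x y, η x y = 0) := by
  constructor
  · intro hR x y
    by_contra hxy
    have hgx : ∀ w, g x w = 0 := fun w => by
      have h := hQK2 x y (-J1 x) w
      simp only [map_neg, LinearMap.neg_apply, hJ1, neg_neg, hR, neg_zero, zero_add] at h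
      exact (mul_eq_zero.mp h.symm).resolve_left hxy
    simp [hgnd x hgx] at hxy
  · intro hη x y z w
    have hS2 := isSlotSymmetric_of_anti_invariant R J2 hRp hRbianchi hJ2 (by simpa [hη] using hQK2)
    have hS3 := isSlotSymmetric_of_anti_invariant R J3 hRp hRbianchi hJ3 (by simpa [hη] using hQK3)
    have hx : x = J2 (J3 (-J1 x)) := by rw [← h123, map_neg, hJ1, neg_neg]
    have hanti : ∀ u, J2 (J3 u) + J3 (J2 u) = 0 := fun u => by
      rw [← h123, h132, neg_add_cancel]
    rw [hx]
    exact hS2.apply_eq_zero_of_anticomm hS3 hanti _ y z w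

theorem stmt3
    (n : ℕ) (hn : 1 ≤ n)
    (V : Type) [AddCommGroup V] [Module ℝ V] [FiniteDimensional ℝ V]
    (hdim : Module.finrank ℝ V = 4 * n)
    (J1 J2 J3 : V →ₗ[ℝ] V)
    (hJ1 : ∀ x, J1 (J1 x) = -x) (hJ2 : ∀ x, J2 (J2 x) = -x) (hJ3 : ∀ x, J3 (J3 x) = -x)
    (h123 : ∀ x, J1 x = J2 (J3 x)) (h132 : ∀ x, J1 x = -J3 (J2 x))
    (h231 : ∀ x, J2 x = J3 (J1 x)) (h213 : ∀ x, J2 x = -J1 (J3 x))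
    (h312 : ∀ x, J3 x = J1 (J2 x)) (h321 : ∀ x, J3 x = -J2 (J1 x))
    (g : V →ₗ[ℝ] V →ₗ[ℝ] ℝ)
    (hgsymm : ∀ x y, g x y = g y x)
    (hgnd : ∀ x, (∀ y, g x y = 0) → x = 0)
    (hgJ1 : ∀ x y, g (J1 x) (J1 y) = g x y)
    (hgJ2 : ∀ x y, g (J2 x) (J2 y) = -g x y)
    (hgJ3 : ∀ x y, g (J3 x) (J3 y) = -g x y)
    (R : V →ₗ[ℝ] V →ₗ[ℝ] V →ₗ[ℝ] V →ₗ[ℝ] ℝ)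
    (hRa : ∀ x y z w, R x y z w = -R y x z w)
    (hRb : ∀ x y z w, R x y z w = -R x y w z)
    (hRp : ∀ x y z w, R x y z w = R z w x y)
    (hRbianchi : ∀ x y z w, R x y z w + R y z x w + R z x y w = 0)
    (η : V →ₗ[ℝ] V →ₗ[ℝ] ℝ)
    (hηalt : ∀ x y, η x y = -η y x)
    (hQK1 : ∀ x y z w, R x y (J1 z) (J1 w) = R x y z w)
    (hQK2 : ∀ x y z w, R x y (J2 z) (J2 w) = -R x y z w + η x y * g (J1 z) w)
    (hQK3 : ∀ x y z w, R x y (J3 z) (J3 w) = -R x y z w + η x y * g (J1 z) w)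
    :
    (∀ x y z w, R x y z w = 0) ↔ (∀ x y, η x y = 0) :=
  stmt3_general V J1 J2 J3 hJ1 hJ2 hJ3 h123 h132 g hgnd R hRp hRbianchi η hQK2 hQK3
end

section
/- Let R be a curvature-like tensor on V satisfying the quaternionic Kähler curvature relations with associated alternating bilinear form η₁. Then for every basis (e₁,…,e_{4n}) of V with g-dual basis (ẽ₁,…,ẽ_{4n}) and all x,y ∈ V: Σᵢ R(x, y, ẽᵢ, J₁eᵢ) = 2n·η₁(x,y). -/
/-!
The sum `∑ᵢ B(ẽᵢ, eᵢ)` is the trace of the bilinear form `B` with respect to `g`, so it does not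
depend on the dual pair of bases. Apply this to `B(z, w) = R(x, y, z, J₁w)` and to the dual pair
`(−J₂eᵢ, J₂ẽᵢ)`. Since `J₁J₂ = −J₂J₁`, the new sum is `∑ᵢ R(x, y, J₂ẽᵢ, J₂J₁eᵢ)`, which the
quaternionic Kähler relation for `J₂` turns into `−∑ᵢ R(x, y, ẽᵢ, J₁eᵢ) + 4n·η₁(x, y)`.
Hence twice the sum is `4n·η₁(x, y)`.
-/

open Finset

section DualPair

variable {ι R M : Type*} [Fintype ι] [DecidableEq ι] [CommRing R] [AddCommGroup M] [Module R M]
  (g : M →ₗ[R] M →ₗ[R] R)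

theorem Module.Basis.sum_apply_smul_of_dual_left (e : Module.Basis ι R M) (f : ι → M)
    (hd : ∀ i j, g (f i) (e j) = if i = j then 1 else 0) (v : M) :
    ∑ k, g (f k) v • e k = v := by
  have hcoord : ∀ k, g (f k) = e.coord k := fun k =>
    e.ext fun j => by simp [hd, Finsupp.single_apply, eq_comm]
  simp only [hcoord, e.coord_apply, e.sum_repr]

theorem Module.Basis.sum_apply_smul_of_dual_right (f : Module.Basis ι R M) (e : ι → M)
    (hd : ∀ i j, g (f i) (e j) = if i = j then 1 else 0) (v : M) :
    ∑ k, g v (e k) • f k = v := by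
  have hcoord : ∀ k, g.flip (e k) = f.coord k := fun k =>
    f.ext fun j => by simp [hd, Finsupp.single_apply, eq_comm]
  simp only [← LinearMap.flip_apply g v, hcoord, f.coord_apply, f.sum_repr]

theorem sum_apply_dual_pair_eq (B : M →ₗ[R] M →ₗ[R] R)
    (e : Module.Basis ι R M) (f e' : ι → M) (f' : Module.Basis ι R M)
    (hd : ∀ i j, g (f i) (e j) = if i = j then 1 else 0)
    (hd' : ∀ i j, g (f' i) (e' j) = if i = j then 1 else 0) :
    ∑ i, B (f i) (e i) = ∑ j, B (f' j) (e' j) := by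
  calc ∑ i, B (f i) (e i)
      = ∑ i, B (∑ j, g (f i) (e' j) • f' j) (e i) := by
        simp only [f'.sum_apply_smul_of_dual_right g e' hd']
    _ = ∑ j, B (f' j) (∑ i, g (f i) (e' j) • e i) := by
        simp only [map_sum, map_smul, LinearMap.sum_apply, LinearMap.smul_apply]
        exact sum_comm
    _ = ∑ j, B (f' j) (e' j) := by
        simp only [e.sum_apply_smul_of_dual_left g f hd]

end DualPair

theorem stmt4_general
    (n : ℕ)
    (V : Type) [AddCommGroup V] [Module ℝ V]
    (J1 J2 J3 : V →ₗ[ℝ] V)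
    (hJ2 : ∀ x, J2 (J2 x) = -x)
    (h312 : ∀ x, J3 x = J1 (J2 x)) (h321 : ∀ x, J3 x = -J2 (J1 x))
    (g : V →ₗ[ℝ] V →ₗ[ℝ] ℝ)
    (hgJ1 : ∀ x y, g (J1 x) (J1 y) = g x y)
    (hgJ2 : ∀ x y, g (J2 x) (J2 y) = -g x y)
    (R : V →ₗ[ℝ] V →ₗ[ℝ] V →ₗ[ℝ] V →ₗ[ℝ] ℝ)
    (η : V →ₗ[ℝ] V →ₗ[ℝ] ℝ)
    (hQK2 : ∀ x y z w, R x y (J2 z) (J2 w) = -R x y z w + η x y * g (J1 z) w)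
    :
    ∀ (e f : Module.Basis (Fin (4 * n)) ℝ V),
      (∀ i j, g (f i) (e j) = if i = j then 1 else 0) →
      ∀ x y, (∑ i, R x y (f i) (J1 (e i))) = 2 * (n : ℝ) * η x y := by
  intro e f hd x y
  let E2 : V ≃ₗ[ℝ] V :=
    LinearEquiv.ofLinearMap J2 (-J2) (by ext v; simp [hJ2]) (by ext v; simp [hJ2])
  have hanti : ∀ v, J1 (J2 v) = -J2 (J1 v) := fun v => by rw [← h312, h321]
  have hd' : ∀ i j, g ((f.map E2) i) (-J2 (e j)) = if i = j then 1 else 0 := by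
    intro i j
    simp [E2, hgJ2, hd]
  have htrace : ∑ i, R x y (f i) (J1 (e i)) = ∑ i, R x y (J2 (f i)) (J2 (J1 (e i))) := by
    simpa [E2, hanti] using sum_apply_dual_pair_eq g ((R x y).compl₂ J1) e f
      (fun j => -J2 (e j)) (f.map E2) hd hd'
  have hQK : ∑ i, R x y (J2 (f i)) (J2 (J1 (e i)))
      = -∑ i, R x y (f i) (J1 (e i)) + 4 * n * η x y := by
    simp only [hQK2, hgJ1, hd, sum_add_distrib, sum_neg_distrib, ← mul_sum]
    simp [mul_comm]
  linear_combination (1 / 2 : ℝ) * htrace + (1 / 2 : ℝ) * hQK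

theorem stmt4
    (n : ℕ) (hn : 1 ≤ n)
    (V : Type) [AddCommGroup V] [Module ℝ V] [FiniteDimensional ℝ V]
    (hdim : Module.finrank ℝ V = 4 * n)
    (J1 J2 J3 : V →ₗ[ℝ] V)
    (hJ1 : ∀ x, J1 (J1 x) = -x) (hJ2 : ∀ x, J2 (J2 x) = -x) (hJ3 : ∀ x, J3 (J3 x) = -x)
    (h123 : ∀ x, J1 x = J2 (J3 x)) (h132 : ∀ x, J1 x = -J3 (J2 x))
    (h231 : ∀ x, J2 x = J3 (J1 x)) (h213 : ∀ x, J2 x = -J1 (J3 x))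
    (h312 : ∀ x, J3 x = J1 (J2 x)) (h321 : ∀ x, J3 x = -J2 (J1 x))
    (g : V →ₗ[ℝ] V →ₗ[ℝ] ℝ)
    (hgsymm : ∀ x y, g x y = g y x)
    (hgnd : ∀ x, (∀ y, g x y = 0) → x = 0)
    (hgJ1 : ∀ x y, g (J1 x) (J1 y) = g x y)
    (hgJ2 : ∀ x y, g (J2 x) (J2 y) = -g x y)
    (hgJ3 : ∀ x y, g (J3 x) (J3 y) = -g x y)
    (R : V →ₗ[ℝ] V →ₗ[ℝ] V →ₗ[ℝ] V →ₗ[ℝ] ℝ)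
    (hRa : ∀ x y z w, R x y z w = -R y x z w)
    (hRb : ∀ x y z w, R x y z w = -R x y w z)
    (hRp : ∀ x y z w, R x y z w = R z w x y)
    (hRbianchi : ∀ x y z w, R x y z w + R y z x w + R z x y w = 0)
    (η : V →ₗ[ℝ] V →ₗ[ℝ] ℝ)
    (hηalt : ∀ x y, η x y = -η y x)
    (hQK1 : ∀ x y z w, R x y (J1 z) (J1 w) = R x y z w)
    (hQK2 : ∀ x y z w, R x y (J2 z) (J2 w) = -R x y z w + η x y * g (J1 z) w)
    (hQK3 : ∀ x y z w, R x y (J3 z) (J3 w) = -R x y z w + η x y * g (J1 z) w)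
    :
    ∀ (e f : Module.Basis (Fin (4 * n)) ℝ V),
      (∀ i j, g (f i) (e j) = if i = j then 1 else 0) →
      ∀ x y, (∑ i, R x y (f i) (J1 (e i))) = 2 * (n : ℝ) * η x y :=
  stmt4_general n V J1 J2 J3 hJ2 h312 h321 g hgJ1 hgJ2 R η hQK2
end

section
/- Let R be a curvature-like tensor on V satisfying the quaternionic Kähler curvature relations with associated alternating bilinear form η₁, and let ρ be its Ricci tensor. Then ρ(x,y) = n·η₁(J₁x, y) for all x,y ∈ V. -/
/-!
Contract `R(x, y, z, J₁ w)` over `(z, w)` with respect to `g`. Since `R` is `J₁`-invariant, the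
first Bianchi identity identifies this contraction with `-2 ρ(J₁ x, y)`, as for Kähler curvature
tensors. On the other hand `J₂` is a `g`-anti-isometry anticommuting with `J₁`, so substituting
`J₂ z, J₂ w` for `z, w` reverses the sign of the contraction, while by the second quaternionic
relation it lowers it by `η(x, y)` times the `g`-trace of `g`, which is `dim V = 4n`. Hence the
contraction is `2n η(x, y)`, and replacing `x` by `J₁ x` gives the claim.
-/

namespace LinearMap.BilinForm

variable {K V : Type*} [Field K] [AddCommGroup V] [Module K V] [FiniteDimensional K V]
  {g : LinearMap.BilinForm K V} (hg : g.Nondegenerate)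

noncomputable def metricTrace : LinearMap.BilinForm K V →ₗ[K] K :=
  LinearMap.trace K V ∘ₗ LinearMap.compRight K (g.toDual hg).symm.toLinearMap

variable {hg}

theorem metricTrace_eq_trace {B : LinearMap.BilinForm K V} {P : Module.End K V}
    (hP : ∀ z w, g (P z) w = B z w) : metricTrace hg B = LinearMap.trace K V P := by
  have : (g.toDual hg).symm.toLinearMap ∘ₗ B = P := by
    ext z
    apply (g.toDual hg).injective
    ext w
    simp [toDual_def, hP]
  simp [metricTrace, this]

theorem metricTrace_self : metricTrace hg g = Module.finrank K V := by
  rw [metricTrace_eq_trace (P := 1) (fun _ _ => rfl), LinearMap.trace_one]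

theorem metricTrace_compl₁₂_of_sq_eq_neg_one {f : Module.End K V} {c : K} (hc : c * c = 1)
    (hf : ∀ a, f (f a) = -a) (hgf : ∀ a b, g (f a) (f b) = c * g a b)
    (B : LinearMap.BilinForm K V) :
    metricTrace hg (B.compl₁₂ f f) = c * metricTrace hg B := by
  set P := B.symmCompOfNondegenerate g hg
  have hP : ∀ z w, g (P z) w = B z w := fun z w =>
    B.symmCompOfNondegenerate_left_apply hg w z
  -- the `g`-adjoint of `f` is `-c • f`, so `B (f ·) (f ·)` is represented by `-c • f ∘ P ∘ f`
  have hf_adj : ∀ u w, g (f u) w = -c * g u (f w) := by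
    intro u w
    have := hgf u (f w)
    rw [hf, map_neg] at this
    linear_combination -this
  have hff : f ∘ₗ f = -1 := by ext a; simp [hf]
  rw [metricTrace_eq_trace (P := -c • (f ∘ₗ P ∘ₗ f)), metricTrace_eq_trace hP, map_smul,
    LinearMap.trace_comp_comm', LinearMap.comp_assoc, hff]
  · simp [← Module.End.mul_eq_comp]
  · intro z w
    simp only [LinearMap.smul_apply, LinearMap.comp_apply, map_smul, smul_eq_mul, hf_adj, hP,
      compl₁₂_apply]
    linear_combination (B (f z) (f w)) * hc

theorem metricTrace_flip (hgs : g.IsSymm) (B : LinearMap.BilinForm K V) :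
    metricTrace hg (LinearMap.flip B) = metricTrace hg B := by
  set P := B.symmCompOfNondegenerate g hg
  have hP : ∀ z w, g (P z) w = B z w := fun z w =>
    B.symmCompOfNondegenerate_left_apply hg w z
  -- `B.flip` is represented by the `g`-adjoint of `P`, the transpose of `P` transported by `g`
  rw [metricTrace_eq_trace hP, ← LinearMap.trace_transpose' P,
    ← LinearMap.trace_conj' _ (g.toDual hg).symm]
  apply metricTrace_eq_trace
  intro z w
  rw [LinearEquiv.conj_apply_apply, LinearEquiv.symm_symm, apply_toDual_symm_apply,
    Module.Dual.transpose_apply, LinearMap.comp_apply, toDual_def, hgs.eq, hP,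
    LinearMap.flip_apply]

end LinearMap.BilinForm

open LinearMap.BilinForm

section Curvature

variable {K V : Type*} [Field K] [AddCommGroup V] [Module K V] [FiniteDimensional K V]
  {g : LinearMap.BilinForm K V} (hg : g.Nondegenerate)

/-- `(R.flip x).flip y` is the bilinear form `(z, w) ↦ R z x y w`. -/
noncomputable def ricci (R : V →ₗ[K] V →ₗ[K] V →ₗ[K] V →ₗ[K] K) (x y : V) : K :=
  metricTrace hg ((R.flip x).flip y)

variable {R : V →ₗ[K] V →ₗ[K] V →ₗ[K] V →ₗ[K] K}

theorem ricci_neg_left (x y : V) : ricci hg R (-x) y = -ricci hg R x y := by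
  have : (R.flip (-x)).flip y = -(R.flip x).flip y := by
    ext
    simp
  rw [ricci, this, map_neg (metricTrace hg), ricci]

theorem metricTrace_compl₂_eq_neg_two_mul_ricci {J : Module.End K V} (hgs : g.IsSymm)
    (hJ : ∀ a, J (J a) = -a) (hgJ : ∀ a b, g (J a) (J b) = g a b)
    (hRa : ∀ x y z w, R x y z w = -R y x z w) (hRp : ∀ x y z w, R x y z w = R z w x y)
    (hRbianchi : ∀ x y z w, R x y z w + R y z x w + R z x y w = 0)
    (hRJ : ∀ x y z w, R x y (J z) (J w) = R x y z w) (x y : V) :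
    metricTrace hg ((R x y).compl₂ J) = -2 * ricci hg R (J x) y := by
  have hRJ' : ∀ a b u v, R (J a) (J b) u v = R a b u v := fun a b u v => by
    rw [hRp, hRJ, hRp]
  -- first Bianchi identity, after moving `J` onto the first slot pair
  have hsplit : (R x y).compl₂ J =
      -((R.flip (J x)).flip y).flip - ((R.flip (J x)).flip y).compl₁₂ J J := by
    ext z w
    have hJx := hRJ' x (J w) y z
    rw [hJ, map_neg, LinearMap.neg_apply, LinearMap.neg_apply] at hJx
    simp only [LinearMap.compl₂_apply, LinearMap.compl₁₂_apply, LinearMap.sub_apply,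
      LinearMap.neg_apply, LinearMap.flip_apply]
    linear_combination hRbianchi x y z (J w) + hRJ' z x y (J w) + hRa w (J x) y z + hJx
      + hRp x (J w) y z
  rw [hsplit, map_sub (metricTrace hg), map_neg (metricTrace hg), metricTrace_flip hgs,
    metricTrace_compl₁₂_of_sq_eq_neg_one (c := 1) (by ring) hJ (by simpa using hgJ), ricci]
  ring

theorem two_mul_metricTrace_compl₂_eq_mul_finrank {J₁ J₂ : Module.End K V}
    (hJ₂ : ∀ a, J₂ (J₂ a) = -a) (hJ₁₂ : ∀ a, J₁ (J₂ a) = -J₂ (J₁ a))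
    (hgJ₁ : ∀ a b, g (J₁ a) (J₁ b) = g a b) (hgJ₂ : ∀ a b, g (J₂ a) (J₂ b) = -g a b)
    {B : LinearMap.BilinForm K V} {c : K}
    (hB : ∀ z w, B (J₂ z) (J₂ w) = -B z w + c * g (J₁ z) w) :
    2 * metricTrace hg (B.compl₂ J₁) = c * Module.finrank K V := by
  have hconj : (B.compl₂ J₁).compl₁₂ J₂ J₂ = B.compl₂ J₁ - c • g := by
    ext z w
    simp only [LinearMap.compl₁₂_apply, LinearMap.compl₂_apply, hJ₁₂, map_neg, hB, hgJ₁,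
      LinearMap.sub_apply, LinearMap.smul_apply, smul_eq_mul]
    ring
  have := metricTrace_compl₁₂_of_sq_eq_neg_one (hg := hg) (c := -1) (by ring) hJ₂
    (by simpa using hgJ₂) (B.compl₂ J₁)
  rw [hconj, map_sub (metricTrace hg), map_smul (metricTrace hg), metricTrace_self,
    smul_eq_mul] at this
  linear_combination this

end Curvature

theorem stmt5_general
    (n : ℕ)
    (V : Type) [AddCommGroup V] [Module ℝ V] [FiniteDimensional ℝ V]
    (hdim : Module.finrank ℝ V = 4 * n)
    (J1 J2 J3 : V →ₗ[ℝ] V)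
    (hJ1 : ∀ x, J1 (J1 x) = -x) (hJ2 : ∀ x, J2 (J2 x) = -x)
    (h312 : ∀ x, J3 x = J1 (J2 x)) (h321 : ∀ x, J3 x = -J2 (J1 x))
    (g : V →ₗ[ℝ] V →ₗ[ℝ] ℝ)
    (hgsymm : ∀ x y, g x y = g y x)
    (hgnd : ∀ x, (∀ y, g x y = 0) → x = 0)
    (hgJ1 : ∀ x y, g (J1 x) (J1 y) = g x y)
    (hgJ2 : ∀ x y, g (J2 x) (J2 y) = -g x y)
    (R : V →ₗ[ℝ] V →ₗ[ℝ] V →ₗ[ℝ] V →ₗ[ℝ] ℝ)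
    (hRa : ∀ x y z w, R x y z w = -R y x z w)
    (hRp : ∀ x y z w, R x y z w = R z w x y)
    (hRbianchi : ∀ x y z w, R x y z w + R y z x w + R z x y w = 0)
    (η : V →ₗ[ℝ] V →ₗ[ℝ] ℝ)
    (hQK1 : ∀ x y z w, R x y (J1 z) (J1 w) = R x y z w)
    (hQK2 : ∀ x y z w, R x y (J2 z) (J2 w) = -R x y z w + η x y * g (J1 z) w)
    (ρ : V → V → ℝ)
    (hρ : ∀ x y, ∀ A : Module.End ℝ V, (∀ z w, g (A z) w = R z x y w) → ρ x y = LinearMap.trace ℝ V A)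
    :
    ∀ x y, ρ x y = (n : ℝ) * η (J1 x) y := by
  intro x y
  have hg : g.Nondegenerate := ⟨hgnd, fun y hy => hgnd y fun x => (hgsymm y x).trans (hy x)⟩
  have hricci : ρ x y = ricci hg R x y :=
    hρ x y _ fun z w => symmCompOfNondegenerate_left_apply _ hg w z
  have hkahler := metricTrace_compl₂_eq_neg_two_mul_ricci hg ⟨hgsymm⟩ hJ1 hgJ1 hRa hRp hRbianchi
    hQK1 (J1 x) y
  have hquat := two_mul_metricTrace_compl₂_eq_mul_finrank hg hJ2
    (fun a => (h312 a).symm.trans (h321 a)) hgJ1 hgJ2 (hQK2 (J1 x) y)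
  rw [hJ1, ricci_neg_left] at hkahler
  rw [hdim] at hquat
  push_cast at hquat
  rw [hricci]
  linarith

theorem stmt5
    (n : ℕ) (hn : 1 ≤ n)
    (V : Type) [AddCommGroup V] [Module ℝ V] [FiniteDimensional ℝ V]
    (hdim : Module.finrank ℝ V = 4 * n)
    (J1 J2 J3 : V →ₗ[ℝ] V)
    (hJ1 : ∀ x, J1 (J1 x) = -x) (hJ2 : ∀ x, J2 (J2 x) = -x) (hJ3 : ∀ x, J3 (J3 x) = -x)
    (h123 : ∀ x, J1 x = J2 (J3 x)) (h132 : ∀ x, J1 x = -J3 (J2 x))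
    (h231 : ∀ x, J2 x = J3 (J1 x)) (h213 : ∀ x, J2 x = -J1 (J3 x))
    (h312 : ∀ x, J3 x = J1 (J2 x)) (h321 : ∀ x, J3 x = -J2 (J1 x))
    (g : V →ₗ[ℝ] V →ₗ[ℝ] ℝ)
    (hgsymm : ∀ x y, g x y = g y x)
    (hgnd : ∀ x, (∀ y, g x y = 0) → x = 0)
    (hgJ1 : ∀ x y, g (J1 x) (J1 y) = g x y)
    (hgJ2 : ∀ x y, g (J2 x) (J2 y) = -g x y)
    (hgJ3 : ∀ x y, g (J3 x) (J3 y) = -g x y)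
    (R : V →ₗ[ℝ] V →ₗ[ℝ] V →ₗ[ℝ] V →ₗ[ℝ] ℝ)
    (hRa : ∀ x y z w, R x y z w = -R y x z w)
    (hRb : ∀ x y z w, R x y z w = -R x y w z)
    (hRp : ∀ x y z w, R x y z w = R z w x y)
    (hRbianchi : ∀ x y z w, R x y z w + R y z x w + R z x y w = 0)
    (η : V →ₗ[ℝ] V →ₗ[ℝ] ℝ)
    (hηalt : ∀ x y, η x y = -η y x)
    (hQK1 : ∀ x y z w, R x y (J1 z) (J1 w) = R x y z w)
    (hQK2 : ∀ x y z w, R x y (J2 z) (J2 w) = -R x y z w + η x y * g (J1 z) w)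
    (hQK3 : ∀ x y z w, R x y (J3 z) (J3 w) = -R x y z w + η x y * g (J1 z) w)
    (ρ : V → V → ℝ)
    (hρ : ∀ x y, ∀ A : Module.End ℝ V, (∀ z w, g (A z) w = R z x y w) → ρ x y = LinearMap.trace ℝ V A)
    :
    ∀ x y, ρ x y = (n : ℝ) * η (J1 x) y :=
  stmt5_general n V hdim J1 J2 J3 hJ1 hJ2 h312 h321 g hgsymm hgnd hgJ1 hgJ2 R hRa hRp hRbianchi η
    hQK1 hQK2 ρ hρ
end

section
/- Let R be a curvature-like tensor on V satisfying the quaternionic Kähler curvature relations with associated alternating bilinear form η₁, and let ρ be its Ricci tensor. Then ρ(J₁x, J₁y) = ρ(x,y) for all x,y ∈ V, and η₁(x, J₁y) = −η₁(J₁x, y) for all x,y ∈ V. -/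
/-!
Since `R` is `J₁`-invariant in its last pair, pair symmetry makes it `J₁`-invariant in its first
pair as well. Consequently, if `A` is the Ricci endomorphism of `(x, y)` (it exists because `g` is
nondegenerate), then that of `(J₁x, J₁y)` is `J₁⁻¹ A J₁`, and traces are conjugation invariant.
Comparing the `J₂`-relation at `(x, y)` and at `(J₁x, J₁y)` gives
`η(J₁x, J₁y) g(J₁z, w) = η(x, y) g(J₁z, w)`, so `η` is `J₁`-invariant by nondegeneracy of `g`,
which for a complex structure is the same as `J₁` being skew for `η`.
-/

section ComplexStructure

variable {K M P : Type*} [CommRing K] [AddCommGroup M] [Module K M] [AddCommGroup P] [Module K P]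
  {J : M →ₗ[K] M}

theorem apply_left_eq_neg_apply_right (hJ : ∀ x, J (J x) = -x) {B : M →ₗ[K] M →ₗ[K] P}
    (hB : ∀ x y, B (J x) (J y) = B x y) (x y : M) : B (J x) y = -B x (J y) := by
  rw [← hB x (J y), hJ, map_neg, neg_neg]

theorem trace_neg_mul_mul_eq_trace (hJ : ∀ x, J (J x) = -x) (A : Module.End K M) :
    LinearMap.trace K M (-J * A * J) = LinearMap.trace K M A := by
  have hJJ : J * -J = 1 := LinearMap.ext fun x => by simp [hJ]
  rw [mul_assoc, LinearMap.trace_mul_comm, mul_assoc, hJJ, mul_one]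

end ComplexStructure

theorem exists_endomorphism_apply_eq {K V : Type*} [Field K] [AddCommGroup V] [Module K V]
    [FiniteDimensional K V] {g : LinearMap.BilinForm K V} (hg : g.SeparatingLeft)
    (f : LinearMap.BilinForm K V) : ∃ A : Module.End K V, ∀ z w, g (A z) w = f z w :=
  ⟨f.symmCompOfNondegenerate g (.ofSeparatingLeft hg),
    fun z w => f.symmCompOfNondegenerate_left_apply _ w z⟩

section Curvature

variable {K V : Type*} [Field K] [AddCommGroup V] [Module K V]
  {J : V →ₗ[K] V} (hJ : ∀ x, J (J x) = -x)
  {R : V →ₗ[K] V →ₗ[K] V →ₗ[K] V →ₗ[K] K} (hRp : ∀ x y z w, R x y z w = R z w x y)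
  (hQK1 : ∀ x y z w, R x y (J z) (J w) = R x y z w)
include hRp hQK1

theorem curvature_apply_J_J (x y z w : V) : R (J x) (J y) z w = R x y z w := by
  rw [hRp, hQK1, ← hRp]

include hJ

theorem curvature_apply_J_left_J_right (x y z w : V) :
    R (J z) x y (J w) = R z (J x) (J y) w := by
  have hlast : ∀ a b c d, R a b (J c) d = -R a b c (J d) := fun a b =>
    apply_left_eq_neg_apply_right hJ (hQK1 a b)
  rw [hRp, hlast, ← hRp, hlast]

theorem apply_neg_mul_mul_eq_curvature {g : V →ₗ[K] V →ₗ[K] K}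
    (hgJ : ∀ x y, g (J x) (J y) = g x y) {x y : V} {A : Module.End K V}
    (hA : ∀ z w, g (A z) w = R z x y w) (z w : V) :
    g ((-J * A * J) z) w = R z (J x) (J y) w := by
  rw [← curvature_apply_J_left_J_right hJ hRp hQK1, ← hA]
  simp [Module.End.mul_apply, apply_left_eq_neg_apply_right hJ hgJ]

theorem ricci_apply_J_J [FiniteDimensional K V] {g : V →ₗ[K] V →ₗ[K] K} (hg : g.SeparatingLeft)
    (hgJ : ∀ x y, g (J x) (J y) = g x y) {ρ : V → V → K}
    (hρ : ∀ x y, ∀ A : Module.End K V, (∀ z w, g (A z) w = R z x y w) →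
      ρ x y = LinearMap.trace K V A) (x y : V) :
    ρ (J x) (J y) = ρ x y := by
  obtain ⟨A, hA⟩ := exists_endomorphism_apply_eq hg ((R.flip x).flip y)
  rw [hρ x y A hA, hρ _ _ _ (apply_neg_mul_mul_eq_curvature hJ hRp hQK1 hgJ hA),
    trace_neg_mul_mul_eq_trace hJ]

theorem eta_apply_J_J [Nontrivial V] {J' : V →ₗ[K] V} {g η : V →ₗ[K] V →ₗ[K] K}
    (hg : g.SeparatingLeft)
    (hQK2 : ∀ x y z w, R x y (J' z) (J' w) = -R x y z w + η x y * g (J z) w) (x y : V) :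
    η (J x) (J y) = η x y := by
  obtain ⟨v, hv⟩ := exists_ne (0 : V)
  obtain ⟨w, hw⟩ : ∃ w, g v w ≠ 0 := by
    by_contra! h
    exact hv (hg v h)
  have hJv : J (-J v) = v := by rw [map_neg, hJ, neg_neg]
  have hcompare := hQK2 (J x) (J y) (-J v) w
  rw [curvature_apply_J_J hRp hQK1, curvature_apply_J_J hRp hQK1, hQK2, hJv] at hcompare
  exact (mul_right_cancel₀ hw (add_left_cancel hcompare)).symm

theorem eta_apply_J_right {J' : V →ₗ[K] V} {g η : V →ₗ[K] V →ₗ[K] K}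
    (hg : g.SeparatingLeft)
    (hQK2 : ∀ x y z w, R x y (J' z) (J' w) = -R x y z w + η x y * g (J z) w) (x y : V) :
    η x (J y) = -η (J x) y := by
  rcases subsingleton_or_nontrivial V with hV | hV
  · simp [Subsingleton.elim x 0]
  · rw [apply_left_eq_neg_apply_right hJ (eta_apply_J_J hJ hRp hQK1 hg hQK2), neg_neg]

end Curvature

theorem stmt6_general
    (V : Type) [AddCommGroup V] [Module ℝ V] [FiniteDimensional ℝ V]
    (J1 J2 : V →ₗ[ℝ] V)
    (hJ1 : ∀ x, J1 (J1 x) = -x)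
    (g : V →ₗ[ℝ] V →ₗ[ℝ] ℝ)
    (hgnd : ∀ x, (∀ y, g x y = 0) → x = 0)
    (hgJ1 : ∀ x y, g (J1 x) (J1 y) = g x y)
    (R : V →ₗ[ℝ] V →ₗ[ℝ] V →ₗ[ℝ] V →ₗ[ℝ] ℝ)
    (hRp : ∀ x y z w, R x y z w = R z w x y)
    (η : V →ₗ[ℝ] V →ₗ[ℝ] ℝ)
    (hQK1 : ∀ x y z w, R x y (J1 z) (J1 w) = R x y z w)
    (hQK2 : ∀ x y z w, R x y (J2 z) (J2 w) = -R x y z w + η x y * g (J1 z) w)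
    (ρ : V → V → ℝ)
    (hρ : ∀ x y, ∀ A : Module.End ℝ V, (∀ z w, g (A z) w = R z x y w) → ρ x y = LinearMap.trace ℝ V A)
    :
    (∀ x y, ρ (J1 x) (J1 y) = ρ x y) ∧ (∀ x y, η x (J1 y) = -η (J1 x) y) :=
  ⟨ricci_apply_J_J hJ1 hRp hQK1 hgnd hgJ1 hρ, eta_apply_J_right hJ1 hRp hQK1 hgnd hQK2⟩

theorem stmt6
    (n : ℕ) (hn : 1 ≤ n)
    (V : Type) [AddCommGroup V] [Module ℝ V] [FiniteDimensional ℝ V]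
    (hdim : Module.finrank ℝ V = 4 * n)
    (J1 J2 J3 : V →ₗ[ℝ] V)
    (hJ1 : ∀ x, J1 (J1 x) = -x) (hJ2 : ∀ x, J2 (J2 x) = -x) (hJ3 : ∀ x, J3 (J3 x) = -x)
    (h123 : ∀ x, J1 x = J2 (J3 x)) (h132 : ∀ x, J1 x = -J3 (J2 x))
    (h231 : ∀ x, J2 x = J3 (J1 x)) (h213 : ∀ x, J2 x = -J1 (J3 x))
    (h312 : ∀ x, J3 x = J1 (J2 x)) (h321 : ∀ x, J3 x = -J2 (J1 x))
    (g : V →ₗ[ℝ] V →ₗ[ℝ] ℝ)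
    (hgsymm : ∀ x y, g x y = g y x)
    (hgnd : ∀ x, (∀ y, g x y = 0) → x = 0)
    (hgJ1 : ∀ x y, g (J1 x) (J1 y) = g x y)
    (hgJ2 : ∀ x y, g (J2 x) (J2 y) = -g x y)
    (hgJ3 : ∀ x y, g (J3 x) (J3 y) = -g x y)
    (R : V →ₗ[ℝ] V →ₗ[ℝ] V →ₗ[ℝ] V →ₗ[ℝ] ℝ)
    (hRa : ∀ x y z w, R x y z w = -R y x z w)
    (hRb : ∀ x y z w, R x y z w = -R x y w z)
    (hRp : ∀ x y z w, R x y z w = R z w x y)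
    (hRbianchi : ∀ x y z w, R x y z w + R y z x w + R z x y w = 0)
    (η : V →ₗ[ℝ] V →ₗ[ℝ] ℝ)
    (hηalt : ∀ x y, η x y = -η y x)
    (hQK1 : ∀ x y z w, R x y (J1 z) (J1 w) = R x y z w)
    (hQK2 : ∀ x y z w, R x y (J2 z) (J2 w) = -R x y z w + η x y * g (J1 z) w)
    (hQK3 : ∀ x y z w, R x y (J3 z) (J3 w) = -R x y z w + η x y * g (J1 z) w)
    (ρ : V → V → ℝ)
    (hρ : ∀ x y, ∀ A : Module.End ℝ V, (∀ z w, g (A z) w = R z x y w) → ρ x y = LinearMap.trace ℝ V A)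
    :
    (∀ x y, ρ (J1 x) (J1 y) = ρ x y) ∧ (∀ x y, η x (J1 y) = -η (J1 x) y) :=
  stmt6_general V J1 J2 hJ1 g hgnd hgJ1 R hRp η hQK1 hQK2 ρ hρ
end

section
/- Let R be a curvature-like tensor on V satisfying the quaternionic Kähler curvature relations with associated alternating bilinear form η₁, and let ρ be its Ricci tensor. Then ρ = 0 if and only if R = 0. -/
/-!
Let `L` be the curvature endomorphism `g (L z) w = R x y z w`. The quaternionic relation for `J₂`
says `L J₂ = J₂ L + η(x, y) J₃`; multiplying by `J₃` and taking traces gives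
`2 tr (L J₁) = -dim V · η(x, y)`. On the other hand the Bianchi identity writes `L J₁` as a
difference of two Ricci endomorphisms, so `tr (L J₁) = ρ(J₁x, y) - ρ(J₁y, x)`. Hence `ρ = 0`
forces `η = 0`, and then `R` is anti-invariant under `J₂` and `J₃` in the last pair. A cyclic
sum of Bianchi identities transfers this to `R(x, J y, z, J w) = -R(x, y, z, w)` for `J = J₂, J₃`,
so `R(x, J₁y, z, J₁w) = R(x, y, z, w)`; combined with `J₁`-invariance this makes `R` symmetric
in its first two arguments, hence zero.
-/

open LinearMap (trace)

variable {V : Type*} [AddCommGroup V] [Module ℝ V]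

section Bilinear

variable {b : V →ₗ[ℝ] V →ₗ[ℝ] ℝ} {J : Module.End ℝ V}

theorem bilin_map_left_eq_add (hJ : ∀ x, J (J x) = -x) {ε : ℝ} {c : V → V → ℝ}
    (h : ∀ z w, b (J z) (J w) = ε * b z w + c z w) (z w : V) :
    b (J z) w = -(ε * b z (J w)) - c z (J w) := by
  have := h z (J w)
  rw [hJ, map_neg] at this
  linarith

theorem bilin_map_left_eq (hJ : ∀ x, J (J x) = -x) {ε : ℝ}
    (h : ∀ z w, b (J z) (J w) = ε * b z w) (z w : V) :
    b (J z) w = -(ε * b z (J w)) := by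
  simpa using bilin_map_left_eq_add hJ (c := fun _ _ => 0) (by simpa using h) z w

end Bilinear

section Nondegenerate

variable {g : V →ₗ[ℝ] V →ₗ[ℝ] ℝ}

theorem endomorphism_ext (hg : g.SeparatingLeft) {F G : Module.End ℝ V}
    (h : ∀ z w, g (F z) w = g (G z) w) : F = G := by
  ext z
  refine sub_eq_zero.mp (hg _ fun w => ?_)
  rw [map_sub, LinearMap.sub_apply, h, sub_self]

theorem exists_endomorphism_bilin_eq [FiniteDimensional ℝ V] (hg : g.SeparatingLeft)
    (f : V →ₗ[ℝ] V →ₗ[ℝ] ℝ) :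
    ∃ A : Module.End ℝ V, ∀ z w, g (A z) w = f z w := by
  let e := g.linearEquivOfInjective (LinearMap.ker_eq_bot.mp
    (LinearMap.separatingLeft_iff_ker_eq_bot.mp hg)) Subspace.dual_finrank_eq.symm
  refine ⟨e.symm.toLinearMap ∘ₗ f, fun z w => ?_⟩
  change e (e.symm (f z)) w = f z w
  rw [e.apply_symm_apply]

theorem mul_eq_mul_add_smul_of_bilin {b : V →ₗ[ℝ] V →ₗ[ℝ] ℝ} (hg : g.SeparatingLeft)
    {L J K : Module.End ℝ V} (hL : ∀ z w, g (L z) w = b z w)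
    (hJg : ∀ z w, g (J z) w = g z (J w)) {c : ℝ}
    (hb : ∀ z w, b (J z) w = b z (J w) + c * g (K z) w) :
    L * J = J * L + c • K := by
  refine endomorphism_ext hg fun z w => ?_
  simp only [Module.End.mul_apply, LinearMap.add_apply, LinearMap.smul_apply, map_add, map_smul,
    smul_eq_mul, hL, hJg, hb]

end Nondegenerate

theorem two_mul_trace_mul_eq [FiniteDimensional ℝ V] {L I J K : Module.End ℝ V}
    (hJK : J * K = I) (hKJ : K * J = -I) (hKK : K * K = -1) (c : ℝ)
    (hL : L * J = J * L + c • K) :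
    2 * trace ℝ V (L * I) = -(c * Module.finrank ℝ V) := by
  have hLI : L * I = J * (L * K) - c • 1 := by
    rw [← hJK, ← mul_assoc, hL, add_mul, mul_assoc, smul_mul_assoc, hKK, smul_neg, sub_eq_add_neg]
  have hcyc : trace ℝ V (J * (L * K)) = -trace ℝ V (L * I) := by
    rw [LinearMap.trace_mul_comm, mul_assoc, hKJ, mul_neg, map_neg]
  have := congrArg (trace ℝ V) hLI
  rw [map_sub, hcyc, map_smul, LinearMap.trace_one, smul_eq_mul] at this
  linarith

section Curvature

variable {R : V →ₗ[ℝ] V →ₗ[ℝ] V →ₗ[ℝ] V →ₗ[ℝ] ℝ} {J : Module.End ℝ V}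

theorem apply_map_apply_map_eq_neg (hRp : ∀ x y z w, R x y z w = R z w x y)
    (hRbianchi : ∀ x y z w, R x y z w + R y z x w + R z x y w = 0) (hJ : ∀ x, J (J x) = -x)
    (hR : ∀ x y z w, R x y (J z) (J w) = -R x y z w) (x y z w : V) :
    R x (J y) z (J w) = -R x y z w := by
  have last (x y z w : V) : R x y (J z) w = R x y z (J w) := by
    simpa using bilin_map_left_eq hJ (ε := -1) (by simpa using hR x y) z w
  have first (x y z w : V) : R (J x) y z w = R x (J y) z w := by
    rw [hRp, last, hRp]
  have cyc (x y z : V) : R y (J z) x (J w) + R z (J x) y (J w) = R x y z w := by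
    have hb := hRbianchi (J x) (J y) z w
    have hJJ : R (J x) (J y) z w = -R x y z w := by
      rw [first, hJ, map_neg, LinearMap.neg_apply, LinearMap.neg_apply]
    rw [hJJ, first, last, last z] at hb
    linarith
  have := hRbianchi x y z w
  linarith [cyc x y z, cyc y z x, cyc z x y]

theorem eq_zero_of_apply_map_apply_map_eq (hRa : ∀ x y z w, R x y z w = -R y x z w)
    (hRp : ∀ x y z w, R x y z w = R z w x y) (hJ : ∀ x, J (J x) = -x)
    (hR : ∀ x y z w, R x y (J z) (J w) = R x y z w)
    (hR' : ∀ x y z w, R x (J y) z (J w) = R x y z w) (x y z w : V) :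
    R x y z w = 0 := by
  have first : R (J x) y z (J w) = -R x (J y) z (J w) := by
    rw [hRp, hRp x]
    simpa using bilin_map_left_eq hJ (ε := 1) (by simpa using hR z (J w)) x y
  have := hRa (J x) y z (J w)
  rw [first, hR', hR'] at this
  linarith [hRa x y z w]

end Curvature

section Ricci

variable [FiniteDimensional ℝ V] {g : V →ₗ[ℝ] V →ₗ[ℝ] ℝ}
  {R : V →ₗ[ℝ] V →ₗ[ℝ] V →ₗ[ℝ] V →ₗ[ℝ] ℝ} {ρ : V → V → ℝ}

theorem trace_mul_eq_ricci_sub (hg : g.SeparatingLeft) (hRa : ∀ x y z w, R x y z w = -R y x z w)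
    (hRbianchi : ∀ x y z w, R x y z w + R y z x w + R z x y w = 0) {J : Module.End ℝ V}
    (hJR : ∀ x y z w, R (J x) y z w = -R x (J y) z w)
    (hρ : ∀ x y, ∀ A : Module.End ℝ V, (∀ z w, g (A z) w = R z x y w) → ρ x y = trace ℝ V A)
    {x y : V} {L : Module.End ℝ V} (hL : ∀ z w, g (L z) w = R x y z w) :
    trace ℝ V (L * J) = ρ (J x) y - ρ (J y) x := by
  obtain ⟨A, hA⟩ := exists_endomorphism_bilin_eq hg ((R.flip (J x)).flip y)
  obtain ⟨B, hB⟩ := exists_endomorphism_bilin_eq hg ((R.flip (J y)).flip x)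
  simp only [LinearMap.flip_apply] at hA hB
  have hLJ : L * J = A - B := endomorphism_ext hg fun z w => by
    have := hRbianchi x y (J z) w
    rw [hRa y (J z), hJR, hJR] at this
    simp only [Module.End.mul_apply, LinearMap.sub_apply, map_sub, hL, hA, hB]
    linarith
  rw [hLJ, map_sub, hρ _ _ A hA, hρ _ _ B hB]

theorem eta_eq_zero_of_ricci_eq_zero {J1 J2 J3 : Module.End ℝ V}
    (hJ1 : ∀ x, J1 (J1 x) = -x) (hJ2 : ∀ x, J2 (J2 x) = -x) (hJ3 : ∀ x, J3 (J3 x) = -x)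
    (h123 : ∀ x, J1 x = J2 (J3 x)) (h132 : ∀ x, J1 x = -J3 (J2 x))
    (hg : g.SeparatingLeft) (hgJ2 : ∀ x y, g (J2 x) (J2 y) = -g x y)
    (hRa : ∀ x y z w, R x y z w = -R y x z w) (hRp : ∀ x y z w, R x y z w = R z w x y)
    (hRbianchi : ∀ x y z w, R x y z w + R y z x w + R z x y w = 0) {η : V →ₗ[ℝ] V →ₗ[ℝ] ℝ}
    (hQK1 : ∀ x y z w, R x y (J1 z) (J1 w) = R x y z w)
    (hQK2 : ∀ x y z w, R x y (J2 z) (J2 w) = -R x y z w + η x y * g (J1 z) w)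
    (hρ : ∀ x y, ∀ A : Module.End ℝ V, (∀ z w, g (A z) w = R z x y w) → ρ x y = trace ℝ V A)
    (hρ0 : ∀ x y, ρ x y = 0) (x y : V) :
    η x y = 0 := by
  obtain ⟨L, hL⟩ := exists_endomorphism_bilin_eq hg (R x y)
  have hJ2g (z w : V) : g (J2 z) w = g z (J2 w) := by
    simpa using bilin_map_left_eq hJ2 (ε := -1) (by simpa using hgJ2) z w
  have hRJ2 (z w : V) : R x y (J2 z) w = R x y z (J2 w) + η x y * g (J3 z) w := by
    rw [bilin_map_left_eq_add hJ2 (ε := -1) (by simpa using hQK2 x y) z w, h123, hgJ2]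
    ring
  have hJ1R (x y z w : V) : R (J1 x) y z w = -R x (J1 y) z w := by
    rw [hRp, hRp x]
    simpa using bilin_map_left_eq hJ1 (ε := 1) (by simpa using hQK1 z w) x y
  have key := two_mul_trace_mul_eq (I := J1) (LinearMap.ext fun v => (h123 v).symm)
    (LinearMap.ext fun v => by simp [h132]) (LinearMap.ext hJ3) (η x y)
    (mul_eq_mul_add_smul_of_bilin hg hL hJ2g hRJ2)
  rw [trace_mul_eq_ricci_sub hg hRa hRbianchi hJ1R hρ hL, hρ0, hρ0, sub_zero, mul_zero] at key
  rcases subsingleton_or_nontrivial V with _ | _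
  · simp [Subsingleton.elim x 0]
  · have hdim : (0 : ℝ) < Module.finrank ℝ V := Nat.cast_pos.mpr Module.finrank_pos
    have : η x y * Module.finrank ℝ V = 0 := by linarith
    exact (mul_eq_zero.mp this).resolve_right hdim.ne'

end Ricci

theorem stmt7_general
    (V : Type) [AddCommGroup V] [Module ℝ V] [FiniteDimensional ℝ V]
    (J1 J2 J3 : V →ₗ[ℝ] V)
    (hJ1 : ∀ x, J1 (J1 x) = -x) (hJ2 : ∀ x, J2 (J2 x) = -x) (hJ3 : ∀ x, J3 (J3 x) = -x)
    (h123 : ∀ x, J1 x = J2 (J3 x)) (h132 : ∀ x, J1 x = -J3 (J2 x))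
    (g : V →ₗ[ℝ] V →ₗ[ℝ] ℝ)
    (hgnd : ∀ x, (∀ y, g x y = 0) → x = 0)
    (hgJ2 : ∀ x y, g (J2 x) (J2 y) = -g x y)
    (R : V →ₗ[ℝ] V →ₗ[ℝ] V →ₗ[ℝ] V →ₗ[ℝ] ℝ)
    (hRa : ∀ x y z w, R x y z w = -R y x z w)
    (hRp : ∀ x y z w, R x y z w = R z w x y)
    (hRbianchi : ∀ x y z w, R x y z w + R y z x w + R z x y w = 0)
    (η : V →ₗ[ℝ] V →ₗ[ℝ] ℝ)
    (hQK1 : ∀ x y z w, R x y (J1 z) (J1 w) = R x y z w)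
    (hQK2 : ∀ x y z w, R x y (J2 z) (J2 w) = -R x y z w + η x y * g (J1 z) w)
    (hQK3 : ∀ x y z w, R x y (J3 z) (J3 w) = -R x y z w + η x y * g (J1 z) w)
    (ρ : V → V → ℝ)
    (hρ : ∀ x y, ∀ A : Module.End ℝ V, (∀ z w, g (A z) w = R z x y w) → ρ x y = LinearMap.trace ℝ V A)
    :
    (∀ x y, ρ x y = 0) ↔ (∀ x y z w, R x y z w = 0) := by
  refine ⟨fun hρ0 => ?_, fun hR0 x y => ?_⟩
  · have hη := eta_eq_zero_of_ricci_eq_zero hJ1 hJ2 hJ3 h123 h132 hgnd hgJ2 hRa hRp hRbianchi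
      hQK1 hQK2 hρ hρ0
    have hJ2R := apply_map_apply_map_eq_neg hRp hRbianchi hJ2 (by simpa [hη] using hQK2)
    have hJ3R := apply_map_apply_map_eq_neg hRp hRbianchi hJ3 (by simpa [hη] using hQK3)
    refine eq_zero_of_apply_map_apply_map_eq hRa hRp hJ1 hQK1 fun x y z w => ?_
    rw [h123, h123, hJ2R, hJ3R, neg_neg]
  · rw [hρ x y 0 (by simp [hR0]), map_zero]

theorem stmt7
    (n : ℕ) (hn : 1 ≤ n)
    (V : Type) [AddCommGroup V] [Module ℝ V] [FiniteDimensional ℝ V]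
    (hdim : Module.finrank ℝ V = 4 * n)
    (J1 J2 J3 : V →ₗ[ℝ] V)
    (hJ1 : ∀ x, J1 (J1 x) = -x) (hJ2 : ∀ x, J2 (J2 x) = -x) (hJ3 : ∀ x, J3 (J3 x) = -x)
    (h123 : ∀ x, J1 x = J2 (J3 x)) (h132 : ∀ x, J1 x = -J3 (J2 x))
    (h231 : ∀ x, J2 x = J3 (J1 x)) (h213 : ∀ x, J2 x = -J1 (J3 x))
    (h312 : ∀ x, J3 x = J1 (J2 x)) (h321 : ∀ x, J3 x = -J2 (J1 x))
    (g : V →ₗ[ℝ] V →ₗ[ℝ] ℝ)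
    (hgsymm : ∀ x y, g x y = g y x)
    (hgnd : ∀ x, (∀ y, g x y = 0) → x = 0)
    (hgJ1 : ∀ x y, g (J1 x) (J1 y) = g x y)
    (hgJ2 : ∀ x y, g (J2 x) (J2 y) = -g x y)
    (hgJ3 : ∀ x y, g (J3 x) (J3 y) = -g x y)
    (R : V →ₗ[ℝ] V →ₗ[ℝ] V →ₗ[ℝ] V →ₗ[ℝ] ℝ)
    (hRa : ∀ x y z w, R x y z w = -R y x z w)
    (hRb : ∀ x y z w, R x y z w = -R x y w z)
    (hRp : ∀ x y z w, R x y z w = R z w x y)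
    (hRbianchi : ∀ x y z w, R x y z w + R y z x w + R z x y w = 0)
    (η : V →ₗ[ℝ] V →ₗ[ℝ] ℝ)
    (hηalt : ∀ x y, η x y = -η y x)
    (hQK1 : ∀ x y z w, R x y (J1 z) (J1 w) = R x y z w)
    (hQK2 : ∀ x y z w, R x y (J2 z) (J2 w) = -R x y z w + η x y * g (J1 z) w)
    (hQK3 : ∀ x y z w, R x y (J3 z) (J3 w) = -R x y z w + η x y * g (J1 z) w)
    (ρ : V → V → ℝ)
    (hρ : ∀ x y, ∀ A : Module.End ℝ V, (∀ z w, g (A z) w = R z x y w) → ρ x y = LinearMap.trace ℝ V A)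
    :
    (∀ x y, ρ x y = 0) ↔ (∀ x y z w, R x y z w = 0) :=
  stmt7_general V J1 J2 J3 hJ1 hJ2 hJ3 h123 h132 g hgnd hgJ2 R hRa hRp hRbianchi η hQK1 hQK2 hQK3 ρ
    hρ
end

section
/- Assume n ≥ 2. Let R be a curvature-like tensor on V satisfying the quaternionic Kähler curvature relations with associated alternating bilinear form η₁, and let ρ be its Ricci tensor. Then ρ is hybrid with respect to J₂ and J₃: ρ(J₂y, J₂z) = ρ(J₃y, J₃z) = −ρ(y,z) for all y,z ∈ V. -/
/-!
The first Bianchi identity at `(J₂x, J₂y, z, w)` minus the one at `(x, y, J₂z, J₂w)`, after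
moving `J₂` across `R` with the quaternionic relation, is an identity involving only `η` and `g`.
Contracting it with `g` over one pair of arguments shows that `(4n - 2) η + 2 η(J₂·, J₂·)` is a
multiple of the Kähler form `ω = g(J₁·, ·)`. Since `ω` is `J₂`-invariant and `4n ≠ 4`, `η` itself
is a multiple of `ω`, and then the `η`-terms cancel in `R(J₂u, y, z, J₂w) = R(u, J₂y, J₂z, w)`.
Hence the operator representing `ρ(J₂y, J₂z)` is `J₂ A J₂`, where `A` represents `ρ(y, z)`, and
its trace is `-tr A`. The same argument applies to `J₃`, which also anticommutes with `J₁`.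
-/

open Module

variable {V : Type*} [AddCommGroup V] [Module ℝ V]

theorem LinearMap.BilinForm.exists_apply_eq_of_separatingLeft [FiniteDimensional ℝ V]
    {g : LinearMap.BilinForm ℝ V} (hg : g.SeparatingLeft) (B : LinearMap.BilinForm ℝ V) :
    ∃ A : Module.End ℝ V, ∀ x y, g (A x) y = B x y :=
  ⟨(g.toDual (.ofSeparatingLeft hg)).symm ∘ₗ B, fun x y => by simp⟩

section Adjoint

variable {g : V →ₗ[ℝ] V →ₗ[ℝ] ℝ} {J : V →ₗ[ℝ] V}

theorem apply_left_eq_neg_of_isometry (hJ : ∀ x, J (J x) = -x)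
    (hgJ : ∀ x y, g (J x) (J y) = g x y) (x y : V) : g (J x) y = -g x (J y) := by
  have h := hgJ x (J y)
  rw [hJ, map_neg] at h
  linarith

theorem apply_left_eq_of_antiIsometry (hJ : ∀ x, J (J x) = -x)
    (hgJ : ∀ x y, g (J x) (J y) = -g x y) (x y : V) : g (J x) y = g x (J y) := by
  have h := hgJ x (J y)
  rw [hJ, map_neg] at h
  linarith

end Adjoint

section Curvature

variable {R : V →ₗ[ℝ] V →ₗ[ℝ] V →ₗ[ℝ] V →ₗ[ℝ] ℝ} {J : V →ₗ[ℝ] V} {η : V →ₗ[ℝ] V →ₗ[ℝ] ℝ}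
  {ω : V → V → ℝ}

theorem curvature_swap_right (hJ : ∀ x, J (J x) = -x)
    (hQ : ∀ x y z w, R x y (J z) (J w) = -R x y z w + η x y * ω z w) (x y z w : V) :
    R x y (J z) w = R x y z (J w) - η x y * ω z (J w) := by
  have h := hQ x y z (J w)
  rw [hJ, map_neg] at h
  linarith

theorem curvature_swap_left (hRp : ∀ x y z w, R x y z w = R z w x y) (hJ : ∀ x, J (J x) = -x)
    (hQ : ∀ x y z w, R x y (J z) (J w) = -R x y z w + η x y * ω z w) (x y z w : V) :
    R (J x) y z w = R x (J y) z w - η z w * ω x (J y) := by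
  rw [hRp, curvature_swap_right hJ hQ, hRp z w]

theorem curvature_twisted_bianchi (hRa : ∀ x y z w, R x y z w = -R y x z w)
    (hRp : ∀ x y z w, R x y z w = R z w x y)
    (hRbianchi : ∀ x y z w, R x y z w + R y z x w + R z x y w = 0) (hJ : ∀ x, J (J x) = -x)
    (hQ : ∀ x y z w, R x y (J z) (J w) = -R x y z w + η x y * ω z w) (x y z w : V) :
    η z w * ω x y - η x y * ω z w - η (J y) z * ω x (J w) - η x (J w) * ω y (J z)
      + η (J x) z * ω y (J w) + η y (J w) * ω x (J z) = 0 := by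
  have hL := curvature_swap_left hRp hJ hQ
  have hR := curvature_swap_right hJ hQ
  have first : R (J x) (J y) z w - R x y (J z) (J w) = η z w * ω x y - η x y * ω z w := by
    rw [hRp, hQ, hRp z w, hQ]
    ring
  have second (x y z w : V) : R (J y) z (J x) w - R y (J z) x (J w)
      = -η (J y) z * ω x (J w) - η x (J w) * ω y (J z) := by
    rw [hR, hL]
    ring
  have third : R z (J x) (J y) w - R (J z) x y (J w)
      = -(R (J x) z (J y) w - R x (J z) y (J w)) := by
    rw [hRa z, hRa (J z)]
    ring
  linear_combination hRbianchi (J x) (J y) z w - hRbianchi x y (J z) (J w) - first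
    - second x y z w - third + second y x z w

theorem curvature_conj_of_eq_smul (hRp : ∀ x y z w, R x y z w = R z w x y)
    (hJ : ∀ x, J (J x) = -x)
    (hQ : ∀ x y z w, R x y (J z) (J w) = -R x y z w + η x y * ω z w) {k : ℝ}
    (hη : ∀ x y, η x y = k * ω x y) (u y z w : V) :
    R (J u) y z (J w) = R u (J y) (J z) w := by
  linear_combination curvature_swap_left hRp hJ hQ u y z (J w)
    - curvature_swap_right hJ hQ u (J y) z w - ω u (J y) * hη z (J w) + ω z (J w) * hη u (J y)

end Curvature

section Contraction

variable [FiniteDimensional ℝ V] {g : V →ₗ[ℝ] V →ₗ[ℝ] ℝ} {K J : V →ₗ[ℝ] V}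
  {η : V →ₗ[ℝ] V →ₗ[ℝ] ℝ}

theorem exists_contracted_twisted_bianchi (hgsymm : ∀ x y, g x y = g y x)
    (hgnd : g.SeparatingLeft) (hK : ∀ x, K (K x) = -x) (hJ : ∀ x, J (J x) = -x)
    (hgK : ∀ x y, g (K x) (K y) = g x y) (hgJ : ∀ x y, g (J x) (J y) = -g x y)
    (hηalt : ∀ x y, η x y = -η y x)
    (hC : ∀ x y z w, η z w * g (K x) y - η x y * g (K z) w - η (J y) z * g (K x) (J w)
      - η x (J w) * g (K y) (J z) + η (J x) z * g (K y) (J w) + η y (J w) * g (K x) (J z) = 0) :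
    ∃ s : ℝ, ∀ z w, ((finrank ℝ V : ℝ) - 2) * η z w + 2 * η (J z) (J w) = s * g (K z) w := by
  have gK := apply_left_eq_neg_of_isometry hK hgK
  have gJ := apply_left_eq_of_antiIsometry hJ hgJ
  obtain ⟨E, hE⟩ := LinearMap.BilinForm.exists_apply_eq_of_separatingLeft hgnd η
  refine ⟨-LinearMap.trace ℝ V (K ∘ₗ E), fun z w => ?_⟩
  -- `g (Φ x) y` is the left side of `hC x (K y) z w`, so `Φ = 0`; its trace is the contraction.
  set Φ : Module.End ℝ V := η z w • LinearMap.id + g (K z) w • (K ∘ₗ E)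
    + (g.flip (K (J w))).smulRight (K (J (E z))) + (η.flip (J w)).smulRight (J z)
    - (η.flip z ∘ₗ J).smulRight (J w) - (g.flip (K (J z))).smulRight (K (E (J w))) with hΦ
  have hΦ0 : Φ = 0 := by
    refine LinearMap.ext fun x => hgnd _ fun y => ?_
    have hKK (v : V) : g (K (K y)) v = -g v y := by
      rw [hK, map_neg, LinearMap.neg_apply, hgsymm]
    have hx : η x (K y) = -g (K (E x)) y := by linarith [gK (E x) y, hE x (K y)]
    have hz : η (J (K y)) z = g (K (J (E z))) y := by
      linarith [hηalt z (J (K y)), hE z (J (K y)), gJ (E z) (K y), gK (J (E z)) y]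
    have hw : η (K y) (J w) = g (K (E (J w))) y := by
      linarith [hηalt (K y) (J w), hE (J w) (K y), gK (E (J w)) y]
    have hCx := hC x (K y) z w
    rw [hgK, hx, hz, hw, hKK, hKK, gK x (J w), gK x (J z)] at hCx
    simp only [hΦ, LinearMap.sub_apply, LinearMap.add_apply, LinearMap.smul_apply,
      LinearMap.smulRight_apply, LinearMap.flip_apply, LinearMap.comp_apply, LinearMap.id_apply,
      map_sub, map_add, map_smul, smul_eq_mul]
    linear_combination hCx
  have htrace := congrArg (LinearMap.trace ℝ V) hΦ0
  simp only [hΦ, map_sub, map_add, map_smul, LinearMap.trace_smulRight, LinearMap.trace_id,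
    LinearMap.flip_apply, LinearMap.comp_apply, smul_eq_mul, map_zero] at htrace
  rw [hgK, hgK, hgJ, hE, hE, hJ, map_neg, LinearMap.neg_apply, hηalt w z] at htrace
  linear_combination htrace + hηalt (J w) (J z)

theorem exists_eq_smul_kahler (hN : finrank ℝ V ≠ 4) (hgsymm : ∀ x y, g x y = g y x)
    (hgnd : g.SeparatingLeft) (hK : ∀ x, K (K x) = -x) (hJ : ∀ x, J (J x) = -x)
    (hJK : ∀ x, J (K x) = -K (J x)) (hgK : ∀ x y, g (K x) (K y) = g x y)
    (hgJ : ∀ x y, g (J x) (J y) = -g x y) (hηalt : ∀ x y, η x y = -η y x)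
    (hC : ∀ x y z w, η z w * g (K x) y - η x y * g (K z) w - η (J y) z * g (K x) (J w)
      - η x (J w) * g (K y) (J z) + η (J x) z * g (K y) (J w) + η y (J w) * g (K x) (J z) = 0) :
    ∃ k : ℝ, ∀ z w, η z w = k * g (K z) w := by
  obtain ⟨s, hs⟩ := exists_contracted_twisted_bianchi hgsymm hgnd hK hJ hgK hgJ hηalt hC
  have hKJ (z w : V) : g (K (J z)) (J w) = g (K z) w := by
    rw [← apply_left_eq_of_antiIsometry hJ hgJ, hJK, hJ]
    simp only [map_neg, neg_neg]
  have hJinv (z w : V) : η (J z) (J w) = η z w := by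
    have hsJ := hs (J z) (J w)
    rw [hJ, hJ, hKJ] at hsJ
    simp only [map_neg, LinearMap.neg_apply, neg_neg] at hsJ
    have hN4 : (finrank ℝ V : ℝ) - 4 ≠ 0 := sub_ne_zero.mpr (by exact_mod_cast hN)
    exact mul_left_cancel₀ hN4 (by linear_combination hsJ - hs z w)
  rcases (finrank ℝ V).eq_zero_or_pos with h0 | hpos
  · have : Subsingleton V := finrank_zero_iff.mp h0
    exact ⟨0, fun z w => by simp [Subsingleton.elim z 0]⟩
  · refine ⟨s / finrank ℝ V, fun z w => ?_⟩
    have hN0 : (finrank ℝ V : ℝ) ≠ 0 := by positivity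
    field_simp
    linear_combination hs z w - 2 * hJinv z w

end Contraction

section Ricci

variable [FiniteDimensional ℝ V] {g : V →ₗ[ℝ] V →ₗ[ℝ] ℝ}
  {R : V →ₗ[ℝ] V →ₗ[ℝ] V →ₗ[ℝ] V →ₗ[ℝ] ℝ} {ρ : V → V → ℝ}

theorem ricci_map_map_eq_neg_of_conj (hgnd : g.SeparatingLeft) {J : V →ₗ[ℝ] V}
    (hJ : ∀ x, J (J x) = -x) (hgJ : ∀ x y, g (J x) (J y) = -g x y)
    (hR : ∀ u y z w, R (J u) y z (J w) = R u (J y) (J z) w)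
    (hρ : ∀ x y, ∀ A : Module.End ℝ V, (∀ z w, g (A z) w = R z x y w) →
      ρ x y = LinearMap.trace ℝ V A)
    (y z : V) : ρ (J y) (J z) = -ρ y z := by
  obtain ⟨A, hA⟩ :=
    LinearMap.BilinForm.exists_apply_eq_of_separatingLeft hgnd ((R.flip y).flip z)
  have hJA : ∀ u w, g ((J * A * J) u) w = R u (J y) (J z) w := fun u w => by
    simp only [Module.End.mul_apply]
    rw [apply_left_eq_of_antiIsometry hJ hgJ, hA, ← hR]
    rfl
  have hJJ : J * J = -1 := LinearMap.ext hJ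
  rw [hρ y z A hA, hρ (J y) (J z) _ hJA, LinearMap.trace_mul_comm, ← mul_assoc, hJJ,
    neg_one_mul, map_neg]

theorem ricci_map_map_eq_neg (hN : finrank ℝ V ≠ 4) (hgsymm : ∀ x y, g x y = g y x)
    (hgnd : g.SeparatingLeft) {K J : V →ₗ[ℝ] V} (hK : ∀ x, K (K x) = -x)
    (hJ : ∀ x, J (J x) = -x) (hJK : ∀ x, J (K x) = -K (J x))
    (hgK : ∀ x y, g (K x) (K y) = g x y) (hgJ : ∀ x y, g (J x) (J y) = -g x y)
    (hRa : ∀ x y z w, R x y z w = -R y x z w) (hRp : ∀ x y z w, R x y z w = R z w x y)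
    (hRbianchi : ∀ x y z w, R x y z w + R y z x w + R z x y w = 0)
    {η : V →ₗ[ℝ] V →ₗ[ℝ] ℝ} (hηalt : ∀ x y, η x y = -η y x)
    (hQ : ∀ x y z w, R x y (J z) (J w) = -R x y z w + η x y * g (K z) w)
    (hρ : ∀ x y, ∀ A : Module.End ℝ V, (∀ z w, g (A z) w = R z x y w) →
      ρ x y = LinearMap.trace ℝ V A)
    (y z : V) : ρ (J y) (J z) = -ρ y z := by
  obtain ⟨k, hk⟩ := exists_eq_smul_kahler hN hgsymm hgnd hK hJ hJK hgK hgJ hηalt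
    (curvature_twisted_bianchi hRa hRp hRbianchi hJ hQ)
  exact ricci_map_map_eq_neg_of_conj hgnd hJ hgJ (curvature_conj_of_eq_smul hRp hJ hQ hk) hρ y z

end Ricci

theorem stmt9_general
    (n : ℕ) (hn : 2 ≤ n)
    (V : Type) [AddCommGroup V] [Module ℝ V] [FiniteDimensional ℝ V]
    (hdim : Module.finrank ℝ V = 4 * n)
    (J1 J2 J3 : V →ₗ[ℝ] V)
    (hJ1 : ∀ x, J1 (J1 x) = -x) (hJ2 : ∀ x, J2 (J2 x) = -x) (hJ3 : ∀ x, J3 (J3 x) = -x)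
    (h231 : ∀ x, J2 x = J3 (J1 x)) (h213 : ∀ x, J2 x = -J1 (J3 x))
    (h312 : ∀ x, J3 x = J1 (J2 x)) (h321 : ∀ x, J3 x = -J2 (J1 x))
    (g : V →ₗ[ℝ] V →ₗ[ℝ] ℝ)
    (hgsymm : ∀ x y, g x y = g y x)
    (hgnd : ∀ x, (∀ y, g x y = 0) → x = 0)
    (hgJ1 : ∀ x y, g (J1 x) (J1 y) = g x y)
    (hgJ2 : ∀ x y, g (J2 x) (J2 y) = -g x y)
    (hgJ3 : ∀ x y, g (J3 x) (J3 y) = -g x y)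
    (R : V →ₗ[ℝ] V →ₗ[ℝ] V →ₗ[ℝ] V →ₗ[ℝ] ℝ)
    (hRa : ∀ x y z w, R x y z w = -R y x z w)
    (hRp : ∀ x y z w, R x y z w = R z w x y)
    (hRbianchi : ∀ x y z w, R x y z w + R y z x w + R z x y w = 0)
    (η : V →ₗ[ℝ] V →ₗ[ℝ] ℝ)
    (hηalt : ∀ x y, η x y = -η y x)
    (hQK2 : ∀ x y z w, R x y (J2 z) (J2 w) = -R x y z w + η x y * g (J1 z) w)
    (hQK3 : ∀ x y z w, R x y (J3 z) (J3 w) = -R x y z w + η x y * g (J1 z) w)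
    (ρ : V → V → ℝ)
    (hρ : ∀ x y, ∀ A : Module.End ℝ V, (∀ z w, g (A z) w = R z x y w) → ρ x y = LinearMap.trace ℝ V A)
    :
    ∀ y z, ρ (J2 y) (J2 z) = -ρ y z ∧ ρ (J3 y) (J3 z) = -ρ y z := by
  have hN : Module.finrank ℝ V ≠ 4 := by omega
  have h21 (x : V) : J2 (J1 x) = -J1 (J2 x) := by rw [← h312, h321, neg_neg]
  have h31 (x : V) : J3 (J1 x) = -J1 (J3 x) := by rw [← h231, h213]
  exact fun y z =>
    ⟨ricci_map_map_eq_neg hN hgsymm hgnd hJ1 hJ2 h21 hgJ1 hgJ2 hRa hRp hRbianchi hηalt hQK2 hρ y z,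
      ricci_map_map_eq_neg hN hgsymm hgnd hJ1 hJ3 h31 hgJ1 hgJ3 hRa hRp hRbianchi hηalt hQK3 hρ y z⟩

theorem stmt9
    (n : ℕ) (hn : 2 ≤ n)
    (V : Type) [AddCommGroup V] [Module ℝ V] [FiniteDimensional ℝ V]
    (hdim : Module.finrank ℝ V = 4 * n)
    (J1 J2 J3 : V →ₗ[ℝ] V)
    (hJ1 : ∀ x, J1 (J1 x) = -x) (hJ2 : ∀ x, J2 (J2 x) = -x) (hJ3 : ∀ x, J3 (J3 x) = -x)
    (h123 : ∀ x, J1 x = J2 (J3 x)) (h132 : ∀ x, J1 x = -J3 (J2 x))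
    (h231 : ∀ x, J2 x = J3 (J1 x)) (h213 : ∀ x, J2 x = -J1 (J3 x))
    (h312 : ∀ x, J3 x = J1 (J2 x)) (h321 : ∀ x, J3 x = -J2 (J1 x))
    (g : V →ₗ[ℝ] V →ₗ[ℝ] ℝ)
    (hgsymm : ∀ x y, g x y = g y x)
    (hgnd : ∀ x, (∀ y, g x y = 0) → x = 0)
    (hgJ1 : ∀ x y, g (J1 x) (J1 y) = g x y)
    (hgJ2 : ∀ x y, g (J2 x) (J2 y) = -g x y)
    (hgJ3 : ∀ x y, g (J3 x) (J3 y) = -g x y)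
    (R : V →ₗ[ℝ] V →ₗ[ℝ] V →ₗ[ℝ] V →ₗ[ℝ] ℝ)
    (hRa : ∀ x y z w, R x y z w = -R y x z w)
    (hRb : ∀ x y z w, R x y z w = -R x y w z)
    (hRp : ∀ x y z w, R x y z w = R z w x y)
    (hRbianchi : ∀ x y z w, R x y z w + R y z x w + R z x y w = 0)
    (η : V →ₗ[ℝ] V →ₗ[ℝ] ℝ)
    (hηalt : ∀ x y, η x y = -η y x)
    (hQK1 : ∀ x y z w, R x y (J1 z) (J1 w) = R x y z w)
    (hQK2 : ∀ x y z w, R x y (J2 z) (J2 w) = -R x y z w + η x y * g (J1 z) w)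
    (hQK3 : ∀ x y z w, R x y (J3 z) (J3 w) = -R x y z w + η x y * g (J1 z) w)
    (ρ : V → V → ℝ)
    (hρ : ∀ x y, ∀ A : Module.End ℝ V, (∀ z w, g (A z) w = R z x y w) → ρ x y = LinearMap.trace ℝ V A)
    :
    ∀ y z, ρ (J2 y) (J2 z) = -ρ y z ∧ ρ (J3 y) (J3 z) = -ρ y z :=
  stmt9_general n hn V hdim J1 J2 J3 hJ1 hJ2 hJ3 h231 h213 h312 h321 g hgsymm hgnd hgJ1 hgJ2 hgJ3 R
    hRa hRp hRbianchi η hηalt hQK2 hQK3 ρ hρ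
end

section
/- Assume n ≥ 2. Let R be a curvature-like tensor on V satisfying the quaternionic Kähler curvature relations with associated alternating bilinear form η₁, with Ricci tensor ρ and scalar curvature τ. Then for all x,y,z,w ∈ V: R(x,y,J₂z,J₂w) = R(x,y,J₃z,J₃w) = −R(x,y,z,w) − (τ/(4n²))·g(J₁x,y)·g(J₁z,w). -/
/-!
Write `ω := g (J1 ·) ·` and `d := dim V`. The QK relation for `J2` makes `R (J2 a) b (J2 c) d`
symmetric in `(a, b)` and in `(c, d)` up to `η`-terms, and chasing these symmetries around the
first Bianchi identity leaves an algebraic identity for `η` alone. Its contraction against `g`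
reads `(d - 2) η + 2 η (J2 ·) (J2 ·) = C ω` for a scalar `C`; comparing it with its own
`J2`-transform gives `η = λ ω` once `d ≠ 4`. Contracting the QK relation for `J2` over the
curvature pair then shows that the Ricci form is Einstein, `4 ρ = -d λ g`, so
`τ = -d² λ / 4 = -4 n² λ`.
-/

open Module LinearMap

namespace LinearMap.BilinForm

variable {K V : Type*} [Field K] [AddCommGroup V] [Module K V] [FiniteDimensional K V]
  {g : LinearMap.BilinForm K V} (hg : g.Nondegenerate)

noncomputable def contract : LinearMap.BilinForm K V →ₗ[K] K :=
  trace K V ∘ₗ LinearMap.compRight K (g.toDual hg).symm.toLinearMap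

variable {hg}

theorem contract_apply (B : LinearMap.BilinForm K V) :
    contract hg B = trace K V ((g.toDual hg).symm.toLinearMap ∘ₗ B) :=
  rfl

theorem trace_eq_contract {A : Module.End K V} {B : LinearMap.BilinForm K V}
    (hA : ∀ u v, g (A u) v = B u v) : trace K V A = contract hg B := by
  rw [contract_apply]
  congr 1
  ext u
  apply (g.toDual hg).injective
  ext v
  simp [toDual_def, hA]

theorem contract_self : contract hg g = finrank K V :=
  (trace_eq_contract (A := LinearMap.id) fun _ _ => rfl).symm.trans (trace_id K V)

theorem contract_smulRight (φ : V →ₗ[K] K) (s : V) :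
    contract hg (φ.smulRight (g s)) = φ s := by
  rw [← trace_eq_contract (A := φ.smulRight s) fun u v => by simp, trace_smulRight]

theorem contract_comp_eq_contract_compl₂ {f f' : Module.End K V}
    (hf : IsAdjointPair g g f f') (B : LinearMap.BilinForm K V) :
    contract hg (B ∘ₗ f) = contract hg (B.compl₂ f') := by
  set A := (g.toDual hg).symm.toLinearMap ∘ₗ B
  have hA : ∀ u v, g (A u) v = B u v := fun u v => by simp [A]
  rw [← trace_eq_contract (A := A ∘ₗ f) fun u v => hA (f u) v,
    ← trace_eq_contract (A := f ∘ₗ A) fun u v => (hf _ _).trans (hA u (f' v)),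
    trace_comp_comm']

theorem contract_eq_sum {ι : Type*} [Fintype ι] [DecidableEq ι] (b : Basis ι K V)
    (B : LinearMap.BilinForm K V) : contract hg B = ∑ i, B (g.dualBasis hg b i) (b i) := by
  rw [contract_apply, trace_eq_matrix_trace K (g.dualBasis hg b), Matrix.trace]
  simp [LinearMap.toMatrix_apply]

/-- Computing the contraction in a basis and in its `g`-dual basis swaps the two slots. -/
theorem contract_flip (hgs : g.IsSymm) (B : LinearMap.BilinForm K V) :
    contract hg B.flip = contract hg B := by
  let b := Module.finBasis K V
  rw [contract_eq_sum b, contract_eq_sum (g.dualBasis hg b), dualBasis_dualBasis hg hgs]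
  rfl

theorem contract_apply_smulRight (hgs : g.IsSymm) (s : V) (ψ : V →ₗ[K] K) :
    contract hg ((g s).smulRight ψ) = ψ s := by
  rw [← contract_flip hgs, ← contract_smulRight (hg := hg) ψ s]
  congr 1
  ext u v
  simp [mul_comm]

end LinearMap.BilinForm

variable {K V : Type*}

section CommRing

variable [CommRing K] [AddCommGroup V] [Module K V]

structure IsCurvatureLike (R : V →ₗ[K] V →ₗ[K] V →ₗ[K] V →ₗ[K] K) : Prop where
  antisymm_left : ∀ x y z w, R x y z w = -R y x z w
  antisymm_right : ∀ x y z w, R x y z w = -R x y w z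
  pair_symm : ∀ x y z w, R x y z w = R z w x y
  bianchi : ∀ x y z w, R x y z w + R y z x w + R z x y w = 0

theorem isSkewAdjoint_of_isometry {g : LinearMap.BilinForm K V} {J : Module.End K V}
    (hJ : ∀ x, J (J x) = -x) (hgJ : ∀ x y, g (J x) (J y) = g x y) : g.IsSkewAdjoint J := by
  intro x y
  have h := hgJ x (J y)
  simp only [hJ, map_neg] at h
  rw [Pi.neg_apply, map_neg, ← h, neg_neg]

theorem isSelfAdjoint_of_antiIsometry {g : LinearMap.BilinForm K V} {J : Module.End K V}
    (hJ : ∀ x, J (J x) = -x) (hgJ : ∀ x y, g (J x) (J y) = -g x y) : g.IsSelfAdjoint J := by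
  intro x y
  have h := hgJ x (J y)
  simp only [hJ, map_neg] at h
  exact neg_inj.mp h

namespace QKCurvature

variable {J1 J2 J3 : Module.End K V} {g η : LinearMap.BilinForm K V}
  {R : V →ₗ[K] V →ₗ[K] V →ₗ[K] V →ₗ[K] K}

theorem apply_J1_right (hJ1 : ∀ x, J1 (J1 x) = -x)
    (hQK1 : ∀ x y z w, R x y (J1 z) (J1 w) = R x y z w) (x y z w : V) :
    R x y z (J1 w) = -R x y (J1 z) w := by
  have h := hQK1 x y (J1 z) w
  rw [hJ1, map_neg, LinearMap.neg_apply] at h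
  linear_combination -h

theorem apply_J1_second (hR : IsCurvatureLike R) (hJ1 : ∀ x, J1 (J1 x) = -x)
    (hQK1 : ∀ x y z w, R x y (J1 z) (J1 w) = R x y z w) (x y z w : V) :
    R x (J1 y) z w = -R (J1 x) y z w := by
  rw [hR.pair_symm, apply_J1_right hJ1 hQK1, hR.pair_symm]

theorem apply_J2_right (hJ2 : ∀ x, J2 (J2 x) = -x) (hJ12 : ∀ x, J1 (J2 x) = J3 x)
    (hQK2 : ∀ x y z w, R x y (J2 z) (J2 w) = -R x y z w + η x y * g (J1 z) w) (x y z w : V) :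
    R x y z (J2 w) = R x y (J2 z) w - η x y * g (J3 z) w := by
  have h := hQK2 x y (J2 z) w
  rw [hJ2, hJ12, map_neg, LinearMap.neg_apply] at h
  linear_combination -h

theorem apply_J2_second (hR : IsCurvatureLike R) (hJ2 : ∀ x, J2 (J2 x) = -x)
    (hJ12 : ∀ x, J1 (J2 x) = J3 x)
    (hQK2 : ∀ x y z w, R x y (J2 z) (J2 w) = -R x y z w + η x y * g (J1 z) w) (x y z w : V) :
    R x (J2 y) z w = R (J2 x) y z w - η z w * g (J3 x) y := by
  rw [hR.pair_symm, apply_J2_right hJ2 hJ12 hQK2, hR.pair_symm]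

theorem eta_identity (hR : IsCurvatureLike R) (hJ2 : ∀ x, J2 (J2 x) = -x)
    (hJ12 : ∀ x, J1 (J2 x) = J3 x)
    (hQK2 : ∀ x y z w, R x y (J2 z) (J2 w) = -R x y z w + η x y * g (J1 z) w) (x y z w : V) :
    η z w * g (J1 x) y + η (J2 z) x * g (J3 y) w + η (J2 y) z * g (J3 x) w
      = η x y * g (J1 z) w + η (J2 y) w * g (J3 x) z + η (J2 w) x * g (J3 y) z := by
  have symm12 : ∀ a b c d,
      R (J2 a) b (J2 c) d + R (J2 b) a (J2 c) d = η (J2 c) d * g (J3 b) a := fun a b c d => by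
    linear_combination -apply_J2_second hR hJ2 hJ12 hQK2 b a (J2 c) d
      + hR.antisymm_left b (J2 a) (J2 c) d
  have symm34 : ∀ a b c d,
      R (J2 a) b (J2 c) d + R (J2 a) b (J2 d) c = η (J2 a) b * g (J3 c) d := fun a b c d => by
    linear_combination -apply_J2_right hJ2 hJ12 hQK2 (J2 a) b c d
      + hR.antisymm_right (J2 a) b c (J2 d)
  have bianchi : ∀ a b c d,
      R (J2 a) b (J2 c) d - R (J2 c) b (J2 a) d - R b d c a + η b d * g (J1 c) a = 0 :=
    fun a b c d => by
      linear_combination hR.bianchi (J2 a) b (J2 c) d - hR.antisymm_left b (J2 c) (J2 a) d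
        - hR.pair_symm (J2 c) (J2 a) b d - hQK2 b d c a
  linear_combination -hR.pair_symm x y z w + symm12 x z y w + symm12 x w z y
    - hR.pair_symm (J2 x) w (J2 z) y - symm34 y z x w + bianchi y z x w + symm34 y w x z
    - symm34 y w z x - symm34 z x y w + symm12 z y w x - symm34 z y w x - bianchi w x z y

end QKCurvature

end CommRing

section Field

variable [Field K] [AddCommGroup V] [Module K V] [FiniteDimensional K V]
  {J1 J2 J3 : Module.End K V} {g η : LinearMap.BilinForm K V} {hg : g.Nondegenerate}
  {R : V →ₗ[K] V →ₗ[K] V →ₗ[K] V →ₗ[K] K}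

open LinearMap.BilinForm

noncomputable def ricciForm (hg : g.Nondegenerate)
    (R : V →ₗ[K] V →ₗ[K] V →ₗ[K] V →ₗ[K] K) : LinearMap.BilinForm K V :=
  (LinearMap.lflip.toLinearMap ∘ₗ R.flip).compr₂ (contract hg)

theorem ricciForm_apply (x y : V) : ricciForm hg R x y = contract hg ((R.flip x).flip y) :=
  rfl

theorem ricciForm_comm (hgs : g.IsSymm) (hR : IsCurvatureLike R) (x y : V) :
    ricciForm hg R x y = ricciForm hg R y x := by
  rw [ricciForm_apply, ricciForm_apply, ← contract_flip hgs]
  congr 1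
  ext u v
  simp only [LinearMap.flip_apply, LinearMap.BilinForm.flip_apply]
  linear_combination hR.pair_symm v x y u + hR.antisymm_left y u v x - hR.antisymm_right u y v x

theorem eq_ricciForm_of_forall_trace {ρ : V → V → K}
    (hρ : ∀ x y, ∀ A : Module.End K V,
      (∀ z w, g (A z) w = R z x y w) → ρ x y = trace K V A) (x y : V) :
    ρ x y = ricciForm hg R x y :=
  hρ x y ((g.toDual hg).symm.toLinearMap ∘ₗ (R.flip x).flip y) fun _ _ =>
    apply_toDual_symm_apply (hB := hg) _ _

namespace QKCurvature

theorem contract_eta_identity (hgs : g.IsSymm) (hR : IsCurvatureLike R)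
    (hJ2 : ∀ x, J2 (J2 x) = -x) (hJ3 : ∀ x, J3 (J3 x) = -x) (hJ12 : ∀ x, J1 (J2 x) = J3 x)
    (hJ21 : ∀ x, J2 (J1 x) = -J3 x) (hJ31 : ∀ x, J3 (J1 x) = J2 x)
    (hgJ1 : ∀ x y, g (J1 x) (J1 y) = g x y) (hgJ2 : g.IsSelfAdjoint J2)
    (hgJ3 : g.IsSelfAdjoint J3) (hηalt : ∀ x y, η x y = -η y x)
    (hQK2 : ∀ x y z w, R x y (J2 z) (J2 w) = -R x y z w + η x y * g (J1 z) w) (z w : V) :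
    ((finrank K V : K) - 2) * η z w + 2 * η (J2 z) (J2 w)
      = contract hg (η.compl₂ J1) * g (J1 z) w := by
  have h : η z w • g + (η (J2 z)).smulRight (g (J2 w))
        + (g (J3 z)).smulRight (η.flip w ∘ₗ J3)
      = g (J1 z) w • η.compl₂ J1 + (η (J2 w)).smulRight (g (J2 z))
        + (g (J3 w)).smulRight (η.flip z ∘ₗ J3) := by
    ext u v
    have h := eta_identity hR hJ2 hJ12 hQK2 u (J1 v) z w
    rw [hgJ1, hJ31, hJ21, hgJ2 v, hgJ3 u, hgJ2 v, hgJ3 u] at h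
    simp only [map_neg, LinearMap.neg_apply] at h
    simp only [LinearMap.add_apply, LinearMap.smul_apply, smulRight_apply,
      LinearMap.compl₂_apply, LinearMap.comp_apply, LinearMap.BilinForm.flip_apply, smul_eq_mul]
    rw [hgs.eq (J2 w), hgs.eq (J2 z), hgs.eq (J3 w), hgs.eq (J3 z)]
    linear_combination h
  have hc := congrArg (contract hg) h
  simp only [map_add, map_smul, contract_self, contract_smulRight, contract_apply_smulRight hgs,
    LinearMap.comp_apply, LinearMap.BilinForm.flip_apply, hJ3, map_neg, smul_eq_mul] at hc
  linear_combination hc + hηalt (J2 w) (J2 z) - hηalt w z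

theorem exists_eta_eq_mul (hg : g.Nondegenerate) (hgs : g.IsSymm) (hR : IsCurvatureLike R)
    (hd0 : (finrank K V : K) ≠ 0) (hd4 : (finrank K V : K) ≠ 4)
    (hJ2 : ∀ x, J2 (J2 x) = -x) (hJ3 : ∀ x, J3 (J3 x) = -x) (hJ12 : ∀ x, J1 (J2 x) = J3 x)
    (hJ21 : ∀ x, J2 (J1 x) = -J3 x) (hJ23 : ∀ x, J2 (J3 x) = J1 x)
    (hJ31 : ∀ x, J3 (J1 x) = J2 x) (hgJ1 : ∀ x y, g (J1 x) (J1 y) = g x y)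
    (hgJ2 : g.IsSelfAdjoint J2) (hgJ3 : g.IsSelfAdjoint J3) (hηalt : ∀ x y, η x y = -η y x)
    (hQK2 : ∀ x y z w, R x y (J2 z) (J2 w) = -R x y z w + η x y * g (J1 z) w) :
    ∃ c : K, ∀ z w, η z w = c * g (J1 z) w := by
  have key := contract_eta_identity (hg := hg) hgs hR hJ2 hJ3 hJ12 hJ21 hJ31 hgJ1 hgJ2 hgJ3
    hηalt hQK2
  have eta_J2 : ∀ z w, η (J2 z) (J2 w) = η z w := by
    intro z w
    have h := key (J2 z) (J2 w)
    simp only [hJ2, map_neg, LinearMap.neg_apply, neg_neg] at h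
    rw [hJ12, ← hgJ2, hJ23] at h
    have h4 : ((finrank K V : K) - 4) * (η (J2 z) (J2 w) - η z w) = 0 := by
      linear_combination h - key z w
    exact sub_eq_zero.mp ((mul_eq_zero.mp h4).resolve_left (sub_ne_zero.mpr hd4))
  refine ⟨contract hg (η.compl₂ J1) / finrank K V, fun z w => ?_⟩
  rw [div_mul_eq_mul_div, eq_div_iff hd0]
  linear_combination key z w - 2 * eta_J2 z w

theorem ricciForm_J1_left (hR : IsCurvatureLike R) (hJ1 : ∀ x, J1 (J1 x) = -x)
    (hgJ1 : g.IsSkewAdjoint J1) (hQK1 : ∀ x y z w, R x y (J1 z) (J1 w) = R x y z w) (x y : V) :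
    ricciForm hg R (J1 x) y = -ricciForm hg R x (J1 y) := by
  have hcomp : (R.flip (J1 x)).flip y = (R.flip x).flip y ∘ₗ (-J1) := by
    ext u v
    simp [apply_J1_second hR hJ1 hQK1]
  have hcompl : ((R.flip x).flip y).compl₂ J1 = (R.flip x).flip (-J1 y) := by
    ext u v
    simp [apply_J1_right hJ1 hQK1]
  have hadj : IsAdjointPair g g ⇑(-J1) J1 := fun u v => by simp [hgJ1 u v]
  rw [ricciForm_apply, hcomp, contract_comp_eq_contract_compl₂ hadj, hcompl, ← ricciForm_apply,
    map_neg]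

theorem ricciForm_J2_J2 (hgs : g.IsSymm) (hR : IsCurvatureLike R) (hJ1 : ∀ x, J1 (J1 x) = -x)
    (hJ2 : ∀ x, J2 (J2 x) = -x) (hJ3 : ∀ x, J3 (J3 x) = -x) (hJ12 : ∀ x, J1 (J2 x) = J3 x)
    (hgJ2 : g.IsSelfAdjoint J2) (hgJ3 : g.IsSelfAdjoint J3)
    (hQK2 : ∀ x y z w, R x y (J2 z) (J2 w) = -R x y z w + η x y * g (J1 z) w)
    {c : K} (hη : ∀ z w, η z w = c * g (J1 z) w) (x y : V) :
    ricciForm hg R (J2 x) (J2 y) = -ricciForm hg R x y := by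
  have hJ2_second : (R.flip (J2 x)).flip (J2 y) + (g (J3 x)).smulRight (η (J2 y))
      = (R.flip x).flip (J2 y) ∘ₗ J2 := by
    ext u v
    simp only [LinearMap.add_apply, LinearMap.flip_apply, smulRight_apply, LinearMap.comp_apply,
      LinearMap.smul_apply, smul_eq_mul, apply_J2_second hR hJ2 hJ12 hQK2, hgJ3 u, hgs.eq u]
    ring
  have hJ2_right : ((R.flip x).flip (J2 y)).compl₂ J2 + (R.flip x).flip y
      = (η.flip x).smulRight (g (J1 y)) := by
    ext u v
    simp only [LinearMap.add_apply, LinearMap.compl₂_apply, LinearMap.flip_apply,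
      LinearMap.BilinForm.flip_apply, smulRight_apply, LinearMap.smul_apply, smul_eq_mul, hQK2]
    ring
  have h1 := congrArg (contract hg) hJ2_second
  have h2 := congrArg (contract hg) hJ2_right
  rw [contract_comp_eq_contract_compl₂ hgJ2] at h1
  simp only [map_add, contract_apply_smulRight hgs, contract_smulRight,
    LinearMap.BilinForm.flip_apply, ← ricciForm_apply] at h1 h2
  rw [hη, hJ12, hgJ3, hJ3, map_neg] at h1
  rw [hη, hJ1, map_neg, LinearMap.neg_apply] at h2
  linear_combination h1 + h2

theorem contract_compl₂_J1_eq_two_mul_ricciForm (hgs : g.IsSymm) (hR : IsCurvatureLike R)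
    (hJ1 : ∀ x, J1 (J1 x) = -x) (hgJ1 : g.IsSkewAdjoint J1)
    (hQK1 : ∀ x y z w, R x y (J1 z) (J1 w) = R x y z w) (x y : V) :
    contract hg ((R x y).compl₂ J1) = 2 * ricciForm hg R x (J1 y) := by
  have h : (R x y).compl₂ J1 + (R.flip y).flip (J1 x) = (R.flip x).flip (J1 y) := by
    ext u v
    simp only [LinearMap.add_apply, LinearMap.compl₂_apply, LinearMap.flip_apply]
    linear_combination hR.bianchi x y u (J1 v) - hR.antisymm_left y u x (J1 v)
      + apply_J1_right hJ1 hQK1 u y x v - apply_J1_right hJ1 hQK1 u x y v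
  have hc := congrArg (contract hg) h
  rw [map_add, ← ricciForm_apply, ← ricciForm_apply, ricciForm_comm hgs hR y,
    ricciForm_J1_left hR hJ1 hgJ1 hQK1] at hc
  linear_combination hc

theorem four_mul_ricciForm_apply (hgs : g.IsSymm) (hR : IsCurvatureLike R)
    (hJ1 : ∀ x, J1 (J1 x) = -x) (hJ2 : ∀ x, J2 (J2 x) = -x) (hJ3 : ∀ x, J3 (J3 x) = -x)
    (hJ12 : ∀ x, J1 (J2 x) = J3 x) (hJ21 : ∀ x, J2 (J1 x) = -J3 x)
    (hgJ1 : ∀ x y, g (J1 x) (J1 y) = g x y) (hgJ2 : g.IsSelfAdjoint J2)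
    (hgJ3 : g.IsSelfAdjoint J3) (hQK1 : ∀ x y z w, R x y (J1 z) (J1 w) = R x y z w)
    (hQK2 : ∀ x y z w, R x y (J2 z) (J2 w) = -R x y z w + η x y * g (J1 z) w)
    {c : K} (hη : ∀ z w, η z w = c * g (J1 z) w) (x y : V) :
    4 * ricciForm hg R x y = -(finrank K V * c) * g x y := by
  have hgJ1_skew := isSkewAdjoint_of_isometry hJ1 hgJ1
  have two_mul := contract_compl₂_J1_eq_two_mul_ricciForm (hg := hg) hgs hR hJ1 hgJ1_skew hQK1
  have hJ1_right : ∀ x z, 4 * ricciForm hg R x (J1 z) = finrank K V * c * g (J1 x) z := by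
    intro x z
    have h : (R (J2 x) (J2 z)).compl₂ J1 + (R x z).compl₂ J1 = (g (J1 x) z * c) • g := by
      ext u v
      simp only [LinearMap.add_apply, LinearMap.compl₂_apply, LinearMap.smul_apply, smul_eq_mul]
      rw [hR.pair_symm (J2 x), hQK2, hR.pair_symm x, hη, hgJ1]
      ring
    have hc := congrArg (contract hg) h
    rw [map_add, map_smul, contract_self, two_mul, two_mul, hJ12,
      show J3 z = J2 (-J1 z) by rw [map_neg, hJ21, neg_neg],
      ricciForm_J2_J2 hgs hR hJ1 hJ2 hJ3 hJ12 hgJ2 hgJ3 hQK2 hη, map_neg, neg_neg,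
      smul_eq_mul] at hc
    linear_combination hc
  have h := hJ1_right x (-J1 y)
  rw [map_neg, hJ1, neg_neg, map_neg, hgJ1] at h
  linear_combination h

end QKCurvature

end Field

theorem stmt11_general
    (n : ℕ) (hn : 2 ≤ n)
    (V : Type) [AddCommGroup V] [Module ℝ V] [FiniteDimensional ℝ V]
    (hdim : Module.finrank ℝ V = 4 * n)
    (J1 J2 J3 : V →ₗ[ℝ] V)
    (hJ1 : ∀ x, J1 (J1 x) = -x) (hJ2 : ∀ x, J2 (J2 x) = -x) (hJ3 : ∀ x, J3 (J3 x) = -x)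
    (h123 : ∀ x, J1 x = J2 (J3 x))
    (h231 : ∀ x, J2 x = J3 (J1 x))
    (h312 : ∀ x, J3 x = J1 (J2 x)) (h321 : ∀ x, J3 x = -J2 (J1 x))
    (g : V →ₗ[ℝ] V →ₗ[ℝ] ℝ)
    (hgsymm : ∀ x y, g x y = g y x)
    (hgnd : ∀ x, (∀ y, g x y = 0) → x = 0)
    (hgJ1 : ∀ x y, g (J1 x) (J1 y) = g x y)
    (hgJ2 : ∀ x y, g (J2 x) (J2 y) = -g x y)
    (hgJ3 : ∀ x y, g (J3 x) (J3 y) = -g x y)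
    (R : V →ₗ[ℝ] V →ₗ[ℝ] V →ₗ[ℝ] V →ₗ[ℝ] ℝ)
    (hRa : ∀ x y z w, R x y z w = -R y x z w)
    (hRb : ∀ x y z w, R x y z w = -R x y w z)
    (hRp : ∀ x y z w, R x y z w = R z w x y)
    (hRbianchi : ∀ x y z w, R x y z w + R y z x w + R z x y w = 0)
    (η : V →ₗ[ℝ] V →ₗ[ℝ] ℝ)
    (hηalt : ∀ x y, η x y = -η y x)
    (hQK1 : ∀ x y z w, R x y (J1 z) (J1 w) = R x y z w)
    (hQK2 : ∀ x y z w, R x y (J2 z) (J2 w) = -R x y z w + η x y * g (J1 z) w)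
    (hQK3 : ∀ x y z w, R x y (J3 z) (J3 w) = -R x y z w + η x y * g (J1 z) w)
    (ρ : V → V → ℝ)
    (hρ : ∀ x y, ∀ A : Module.End ℝ V, (∀ z w, g (A z) w = R z x y w) → ρ x y = LinearMap.trace ℝ V A)
    (τ : ℝ)
    (hτ : ∀ S : Module.End ℝ V, (∀ x y, g (S x) y = ρ x y) → τ = LinearMap.trace ℝ V S)
    :
    ∀ x y z w,
      R x y (J2 z) (J2 w) =
        -R x y z w - (τ / (4 * (n : ℝ) ^ 2)) * g (J1 x) y * g (J1 z) w ∧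
      R x y (J3 z) (J3 w) =
        -R x y z w - (τ / (4 * (n : ℝ) ^ 2)) * g (J1 x) y * g (J1 z) w := by
  have hgs : LinearMap.BilinForm.IsSymm g := ⟨hgsymm⟩
  have hg : g.Nondegenerate := ⟨hgnd, fun y hy => hgnd y fun x => by rw [hgsymm]; exact hy x⟩
  have hR : IsCurvatureLike R := ⟨hRa, hRb, hRp, hRbianchi⟩
  have hgJ2' := isSelfAdjoint_of_antiIsometry hJ2 hgJ2
  have hgJ3' := isSelfAdjoint_of_antiIsometry hJ3 hgJ3
  have hJ12 : ∀ x, J1 (J2 x) = J3 x := fun x => (h312 x).symm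
  have hJ21 : ∀ x, J2 (J1 x) = -J3 x := fun x => by rw [h321, neg_neg]
  have hn' : (2 : ℝ) ≤ n := by exact_mod_cast hn
  have hd : (finrank ℝ V : ℝ) = 4 * n := by rw [hdim]; push_cast; ring
  obtain ⟨c, hη⟩ := QKCurvature.exists_eta_eq_mul hg hgs hR (by rw [hd]; intro h; linarith)
    (by rw [hd]; intro h; linarith) hJ2 hJ3 hJ12 hJ21 (fun x => (h123 x).symm)
    (fun x => (h231 x).symm) hgJ1 hgJ2' hgJ3' hηalt hQK2
  have hρ_eq : ∀ x y, ρ x y = -(n * c) * g x y := fun x y => by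
    linear_combination eq_ricciForm_of_forall_trace (hg := hg) hρ x y
      + (QKCurvature.four_mul_ricciForm_apply hgs hR hJ1 hJ2 hJ3 hJ12 hJ21 hgJ1 hgJ2' hgJ3' hQK1
        hQK2 hη x y) / 4 - hd * c * g x y / 4
  have hτ_eq : τ = -(4 * n ^ 2 * c) := by
    rw [hτ (-(n * c) • LinearMap.id) fun x y => by simp [hρ_eq], map_smul, trace_id, hd,
      smul_eq_mul]
    ring
  have hcoeff : τ / (4 * (n : ℝ) ^ 2) = -c := by rw [hτ_eq]; field_simp
  intro x y z w
  rw [hQK2, hQK3, hη, hcoeff]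
  constructor <;> ring

theorem stmt11
    (n : ℕ) (hn : 2 ≤ n)
    (V : Type) [AddCommGroup V] [Module ℝ V] [FiniteDimensional ℝ V]
    (hdim : Module.finrank ℝ V = 4 * n)
    (J1 J2 J3 : V →ₗ[ℝ] V)
    (hJ1 : ∀ x, J1 (J1 x) = -x) (hJ2 : ∀ x, J2 (J2 x) = -x) (hJ3 : ∀ x, J3 (J3 x) = -x)
    (h123 : ∀ x, J1 x = J2 (J3 x)) (h132 : ∀ x, J1 x = -J3 (J2 x))
    (h231 : ∀ x, J2 x = J3 (J1 x)) (h213 : ∀ x, J2 x = -J1 (J3 x))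
    (h312 : ∀ x, J3 x = J1 (J2 x)) (h321 : ∀ x, J3 x = -J2 (J1 x))
    (g : V →ₗ[ℝ] V →ₗ[ℝ] ℝ)
    (hgsymm : ∀ x y, g x y = g y x)
    (hgnd : ∀ x, (∀ y, g x y = 0) → x = 0)
    (hgJ1 : ∀ x y, g (J1 x) (J1 y) = g x y)
    (hgJ2 : ∀ x y, g (J2 x) (J2 y) = -g x y)
    (hgJ3 : ∀ x y, g (J3 x) (J3 y) = -g x y)
    (R : V →ₗ[ℝ] V →ₗ[ℝ] V →ₗ[ℝ] V →ₗ[ℝ] ℝ)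
    (hRa : ∀ x y z w, R x y z w = -R y x z w)
    (hRb : ∀ x y z w, R x y z w = -R x y w z)
    (hRp : ∀ x y z w, R x y z w = R z w x y)
    (hRbianchi : ∀ x y z w, R x y z w + R y z x w + R z x y w = 0)
    (η : V →ₗ[ℝ] V →ₗ[ℝ] ℝ)
    (hηalt : ∀ x y, η x y = -η y x)
    (hQK1 : ∀ x y z w, R x y (J1 z) (J1 w) = R x y z w)
    (hQK2 : ∀ x y z w, R x y (J2 z) (J2 w) = -R x y z w + η x y * g (J1 z) w)
    (hQK3 : ∀ x y z w, R x y (J3 z) (J3 w) = -R x y z w + η x y * g (J1 z) w)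
    (ρ : V → V → ℝ)
    (hρ : ∀ x y, ∀ A : Module.End ℝ V, (∀ z w, g (A z) w = R z x y w) → ρ x y = LinearMap.trace ℝ V A)
    (τ : ℝ)
    (hτ : ∀ S : Module.End ℝ V, (∀ x y, g (S x) y = ρ x y) → τ = LinearMap.trace ℝ V S)
    :
    ∀ x y z w,
      R x y (J2 z) (J2 w) =
        -R x y z w - (τ / (4 * (n : ℝ) ^ 2)) * g (J1 x) y * g (J1 z) w ∧
      R x y (J3 z) (J3 w) =
        -R x y z w - (τ / (4 * (n : ℝ) ^ 2)) * g (J1 x) y * g (J1 z) w :=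
  stmt11_general n hn V hdim J1 J2 J3 hJ1 hJ2 hJ3 h123 h231 h312 h321 g hgsymm hgnd hgJ1 hgJ2 hgJ3 R
    hRa hRb hRp hRbianchi η hηalt hQK1 hQK2 hQK3 ρ hρ τ hτ
end

section
/- Assume n ≥ 2. Let R be a curvature-like tensor on V satisfying the quaternionic Kähler curvature relations with associated alternating bilinear form η₁, with Ricci tensor ρ and scalar curvature τ. Then τ = 0 if and only if R = 0. -/
/-!
Write `Ω = g (J₁ ·) ·`. Comparing the `J₂`-relation with its pair-symmetric form shows that
`η (J₂ ·) (J₂ ·) + η = l Ω` for a constant `l`. Adding `l / 8` times the model tensor `qkModel`,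
whose form is `-4 Ω`, gives a quaternionic Kähler tensor whose form `ξ` is `J₂`-anti-invariant.
For such a tensor the cyclic sum of the Bianchi identities twisted by `J₂` does not involve the
tensor any more; contracting it yields `(dim V - 4) ξ (c, d) + s₁ Ω (c, d) + s₂ g (J₃ c, d) = 0`,
and since the last two terms are invariant under `(c, d) ↦ (J₂ c, J₂ d)` while `ξ` changes sign,
`ξ = 0` once `n ≥ 2`. A curvature-like tensor which is `J₁`-invariant and `J₂`-, `J₃`-anti-invariant
vanishes, so `R = c • qkModel`. The model has Ricci tensor `(dim V) g`, hence `τ = c (dim V)²`.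
-/

theorem LinearMap.trace_mul_eq_zero_of_anticomm {M : Type*} [AddCommGroup M] [Module ℝ M]
    {A B : Module.End ℝ M} (h : B * A = -(A * B)) : LinearMap.trace ℝ M (A * B) = 0 := by
  have := LinearMap.trace_mul_comm ℝ A B
  rw [h, map_neg] at this
  linarith

theorem LinearMap.trace_comp_smulRight {M : Type*} [AddCommGroup M] [Module ℝ M]
    [FiniteDimensional ℝ M] (A : Module.End ℝ M) (f : M →ₗ[ℝ] ℝ) (v : M) :
    LinearMap.trace ℝ M (A ∘ₗ f.smulRight v) = f (A v) := by
  rw [show A ∘ₗ f.smulRight v = f.smulRight (A v) by ext; simp, LinearMap.trace_smulRight]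

theorem LinearMap.BilinForm.exists_endomorphism_apply_eq {M : Type*} [AddCommGroup M]
    [Module ℝ M] [FiniteDimensional ℝ M] {g : LinearMap.BilinForm ℝ M} (hg : g.Nondegenerate)
    (ξ : LinearMap.BilinForm ℝ M) : ∃ Y : Module.End ℝ M, ∀ a b, g (Y a) b = ξ a b :=
  ⟨(g.toDual hg).symm.toLinearMap ∘ₗ ξ, fun a b => apply_toDual_symm_apply (hB := hg) (ξ a) b⟩

theorem exists_eq_const_mul_of_mul_comm {α : Type*} {a b : α → ℝ}
    (h : ∀ p q, a p * b q = a q * b p) {p₀ : α} (hp₀ : b p₀ ≠ 0) : ∃ c, ∀ p, a p = c * b p :=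
  ⟨a p₀ / b p₀, fun p => by rw [div_mul_eq_mul_div, eq_div_iff hp₀, h]⟩

-- Tensors are plain functions, so that `R + c • qkModel` needs no multilinear packaging; the only
-- linearity the argument uses is `R x y (-z) w = -R x y z w`, assumed where needed.
structure IsCurvatureLike_s12 {V : Type*} (R : V → V → V → V → ℝ) : Prop where
  antisymm_left : ∀ x y z w, R x y z w = -R y x z w
  antisymm_right : ∀ x y z w, R x y z w = -R x y w z
  pair_symm : ∀ x y z w, R x y z w = R z w x y
  bianchi : ∀ x y z w, R x y z w + R y z x w + R z x y w = 0

section Structures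

variable {V : Type*} [AddCommGroup V] [Module ℝ V]

structure IsAlmostHypercomplex (J₁ J₂ J₃ : V →ₗ[ℝ] V) : Prop where
  sq_J₁ : ∀ x, J₁ (J₁ x) = -x
  sq_J₂ : ∀ x, J₂ (J₂ x) = -x
  sq_J₃ : ∀ x, J₃ (J₃ x) = -x
  J₁_eq_J₂_J₃ : ∀ x, J₁ x = J₂ (J₃ x)
  J₁_eq_neg_J₃_J₂ : ∀ x, J₁ x = -J₃ (J₂ x)
  J₂_eq_J₃_J₁ : ∀ x, J₂ x = J₃ (J₁ x)
  J₂_eq_neg_J₁_J₃ : ∀ x, J₂ x = -J₁ (J₃ x)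
  J₃_eq_J₁_J₂ : ∀ x, J₃ x = J₁ (J₂ x)
  J₃_eq_neg_J₂_J₁ : ∀ x, J₃ x = -J₂ (J₁ x)

structure IsNHMetric (J₁ J₂ J₃ : V →ₗ[ℝ] V) (g : V →ₗ[ℝ] V →ₗ[ℝ] ℝ) : Prop where
  symm : ∀ x y, g x y = g y x
  separatingLeft : g.SeparatingLeft
  J₁_isometry : ∀ x y, g (J₁ x) (J₁ y) = g x y
  J₂_antiisometry : ∀ x y, g (J₂ x) (J₂ y) = -g x y
  J₃_antiisometry : ∀ x y, g (J₃ x) (J₃ y) = -g x y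

structure IsQKCurvature (J₁ J₂ J₃ : V →ₗ[ℝ] V) (g η : V →ₗ[ℝ] V →ₗ[ℝ] ℝ)
    (R : V → V → V → V → ℝ) : Prop where
  J₁_invariant : ∀ x y z w, R x y (J₁ z) (J₁ w) = R x y z w
  J₂_relation : ∀ x y z w, R x y (J₂ z) (J₂ w) = -R x y z w + η x y * g (J₁ z) w
  J₃_relation : ∀ x y z w, R x y (J₃ z) (J₃ w) = -R x y z w + η x y * g (J₁ z) w

end Structures

namespace IsAlmostHypercomplex

variable {V : Type*} [AddCommGroup V] [Module ℝ V] {J₁ J₂ J₃ : V →ₗ[ℝ] V}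

theorem J₂_J₃ (hJ : IsAlmostHypercomplex J₁ J₂ J₃) (x : V) : J₂ (J₃ x) = J₁ x :=
  (hJ.J₁_eq_J₂_J₃ x).symm

theorem J₃_J₂ (hJ : IsAlmostHypercomplex J₁ J₂ J₃) (x : V) : J₃ (J₂ x) = -J₁ x := by
  rw [hJ.J₁_eq_neg_J₃_J₂, neg_neg]

theorem J₃_J₁ (hJ : IsAlmostHypercomplex J₁ J₂ J₃) (x : V) : J₃ (J₁ x) = J₂ x :=
  (hJ.J₂_eq_J₃_J₁ x).symm

theorem J₁_J₃ (hJ : IsAlmostHypercomplex J₁ J₂ J₃) (x : V) : J₁ (J₃ x) = -J₂ x := by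
  rw [hJ.J₂_eq_neg_J₁_J₃, neg_neg]

theorem J₁_J₂ (hJ : IsAlmostHypercomplex J₁ J₂ J₃) (x : V) : J₁ (J₂ x) = J₃ x :=
  (hJ.J₃_eq_J₁_J₂ x).symm

theorem J₂_J₁ (hJ : IsAlmostHypercomplex J₁ J₂ J₃) (x : V) : J₂ (J₁ x) = -J₃ x := by
  rw [hJ.J₃_eq_neg_J₂_J₁, neg_neg]

theorem trace_J₁ (hJ : IsAlmostHypercomplex J₁ J₂ J₃) : LinearMap.trace ℝ V J₁ = 0 := by
  have hmul : J₁ = J₂ * J₃ := LinearMap.ext hJ.J₁_eq_J₂_J₃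
  rw [hmul]
  exact LinearMap.trace_mul_eq_zero_of_anticomm (LinearMap.ext fun x => by
    simp [hJ.J₃_J₂, hJ.J₂_J₃])

theorem trace_J₂ (hJ : IsAlmostHypercomplex J₁ J₂ J₃) : LinearMap.trace ℝ V J₂ = 0 := by
  have hmul : J₂ = J₃ * J₁ := LinearMap.ext hJ.J₂_eq_J₃_J₁
  rw [hmul]
  exact LinearMap.trace_mul_eq_zero_of_anticomm (LinearMap.ext fun x => by
    simp [hJ.J₁_J₃, hJ.J₃_J₁])

theorem trace_J₃ (hJ : IsAlmostHypercomplex J₁ J₂ J₃) : LinearMap.trace ℝ V J₃ = 0 := by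
  have hmul : J₃ = J₁ * J₂ := LinearMap.ext hJ.J₃_eq_J₁_J₂
  rw [hmul]
  exact LinearMap.trace_mul_eq_zero_of_anticomm (LinearMap.ext fun x => by
    simp [hJ.J₂_J₁, hJ.J₁_J₂])

end IsAlmostHypercomplex

namespace IsNHMetric

variable {V : Type*} [AddCommGroup V] [Module ℝ V] {J₁ J₂ J₃ : V →ₗ[ℝ] V}
  {g : V →ₗ[ℝ] V →ₗ[ℝ] ℝ}

theorem apply_J₁_right (hg : IsNHMetric J₁ J₂ J₃ g) (hJ : IsAlmostHypercomplex J₁ J₂ J₃)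
    (x y : V) : g x (J₁ y) = -g (J₁ x) y := by
  simpa [hJ.sq_J₁] using (hg.J₁_isometry x (J₁ y)).symm

theorem apply_J₂_right (hg : IsNHMetric J₁ J₂ J₃ g) (hJ : IsAlmostHypercomplex J₁ J₂ J₃)
    (x y : V) : g x (J₂ y) = g (J₂ x) y := by
  simpa [hJ.sq_J₂] using (hg.J₂_antiisometry x (J₂ y)).symm

theorem apply_J₃_right (hg : IsNHMetric J₁ J₂ J₃ g) (hJ : IsAlmostHypercomplex J₁ J₂ J₃)
    (x y : V) : g x (J₃ y) = g (J₃ x) y := by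
  simpa [hJ.sq_J₃] using (hg.J₃_antiisometry x (J₃ y)).symm

theorem J₁_antisymm (hg : IsNHMetric J₁ J₂ J₃ g) (hJ : IsAlmostHypercomplex J₁ J₂ J₃)
    (x y : V) : g (J₁ x) y = -g (J₁ y) x := by
  rw [hg.symm, hg.apply_J₁_right hJ]

theorem J₂_symm (hg : IsNHMetric J₁ J₂ J₃ g) (hJ : IsAlmostHypercomplex J₁ J₂ J₃)
    (x y : V) : g (J₂ x) y = g (J₂ y) x := by
  rw [hg.symm, hg.apply_J₂_right hJ]

theorem J₃_symm (hg : IsNHMetric J₁ J₂ J₃ g) (hJ : IsAlmostHypercomplex J₁ J₂ J₃)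
    (x y : V) : g (J₃ x) y = g (J₃ y) x := by
  rw [hg.symm, hg.apply_J₃_right hJ]

theorem nondegenerate (hg : IsNHMetric J₁ J₂ J₃ g) : g.Nondegenerate :=
  ⟨hg.separatingLeft, fun y hy => hg.separatingLeft y fun x => (hg.symm y x).trans (hy x)⟩

theorem exists_J₁_apply_ne_zero [Nontrivial V] (hg : IsNHMetric J₁ J₂ J₃ g)
    (hJ : IsAlmostHypercomplex J₁ J₂ J₃) : ∃ x y, g (J₁ x) y ≠ 0 := by
  obtain ⟨x, hx⟩ := exists_ne (0 : V)
  by_contra! h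
  have hJx : J₁ x = 0 := hg.separatingLeft _ (h x)
  apply hx
  simpa [hJx] using (hJ.sq_J₁ x).symm

end IsNHMetric

namespace IsCurvatureLike_s12

variable {V : Type*} {R R' : V → V → V → V → ℝ}

theorem add (hR : IsCurvatureLike_s12 R) (hR' : IsCurvatureLike_s12 R') : IsCurvatureLike_s12 (R + R') where
  antisymm_left x y z w := by
    simp only [Pi.add_apply]; rw [hR.antisymm_left, hR'.antisymm_left]; ring
  antisymm_right x y z w := by
    simp only [Pi.add_apply]; rw [hR.antisymm_right, hR'.antisymm_right]; ring
  pair_symm x y z w := by simp only [Pi.add_apply]; rw [hR.pair_symm, hR'.pair_symm]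
  bianchi x y z w := by
    simp only [Pi.add_apply]; linear_combination hR.bianchi x y z w + hR'.bianchi x y z w

theorem smul (hR : IsCurvatureLike_s12 R) (c : ℝ) : IsCurvatureLike_s12 (c • R) where
  antisymm_left x y z w := by
    simp only [Pi.smul_apply, smul_eq_mul]; rw [hR.antisymm_left]; ring
  antisymm_right x y z w := by
    simp only [Pi.smul_apply, smul_eq_mul]; rw [hR.antisymm_right]; ring
  pair_symm x y z w := by simp only [Pi.smul_apply, smul_eq_mul]; rw [hR.pair_symm]
  bianchi x y z w := by
    simp only [Pi.smul_apply, smul_eq_mul]; linear_combination c * hR.bianchi x y z w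

theorem neg_left [Neg V] (hR : IsCurvatureLike_s12 R) (hneg : ∀ x y z w, R x y (-z) w = -R x y z w)
    (x y z w : V) : R (-x) y z w = -R x y z w := by
  rw [hR.pair_symm, hneg, ← hR.pair_symm]

theorem map_left_eq_map_third [Neg V] (hR : IsCurvatureLike_s12 R)
    (hneg : ∀ x y z w, R x y (-z) w = -R x y z w) {J : V → V} (hJ : ∀ x, J (J x) = -x)
    (hanti : ∀ x y z w, R x y (J z) (J w) = -R x y z w) (x y z w : V) :
    R (J x) y z w = R x y (J z) w := by
  have third_fourth : ∀ x y z w, R x y (J z) w = R x y z (J w) := by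
    intro x y z w
    have h := hanti x y (J z) w
    rw [hJ z, hneg] at h
    linarith
  have first_second : ∀ x y z w, R (J x) y z w = R x (J y) z w := by
    intro x y z w
    linear_combination hR.pair_symm (J x) y z w + third_fourth z w x y + hR.pair_symm z w x (J y)
  have bianchi₁ : ∀ x y z w, R x y (J z) w + R x w (J y) z + R y w (J z) x = 0 := by
    intro x y z w
    linear_combination hR.bianchi x y (J z) w + first_second y z x w - hR.pair_symm (J y) z x w -
      hR.pair_symm (J z) x y w
  have bianchi₂ : ∀ x y z w, R z w (J x) y + R x w (J y) z + R z x (J y) w = 0 := by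
    intro x y z w
    linear_combination hR.bianchi x (J y) z w + first_second x y z w - hR.pair_symm (J x) y z w -
      hR.pair_symm (J y) z x w
  have swap : R x y (J z) w = R z w (J x) y := by
    linarith [bianchi₁ x y z w, bianchi₂ x y z w, bianchi₁ z w x y, bianchi₂ z w x y,
      hR.antisymm_left z x (J y) w, third_fourth y w z x, hR.antisymm_right y w z (J x),
      third_fourth x z w y, hR.antisymm_right x z w (J y), hR.antisymm_left w y (J x) z]
  linear_combination hR.pair_symm (J x) y z w - swap

end IsCurvatureLike_s12

section Cycle

variable {V : Type*} [AddCommGroup V] [Module ℝ V]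

/-- Eliminating `R` from the cyclic sum of the Bianchi identities twisted by `J₂` leaves this
expression in `η` alone. -/
def qkCycle (J₁ J₂ J₃ : V →ₗ[ℝ] V) (g η : V →ₗ[ℝ] V →ₗ[ℝ] ℝ) (a b c d : V) : ℝ :=
  η a b * g (J₁ c) d - η c d * g (J₁ a) b + η b d * g (J₁ a) c - η a c * g (J₁ b) d
    + η b c * g (J₁ a) d - η a d * g (J₁ b) c
    - 2 * (η (J₂ a) b * g (J₃ c) d - η (J₂ a) c * g (J₃ b) d + η (J₂ b) c * g (J₃ a) d)

theorem antisymm_comp_of_antiinvariant {J : V →ₗ[ℝ] V} (hJ : ∀ x, J (J x) = -x)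
    {η : V →ₗ[ℝ] V →ₗ[ℝ] ℝ} (hη : ∀ x y, η x y = -η y x)
    (hηJ : ∀ x y, η (J x) (J y) = -η x y) (x y : V) : η (J x) y = -η (J y) x := by
  have h := hηJ x (J y)
  rw [hJ, map_neg, hη x] at h
  linarith

end Cycle

namespace IsQKCurvature

variable {V : Type*} [AddCommGroup V] [Module ℝ V] {J₁ J₂ J₃ : V →ₗ[ℝ] V}
  {g η η' : V →ₗ[ℝ] V →ₗ[ℝ] ℝ} {R R' : V → V → V → V → ℝ}

theorem add (hQK : IsQKCurvature J₁ J₂ J₃ g η R) (hQK' : IsQKCurvature J₁ J₂ J₃ g η' R') :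
    IsQKCurvature J₁ J₂ J₃ g (η + η') (R + R') where
  J₁_invariant x y z w := by
    simp only [Pi.add_apply]; rw [hQK.J₁_invariant, hQK'.J₁_invariant]
  J₂_relation x y z w := by
    simp only [Pi.add_apply, LinearMap.add_apply]; rw [hQK.J₂_relation, hQK'.J₂_relation]; ring
  J₃_relation x y z w := by
    simp only [Pi.add_apply, LinearMap.add_apply]; rw [hQK.J₃_relation, hQK'.J₃_relation]; ring

theorem smul (hQK : IsQKCurvature J₁ J₂ J₃ g η R) (c : ℝ) :
    IsQKCurvature J₁ J₂ J₃ g (c • η) (c • R) where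
  J₁_invariant x y z w := by
    simp only [Pi.smul_apply]; rw [hQK.J₁_invariant]
  J₂_relation x y z w := by
    simp only [Pi.smul_apply, LinearMap.smul_apply, smul_eq_mul]; rw [hQK.J₂_relation]; ring
  J₃_relation x y z w := by
    simp only [Pi.smul_apply, LinearMap.smul_apply, smul_eq_mul]; rw [hQK.J₃_relation]; ring

theorem eq_zero_of_eta_eq_zero (hJ : IsAlmostHypercomplex J₁ J₂ J₃) (hR : IsCurvatureLike_s12 R)
    (hneg : ∀ x y z w, R x y (-z) w = -R x y z w) (hQK : IsQKCurvature J₁ J₂ J₃ g 0 R) :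
    R = 0 := by
  have anti₂ x y z w : R x y (J₂ z) (J₂ w) = -R x y z w := by simpa using hQK.J₂_relation x y z w
  have anti₃ x y z w : R x y (J₃ z) (J₃ w) = -R x y z w := by simpa using hQK.J₃_relation x y z w
  have move₂ := hR.map_left_eq_map_third hneg hJ.sq_J₂ anti₂
  have move₃ := hR.map_left_eq_map_third hneg hJ.sq_J₃ anti₃
  have skew₁ x y z w : R x y (J₁ z) w = -R x y z (J₁ w) := by
    have h := hQK.J₁_invariant x y (J₁ z) w
    rw [hJ.sq_J₁, hneg] at h
    linarith
  have move₁ x y z w : R x y (J₁ z) w = -R (J₁ x) y z w := by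
    rw [hJ.J₁_eq_J₂_J₃, ← move₂, ← move₃, hJ.J₃_J₂, hR.neg_left hneg]
  have swap₁ x y z w : R (J₁ x) y z w = R (J₁ y) x z w := by
    linear_combination hR.pair_symm (J₁ x) y z w + skew₁ z w x y + hR.pair_symm x (J₁ y) z w
      - hR.antisymm_left x (J₁ y) z w
  have vanish x y z w : R (J₁ x) y z w = 0 := by
    have h : R x y (J₁ z) w = R (J₁ x) y z w := by
      linear_combination hR.pair_symm x y (J₁ z) w + swap₁ z w x y + move₁ w z x y
        - hR.antisymm_left w z (J₁ x) y + hR.pair_symm z w (J₁ x) y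
    linarith [move₁ x y z w]
  ext x y z w
  simpa [hJ.sq_J₁, hR.neg_left hneg] using vanish (J₁ x) y z w

theorem map_J₂_J₂_left (hR : IsCurvatureLike_s12 R) (hQK : IsQKCurvature J₁ J₂ J₃ g η R)
    (x y z w : V) : R (J₂ x) (J₂ y) z w = -R x y z w + η z w * g (J₁ x) y := by
  rw [hR.pair_symm, hQK.J₂_relation, hR.pair_symm]

theorem map_J₂_third (hJ : IsAlmostHypercomplex J₁ J₂ J₃)
    (hneg : ∀ x y z w, R x y (-z) w = -R x y z w) (hQK : IsQKCurvature J₁ J₂ J₃ g η R)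
    (x y z w : V) : R x y (J₂ z) w = R x y z (J₂ w) + η x y * g (J₃ z) w := by
  have h := hQK.J₂_relation x y (J₂ z) w
  rw [hJ.sq_J₂, hneg, hJ.J₁_J₂] at h
  linarith

theorem eta_J₂_add_mul_comm (hR : IsCurvatureLike_s12 R) (hQK : IsQKCurvature J₁ J₂ J₃ g η R)
    (x y z w : V) : (η (J₂ x) (J₂ y) + η x y) * g (J₁ z) w
      = (η (J₂ z) (J₂ w) + η z w) * g (J₁ x) y := by
  linear_combination hQK.map_J₂_J₂_left hR x y z w + hQK.map_J₂_J₂_left hR x y (J₂ z) (J₂ w)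
    - hQK.J₂_relation (J₂ x) (J₂ y) z w - hQK.J₂_relation x y z w

theorem exists_eta_J₂_add_eq [Nontrivial V] (hJ : IsAlmostHypercomplex J₁ J₂ J₃)
    (hg : IsNHMetric J₁ J₂ J₃ g) (hR : IsCurvatureLike_s12 R) (hQK : IsQKCurvature J₁ J₂ J₃ g η R) :
    ∃ c, ∀ x y, η (J₂ x) (J₂ y) + η x y = c * g (J₁ x) y := by
  obtain ⟨x₀, y₀, h₀⟩ := hg.exists_J₁_apply_ne_zero hJ
  obtain ⟨c, hc⟩ := exists_eq_const_mul_of_mul_comm (a := fun p : V × V => η (J₂ p.1) (J₂ p.2)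
    + η p.1 p.2) (b := fun p => g (J₁ p.1) p.2) (fun p q => hQK.eta_J₂_add_mul_comm hR ..)
    (p₀ := (x₀, y₀)) h₀
  exact ⟨c, fun x y => hc (x, y)⟩

theorem qkCycle_eq_zero (hJ : IsAlmostHypercomplex J₁ J₂ J₃) (hg : IsNHMetric J₁ J₂ J₃ g)
    (hR : IsCurvatureLike_s12 R) (hneg : ∀ x y z w, R x y (-z) w = -R x y z w)
    (hQK : IsQKCurvature J₁ J₂ J₃ g η R) (hη : ∀ x y, η x y = -η y x)
    (hηJ₂ : ∀ x y, η (J₂ x) (J₂ y) = -η x y) (a b c d : V) : qkCycle J₁ J₂ J₃ g η a b c d = 0 := by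
  have twistA a b c d : R (J₂ a) b (J₂ c) d - R (J₂ c) b (J₂ a) d
      = R c a b d - η b d * g (J₁ c) a := by
    linear_combination hR.bianchi (J₂ a) b (J₂ c) d - hR.antisymm_left b (J₂ c) (J₂ a) d
      - hQK.map_J₂_J₂_left hR c a b d
  have twistC a b c d : R (J₂ a) c (J₂ b) d - R (J₂ a) b (J₂ c) d
      = R c b a d - η c b * g (J₁ a) d - η (J₂ a) b * g (J₃ c) d
        + η (J₂ a) c * g (J₃ b) d := by
    linear_combination hR.bianchi b (J₂ a) c (J₂ d) - hR.antisymm_left (J₂ a) c b (J₂ d)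
      - hQK.J₂_relation c b a d - hR.antisymm_left b (J₂ a) c (J₂ d)
      - hQK.map_J₂_third hJ hneg (J₂ a) b c d + hR.antisymm_left c (J₂ a) b (J₂ d)
      + hQK.map_J₂_third hJ hneg (J₂ a) c b d
  have hη₂ := antisymm_comp_of_antiinvariant hJ.sq_J₂ hη hηJ₂
  unfold qkCycle
  linear_combination -twistC a b c d - twistC b c a d + twistC c b a d
    - twistA a b c d + twistA a c b d - twistA c a b d
    - hR.antisymm_left c b a d - hR.antisymm_left a c b d + hR.antisymm_left a b c d
    - η c d * hg.J₁_antisymm hJ a b + η b d * hg.J₁_antisymm hJ a c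
    + g (J₁ a) d * hη b c
    - g (J₃ c) d * hη₂ a b + g (J₃ b) d * hη₂ a c - g (J₃ a) d * hη₂ b c

end IsQKCurvature

section Contraction

variable {V : Type*} [AddCommGroup V] [Module ℝ V] {J₁ J₂ J₃ : V →ₗ[ℝ] V}
  {g ξ : V →ₗ[ℝ] V →ₗ[ℝ] ℝ}

/-- For `Y` with `g (Y a) b = ξ a b`, the endomorphism `a ↦ (qkCycle J₁ J₂ J₃ g ξ a · c d)^♯`;
contracting `qkCycle` in `a, b` is taking the trace of `J₁` composed with it. -/
def cycleEndo (J₁ J₂ J₃ : V →ₗ[ℝ] V) (g ξ : V →ₗ[ℝ] V →ₗ[ℝ] ℝ) (Y : Module.End ℝ V) (c d : V) :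
    Module.End ℝ V :=
  g (J₁ c) d • Y - ξ c d • J₁ - (g.flip c ∘ₗ J₁).smulRight (Y d) + (ξ.flip c).smulRight (J₁ d)
    - (g.flip d ∘ₗ J₁).smulRight (Y c) + (ξ.flip d).smulRight (J₁ c)
    - (2 * g (J₃ c) d) • (Y ∘ₗ J₂) + (2 : ℝ) • (ξ.flip c ∘ₗ J₂).smulRight (J₃ d)
    + (2 : ℝ) • (g.flip d ∘ₗ J₃).smulRight (Y (J₂ c))

theorem cycleEndo_apply (hJ : IsAlmostHypercomplex J₁ J₂ J₃) (hg : IsNHMetric J₁ J₂ J₃ g)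
    (hξ : ∀ x y, ξ x y = -ξ y x) (hξJ₂ : ∀ x y, ξ (J₂ x) (J₂ y) = -ξ x y)
    {Y : Module.End ℝ V} (hY : ∀ a b, g (Y a) b = ξ a b) (a b c d : V) :
    g (cycleEndo J₁ J₂ J₃ g ξ Y c d a) b = qkCycle J₁ J₂ J₃ g ξ a b c d := by
  simp only [cycleEndo, qkCycle, LinearMap.add_apply, LinearMap.sub_apply, LinearMap.smul_apply,
    LinearMap.smulRight_apply, LinearMap.comp_apply, LinearMap.flip_apply, map_add, map_sub,
    map_smul, smul_eq_mul, hY]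
  linear_combination -g (J₁ a) c * hξ d b + ξ a c * hg.J₁_antisymm hJ d b
    - g (J₁ a) d * hξ c b + ξ a d * hg.J₁_antisymm hJ c b
    + 2 * ξ (J₂ a) c * hg.J₃_symm hJ d b
    + 2 * g (J₃ a) d * antisymm_comp_of_antiinvariant hJ.sq_J₂ hξ hξJ₂ c b

theorem trace_J₁_comp_cycleEndo [FiniteDimensional ℝ V] (hJ : IsAlmostHypercomplex J₁ J₂ J₃)
    (hg : IsNHMetric J₁ J₂ J₃ g)
    (hξ : ∀ x y, ξ x y = -ξ y x) (hξJ₂ : ∀ x y, ξ (J₂ x) (J₂ y) = -ξ x y)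
    {Y : Module.End ℝ V} (hY : ∀ a b, g (Y a) b = ξ a b) (c d : V) :
    LinearMap.trace ℝ V (J₁ ∘ₗ cycleEndo J₁ J₂ J₃ g ξ Y c d)
      = (Module.finrank ℝ V - 4) * ξ c d + g (J₁ c) d * LinearMap.trace ℝ V (J₁ ∘ₗ Y)
        - 2 * g (J₃ c) d * LinearMap.trace ℝ V (J₁ ∘ₗ Y ∘ₗ J₂) := by
  have hsq : J₁ ∘ₗ J₁ = -LinearMap.id := LinearMap.ext fun x => by simp [hJ.sq_J₁]
  simp only [cycleEndo, LinearMap.comp_add, LinearMap.comp_sub, LinearMap.comp_smul, map_add,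
    map_sub, map_smul, LinearMap.trace_comp_smulRight, hsq, map_neg, LinearMap.trace_id,
    LinearMap.comp_apply, LinearMap.flip_apply, smul_eq_mul, hJ.sq_J₁, hJ.J₁_J₃, hJ.J₃_J₁,
    hY]
  rw [← hg.apply_J₂_right hJ, hY, hξJ₂, hJ.sq_J₂, map_neg, LinearMap.neg_apply, hξ d c]
  ring

theorem eq_zero_of_qkCycle_eq_zero [FiniteDimensional ℝ V] (hJ : IsAlmostHypercomplex J₁ J₂ J₃)
    (hg : IsNHMetric J₁ J₂ J₃ g) (hdim : Module.finrank ℝ V ≠ 4) (hξ : ∀ x y, ξ x y = -ξ y x)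
    (hξJ₂ : ∀ x y, ξ (J₂ x) (J₂ y) = -ξ x y)
    (hcycle : ∀ a b c d, qkCycle J₁ J₂ J₃ g ξ a b c d = 0) : ξ = 0 := by
  obtain ⟨Y, hY⟩ := LinearMap.BilinForm.exists_endomorphism_apply_eq hg.nondegenerate ξ
  have hcontr c d : (Module.finrank ℝ V - 4) * ξ c d + g (J₁ c) d * LinearMap.trace ℝ V (J₁ ∘ₗ Y)
      - 2 * g (J₃ c) d * LinearMap.trace ℝ V (J₁ ∘ₗ Y ∘ₗ J₂) = 0 := by
    have hF : cycleEndo J₁ J₂ J₃ g ξ Y c d = 0 := LinearMap.ext fun a =>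
      hg.separatingLeft _ fun b => by rw [cycleEndo_apply hJ hg hξ hξJ₂ hY, hcycle]
    rw [← trace_J₁_comp_cycleEndo hJ hg hξ hξJ₂ hY, hF, LinearMap.comp_zero, map_zero]
  have hcontr₂ c d := hcontr (J₂ c) (J₂ d)
  simp only [hJ.J₁_J₂, hJ.J₃_J₂, hg.apply_J₂_right hJ, hJ.J₂_J₃, hJ.J₂_J₁, hξJ₂, map_neg,
    LinearMap.neg_apply, neg_neg] at hcontr₂
  have hdim' : (Module.finrank ℝ V - 4 : ℝ) ≠ 0 := sub_ne_zero.mpr (by exact_mod_cast hdim)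
  ext c d
  have h : (Module.finrank ℝ V - 4 : ℝ) * ξ c d = 0 := by linarith [hcontr c d, hcontr₂ c d]
  simpa [hdim'] using h

end Contraction

section Model

variable {V : Type*} [AddCommGroup V] [Module ℝ V] {J₁ J₂ J₃ : V →ₗ[ℝ] V}
  {g : V →ₗ[ℝ] V →ₗ[ℝ] ℝ}

def qkModel (J₁ J₂ J₃ : V →ₗ[ℝ] V) (g : V →ₗ[ℝ] V →ₗ[ℝ] ℝ) (x y z w : V) : ℝ :=
  g y z * g x w - g x z * g y w
    + g (J₁ y) z * g (J₁ x) w - g (J₁ x) z * g (J₁ y) w - 2 * g (J₁ x) y * g (J₁ z) w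
    - (g (J₂ y) z * g (J₂ x) w - g (J₂ x) z * g (J₂ y) w)
    - (g (J₃ y) z * g (J₃ x) w - g (J₃ x) z * g (J₃ y) w)

theorem qkModel_neg_third (x y z w : V) :
    qkModel J₁ J₂ J₃ g x y (-z) w = -qkModel J₁ J₂ J₃ g x y z w := by
  simp only [qkModel, map_neg, LinearMap.neg_apply]
  ring

theorem isCurvatureLike_qkModel (hJ : IsAlmostHypercomplex J₁ J₂ J₃)
    (hg : IsNHMetric J₁ J₂ J₃ g) : IsCurvatureLike_s12 (qkModel J₁ J₂ J₃ g) where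
  antisymm_left x y z w := by
    unfold qkModel
    linear_combination (-2 * g (J₁ z) w) * hg.J₁_antisymm hJ x y
  antisymm_right x y z w := by
    unfold qkModel
    linear_combination (-2 * g (J₁ x) y) * hg.J₁_antisymm hJ z w
  pair_symm x y z w := by
    unfold qkModel
    linear_combination g x w * hg.symm y z + g z y * hg.symm x w
      - g y w * hg.symm x z - g z x * hg.symm y w
      + g (J₁ x) w * hg.J₁_antisymm hJ y z - g (J₁ z) y * hg.J₁_antisymm hJ w x
      - g (J₁ y) w * hg.J₁_antisymm hJ x z + g (J₁ z) x * hg.J₁_antisymm hJ w y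
      - g (J₂ x) w * hg.J₂_symm hJ y z - g (J₂ z) y * hg.J₂_symm hJ x w
      + g (J₂ y) w * hg.J₂_symm hJ x z + g (J₂ z) x * hg.J₂_symm hJ y w
      - g (J₃ x) w * hg.J₃_symm hJ y z - g (J₃ z) y * hg.J₃_symm hJ x w
      + g (J₃ y) w * hg.J₃_symm hJ x z + g (J₃ z) x * hg.J₃_symm hJ y w
  bianchi x y z w := by
    unfold qkModel
    linear_combination g x w * hg.symm y z + g y w * hg.symm z x + g z w * hg.symm x y
      - g (J₁ x) w * hg.J₁_antisymm hJ y z - g (J₁ y) w * hg.J₁_antisymm hJ x z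
      - g (J₁ z) w * hg.J₁_antisymm hJ x y
      - g (J₂ x) w * hg.J₂_symm hJ y z + g (J₂ y) w * hg.J₂_symm hJ x z
      - g (J₂ z) w * hg.J₂_symm hJ x y
      - g (J₃ x) w * hg.J₃_symm hJ y z + g (J₃ y) w * hg.J₃_symm hJ x z
      - g (J₃ z) w * hg.J₃_symm hJ x y

theorem isQKCurvature_qkModel (hJ : IsAlmostHypercomplex J₁ J₂ J₃)
    (hg : IsNHMetric J₁ J₂ J₃ g) :
    IsQKCurvature J₁ J₂ J₃ g ((-4 : ℝ) • (g ∘ₗ J₁)) (qkModel J₁ J₂ J₃ g) := by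
  constructor <;> intro x y z w <;>
    simp only [qkModel, LinearMap.smul_apply, LinearMap.comp_apply, smul_eq_mul,
      hg.apply_J₁_right hJ, hg.apply_J₂_right hJ, hg.apply_J₃_right hJ, hJ.J₁_J₂, hJ.J₂_J₁,
      hJ.J₁_J₃, hJ.J₃_J₁, hJ.J₂_J₃, hJ.J₃_J₂, hJ.sq_J₁, hJ.sq_J₂, hJ.sq_J₃, map_neg,
      LinearMap.neg_apply] <;>
    ring

theorem exists_trace_eq_qkModel [FiniteDimensional ℝ V] (hJ : IsAlmostHypercomplex J₁ J₂ J₃)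
    (hg : IsNHMetric J₁ J₂ J₃ g) (x y : V) :
    ∃ A : Module.End ℝ V, (∀ z w, g (A z) w = qkModel J₁ J₂ J₃ g z x y w) ∧
      LinearMap.trace ℝ V A = Module.finrank ℝ V * g x y := by
  refine ⟨g x y • LinearMap.id - (g.flip y).smulRight x + g (J₁ x) y • J₁
    - (g.flip y ∘ₗ J₁).smulRight (J₁ x) - (2 : ℝ) • (g.flip x ∘ₗ J₁).smulRight (J₁ y)
    - g (J₂ x) y • J₂ + (g.flip y ∘ₗ J₂).smulRight (J₂ x)
    - g (J₃ x) y • J₃ + (g.flip y ∘ₗ J₃).smulRight (J₃ x), fun z w => ?_, ?_⟩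
  · simp only [qkModel, LinearMap.add_apply, LinearMap.sub_apply, LinearMap.smul_apply,
      LinearMap.smulRight_apply, LinearMap.comp_apply, LinearMap.flip_apply, LinearMap.id_apply,
      map_add, map_sub, map_smul, smul_eq_mul]
    ring
  · simp only [map_add, map_sub, map_smul, LinearMap.trace_smulRight, LinearMap.trace_id,
      hJ.trace_J₁, hJ.trace_J₂, hJ.trace_J₃, LinearMap.comp_apply, LinearMap.flip_apply,
      hJ.sq_J₁, hJ.sq_J₂, hJ.sq_J₃, map_neg, smul_eq_mul, hg.symm y x]
    ring

theorem IsQKCurvature.exists_eq_smul_qkModel [FiniteDimensional ℝ V] [Nontrivial V]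
    (hJ : IsAlmostHypercomplex J₁ J₂ J₃) (hg : IsNHMetric J₁ J₂ J₃ g)
    (hdim : Module.finrank ℝ V ≠ 4) {R : V → V → V → V → ℝ} (hR : IsCurvatureLike_s12 R)
    (hneg : ∀ x y z w, R x y (-z) w = -R x y z w) (hη : ∀ x y, η x y = -η y x)
    (hQK : IsQKCurvature J₁ J₂ J₃ g η R) : ∃ c : ℝ, R = c • qkModel J₁ J₂ J₃ g := by
  obtain ⟨l, hl⟩ := hQK.exists_eta_J₂_add_eq hJ hg hR
  -- the form of `qkModel` is `-4 Ω`, so `ξ = η - (l / 2) Ω`, which is `J₂`-anti-invariant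
  set ξ := η + (l / 8) • (-4 : ℝ) • (g ∘ₗ J₁)
  have hQK' : IsQKCurvature J₁ J₂ J₃ g ξ (R + (l / 8) • qkModel J₁ J₂ J₃ g) :=
    hQK.add ((isQKCurvature_qkModel hJ hg).smul _)
  have hR' := hR.add ((isCurvatureLike_qkModel hJ hg).smul (l / 8))
  have hneg' x y z w : (R + (l / 8) • qkModel J₁ J₂ J₃ g) x y (-z) w
      = -(R + (l / 8) • qkModel J₁ J₂ J₃ g) x y z w := by
    simp only [Pi.add_apply, Pi.smul_apply, smul_eq_mul, hneg, qkModel_neg_third]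
    ring
  have hξ x y : ξ x y = -ξ y x := by
    simp only [ξ, LinearMap.add_apply, LinearMap.smul_apply, LinearMap.comp_apply, smul_eq_mul]
    linear_combination hη x y - l / 2 * hg.J₁_antisymm hJ x y
  have hξJ₂ x y : ξ (J₂ x) (J₂ y) = -ξ x y := by
    simp only [ξ, LinearMap.add_apply, LinearMap.smul_apply, LinearMap.comp_apply, smul_eq_mul]
    rw [hJ.J₁_J₂, hg.apply_J₂_right hJ, hJ.J₂_J₃]
    linear_combination hl x y
  have hξ0 : ξ = 0 := eq_zero_of_qkCycle_eq_zero hJ hg hdim hξ hξJ₂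
    (hQK'.qkCycle_eq_zero hJ hg hR' hneg' hξ hξJ₂)
  rw [hξ0] at hQK'
  refine ⟨-(l / 8), ?_⟩
  rw [neg_smul]
  exact eq_neg_of_add_eq_zero_left (hQK'.eq_zero_of_eta_eq_zero hJ hR' hneg')

end Model

theorem stmt12
    (n : ℕ) (hn : 2 ≤ n)
    (V : Type) [AddCommGroup V] [Module ℝ V] [FiniteDimensional ℝ V]
    (hdim : Module.finrank ℝ V = 4 * n)
    (J1 J2 J3 : V →ₗ[ℝ] V)
    (hJ1 : ∀ x, J1 (J1 x) = -x) (hJ2 : ∀ x, J2 (J2 x) = -x) (hJ3 : ∀ x, J3 (J3 x) = -x)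
    (h123 : ∀ x, J1 x = J2 (J3 x)) (h132 : ∀ x, J1 x = -J3 (J2 x))
    (h231 : ∀ x, J2 x = J3 (J1 x)) (h213 : ∀ x, J2 x = -J1 (J3 x))
    (h312 : ∀ x, J3 x = J1 (J2 x)) (h321 : ∀ x, J3 x = -J2 (J1 x))
    (g : V →ₗ[ℝ] V →ₗ[ℝ] ℝ)
    (hgsymm : ∀ x y, g x y = g y x)
    (hgnd : ∀ x, (∀ y, g x y = 0) → x = 0)
    (hgJ1 : ∀ x y, g (J1 x) (J1 y) = g x y)
    (hgJ2 : ∀ x y, g (J2 x) (J2 y) = -g x y)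
    (hgJ3 : ∀ x y, g (J3 x) (J3 y) = -g x y)
    (R : V →ₗ[ℝ] V →ₗ[ℝ] V →ₗ[ℝ] V →ₗ[ℝ] ℝ)
    (hRa : ∀ x y z w, R x y z w = -R y x z w)
    (hRb : ∀ x y z w, R x y z w = -R x y w z)
    (hRp : ∀ x y z w, R x y z w = R z w x y)
    (hRbianchi : ∀ x y z w, R x y z w + R y z x w + R z x y w = 0)
    (η : V →ₗ[ℝ] V →ₗ[ℝ] ℝ)
    (hηalt : ∀ x y, η x y = -η y x)
    (hQK1 : ∀ x y z w, R x y (J1 z) (J1 w) = R x y z w)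
    (hQK2 : ∀ x y z w, R x y (J2 z) (J2 w) = -R x y z w + η x y * g (J1 z) w)
    (hQK3 : ∀ x y z w, R x y (J3 z) (J3 w) = -R x y z w + η x y * g (J1 z) w)
    (ρ : V → V → ℝ)
    (hρ : ∀ x y, ∀ A : Module.End ℝ V, (∀ z w, g (A z) w = R z x y w) → ρ x y = LinearMap.trace ℝ V A)
    (τ : ℝ)
    (hτ : ∀ S : Module.End ℝ V, (∀ x y, g (S x) y = ρ x y) → τ = LinearMap.trace ℝ V S)
    :
    τ = 0 ↔ (∀ x y z w, R x y z w = 0) := by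
  have hJ : IsAlmostHypercomplex J1 J2 J3 := ⟨hJ1, hJ2, hJ3, h123, h132, h231, h213, h312, h321⟩
  have hg : IsNHMetric J1 J2 J3 g := ⟨hgsymm, hgnd, hgJ1, hgJ2, hgJ3⟩
  have hpos : 0 < Module.finrank ℝ V := by omega
  have : Nontrivial V := Module.nontrivial_of_finrank_pos hpos
  obtain ⟨c, hc⟩ := IsQKCurvature.exists_eq_smul_qkModel hJ hg (by omega)
    (R := fun x y z w => R x y z w) ⟨hRa, hRb, hRp, hRbianchi⟩ (fun x y z w => by simp) hηalt
    ⟨hQK1, hQK2, hQK3⟩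
  have hRc x y z w : R x y z w = c * qkModel J1 J2 J3 g x y z w := by
    simpa using congr_fun (congr_fun (congr_fun (congr_fun hc x) y) z) w
  have hρc x y : ρ x y = c * Module.finrank ℝ V * g x y := by
    obtain ⟨A, hA, htr⟩ := exists_trace_eq_qkModel hJ hg x y
    rw [hρ x y (c • A) fun z w => by simp [hA, hRc], map_smul, htr, smul_eq_mul, mul_assoc]
  have hτc : τ = c * Module.finrank ℝ V ^ 2 := by
    rw [hτ ((c * Module.finrank ℝ V) • LinearMap.id) fun x y => by simp [hρc, mul_assoc],
      map_smul, LinearMap.trace_id, smul_eq_mul]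
    ring
  constructor
  · intro hτ0 x y z w
    have hfin : (Module.finrank ℝ V : ℝ) ≠ 0 := by exact_mod_cast hpos.ne'
    rw [hRc, show c = 0 by simpa [hτ0, hfin] using hτc.symm, zero_mul]
  · intro hR0
    have hρ0 x y : ρ x y = 0 := by simpa using hρ x y 0 fun z w => by simp [hR0]
    simpa using hτ 0 fun x y => by simp [hρ0]
end

section
/- (Isotropy criterion, Proposition 2.1.) The square norms ‖A₁‖², ‖A₂‖², ‖A₃‖² of the bilinear maps A_α(x,y) = ω_γ(x)J_βy − ω_β(x)J_γy all vanish if and only if the vectors Ω₁, Ω₂, Ω₃ are isotropic with respect to g, i.e. ω₁(Ω₁) = ω₂(Ω₂) = ω₃(Ω₃) = 0. -/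
/-! Expanding `‖A_α‖²` bilinearly, the mixed terms are multiples of `tr J_α`, which vanishes
because `J_α = J_β J_γ = -J_γ J_β`, while the pure terms give
`‖A_α‖² = 4n (ε_β ω_γ(Ω_γ) + ε_γ ω_β(Ω_β))`. The resulting linear system in the three numbers
`ω_α(Ω_α)` is nonsingular. -/

open Finset

theorem LinearMap.trace_eq_zero_of_eq_comp_of_eq_neg_comp {R M : Type*} [CommRing R]
    [NoZeroDivisors R] [CharZero R] [AddCommGroup M] [Module R M] {A B C : M →ₗ[R] M}
    (hBC : ∀ x, A x = B (C x)) (hCB : ∀ x, A x = -C (B x)) : trace R M A = 0 := by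
  have h₁ : A = B * C := LinearMap.ext hBC
  have h₂ : A = -(C * B) := LinearMap.ext hCB
  refine self_eq_neg.mp ?_
  calc trace R M A = -trace R M (C * B) := by rw [h₂, map_neg]
    _ = -trace R M A := by rw [trace_mul_comm, h₁]

theorem LinearMap.sum_sum_smul_sub_smul {R M ι κ : Type*} [CommRing R] [AddCommGroup M]
    [Module R M] [Fintype ι] [Fintype κ] (B : M →ₗ[R] M →ₗ[R] R) (a b a' b' : ι → R)
    (u v u' v' : κ → M) :
    ∑ i, ∑ k, B (a i • u k - b i • v k) (a' i • u' k - b' i • v' k) =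
      (∑ i, a i * a' i) * ∑ k, B (u k) (u' k) - (∑ i, a i * b' i) * ∑ k, B (u k) (v' k)
        - (∑ i, b i * a' i) * ∑ k, B (v k) (u' k) + (∑ i, b i * b' i) * ∑ k, B (v k) (v' k) := by
  simp only [sum_mul_sum, ← sum_sub_distrib, ← sum_add_distrib, map_sub, map_smul,
    LinearMap.sub_apply, LinearMap.smul_apply, smul_eq_mul]
  exact sum_congr rfl fun i _ => sum_congr rfl fun k _ => by ring

namespace LinearMap

variable {R M ι : Type*} [CommRing R] [AddCommGroup M] [Module R M] [DecidableEq ι]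
  {g : M →ₗ[R] M →ₗ[R] R} {e f : Module.Basis ι R M}

theorem apply_dual_eq_repr (hdual : ∀ i j, g (f i) (e j) = if i = j then 1 else 0) (x : M)
    (i : ι) : g (f i) x = e.repr x i := by
  have : g (f i) = e.coord i := e.ext fun j => by simp [hdual, Finsupp.single_apply, eq_comm]
  exact LinearMap.congr_fun this x

theorem apply_dual_symm (hgsymm : ∀ x y, g x y = g y x)
    (hdual : ∀ i j, g (f i) (e j) = if i = j then 1 else 0) (i j : ι) :
    g (e i) (f j) = if i = j then 1 else 0 := by
  rw [hgsymm, hdual]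
  exact if_congr eq_comm rfl rfl

variable [Fintype ι]

theorem sum_apply_dual_eq_trace (hdual : ∀ i j, g (f i) (e j) = if i = j then 1 else 0)
    (A : M →ₗ[R] M) : ∑ k, g (f k) (A (e k)) = trace R M A := by
  simp [trace_eq_matrix_trace R e, Matrix.trace, LinearMap.toMatrix_apply,
    apply_dual_eq_repr hdual]

theorem sum_apply_mul_apply_dual (hgsymm : ∀ x y, g x y = g y x)
    (hdual : ∀ i j, g (f i) (e j) = if i = j then 1 else 0) (ω ω' : M →ₗ[R] R) {Ω : M}
    (hΩ : ∀ x, g Ω x = ω' x) : ∑ i, ω (e i) * ω' (f i) = ω Ω := by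
  conv_rhs => rw [← e.sum_repr Ω]
  simp [← hΩ, hgsymm Ω, apply_dual_eq_repr hdual, mul_comm, -Module.Basis.sum_repr]

theorem sum_apply_apply_dual_eq_card (hgsymm : ∀ x y, g x y = g y x)
    (hdual : ∀ i j, g (f i) (e j) = if i = j then 1 else 0) {J : M →ₗ[R] M} {c : R}
    (hJ : ∀ x y, g (J x) (J y) = c * g x y) :
    ∑ k, g (J (e k)) (J (f k)) = Fintype.card ι * c := by
  simp [hJ, apply_dual_symm hgsymm hdual]

theorem sum_apply_apply_dual_eq_zero_of_eq_comp (hgsymm : ∀ x y, g x y = g y x)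
    (hdual : ∀ i j, g (f i) (e j) = if i = j then 1 else 0) {J J' K : M →ₗ[R] M} {c : R}
    (hJ : ∀ x y, g (J x) (J y) = c * g x y) (hJ' : ∀ x, J' x = J (K x)) (hK : trace R M K = 0) :
    ∑ k, g (J (e k)) (J' (f k)) = 0 ∧ ∑ k, g (J' (e k)) (J (f k)) = 0 := by
  constructor
  · simp only [hJ', hJ, ← mul_sum, sum_apply_dual_eq_trace (apply_dual_symm hgsymm hdual), hK,
      mul_zero]
  · simp only [hJ', hJ, hgsymm (K _), ← mul_sum, sum_apply_dual_eq_trace hdual, hK, mul_zero]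

theorem sum_sum_apply_smul_sub_smul (hgsymm : ∀ x y, g x y = g y x)
    (hdual : ∀ i j, g (f i) (e j) = if i = j then 1 else 0) {ωa ωb : M →ₗ[R] R}
    {Ja Jb K : M →ₗ[R] M} {ca cb : R} {Ωa Ωb : M}
    (hJa : ∀ x y, g (Ja x) (Ja y) = ca * g x y) (hJb : ∀ x y, g (Jb x) (Jb y) = cb * g x y)
    (hJab : ∀ x, Jb x = Ja (K x)) (hK : trace R M K = 0)
    (hΩa : ∀ x, g Ωa x = ωa x) (hΩb : ∀ x, g Ωb x = ωb x) :
    ∑ i, ∑ k, g (ωa (e i) • Ja (e k) - ωb (e i) • Jb (e k))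
        (ωa (f i) • Ja (f k) - ωb (f i) • Jb (f k)) =
      Fintype.card ι * (ca * ωa Ωa + cb * ωb Ωb) := by
  obtain ⟨hab, hba⟩ := sum_apply_apply_dual_eq_zero_of_eq_comp hgsymm hdual hJa hJab hK
  rw [sum_sum_smul_sub_smul, hab, hba, sum_apply_apply_dual_eq_card hgsymm hdual hJa,
    sum_apply_apply_dual_eq_card hgsymm hdual hJb, sum_apply_mul_apply_dual hgsymm hdual ωa _ hΩa,
    sum_apply_mul_apply_dual hgsymm hdual ωb _ hΩb]
  ring

end LinearMap

theorem stmt14_general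
    (n : ℕ) (hn : 1 ≤ n)
    (V : Type) [AddCommGroup V] [Module ℝ V]
    (J1 J2 J3 : V →ₗ[ℝ] V)
    (h123 : ∀ x, J1 x = J2 (J3 x)) (h132 : ∀ x, J1 x = -J3 (J2 x))
    (h231 : ∀ x, J2 x = J3 (J1 x)) (h213 : ∀ x, J2 x = -J1 (J3 x))
    (h312 : ∀ x, J3 x = J1 (J2 x)) (h321 : ∀ x, J3 x = -J2 (J1 x))
    (g : V →ₗ[ℝ] V →ₗ[ℝ] ℝ)
    (hgsymm : ∀ x y, g x y = g y x)
    (hgJ1 : ∀ x y, g (J1 x) (J1 y) = g x y)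
    (hgJ2 : ∀ x y, g (J2 x) (J2 y) = -g x y)
    (hgJ3 : ∀ x y, g (J3 x) (J3 y) = -g x y)
    (ω1 ω2 ω3 : V →ₗ[ℝ] ℝ)
    (Ω1 Ω2 Ω3 : V)
    (hΩ1 : ∀ x, g Ω1 x = ω1 x) (hΩ2 : ∀ x, g Ω2 x = ω2 x) (hΩ3 : ∀ x, g Ω3 x = ω3 x)
    (e f : Module.Basis (Fin (4 * n)) ℝ V)
    (hdual : ∀ i j, g (f i) (e j) = if i = j then 1 else 0) :
    ((∑ i, ∑ k, g (ω3 (e i) • J2 (e k) - ω2 (e i) • J3 (e k))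
                   (ω3 (f i) • J2 (f k) - ω2 (f i) • J3 (f k))) = 0 ∧
     (∑ i, ∑ k, g (ω1 (e i) • J3 (e k) - ω3 (e i) • J1 (e k))
                   (ω1 (f i) • J3 (f k) - ω3 (f i) • J1 (f k))) = 0 ∧
     (∑ i, ∑ k, g (ω2 (e i) • J1 (e k) - ω1 (e i) • J2 (e k))
                   (ω2 (f i) • J1 (f k) - ω1 (f i) • J2 (f k))) = 0) ↔
    (ω1 Ω1 = 0 ∧ ω2 Ω2 = 0 ∧ ω3 Ω3 = 0) := by
  have htr1 : LinearMap.trace ℝ V (-J1) = 0 := by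
    rw [map_neg, LinearMap.trace_eq_zero_of_eq_comp_of_eq_neg_comp h123 h132, neg_zero]
  have htr2 : LinearMap.trace ℝ V (-J2) = 0 := by
    rw [map_neg, LinearMap.trace_eq_zero_of_eq_comp_of_eq_neg_comp h231 h213, neg_zero]
  have htr3 : LinearMap.trace ℝ V (-J3) = 0 := by
    rw [map_neg, LinearMap.trace_eq_zero_of_eq_comp_of_eq_neg_comp h312 h321, neg_zero]
  have hg1 : ∀ x y, g (J1 x) (J1 y) = 1 * g x y := by simpa using hgJ1
  have hg2 : ∀ x y, g (J2 x) (J2 y) = -1 * g x y := by simpa using hgJ2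
  have hg3 : ∀ x y, g (J3 x) (J3 y) = -1 * g x y := by simpa using hgJ3
  rw [LinearMap.sum_sum_apply_smul_sub_smul hgsymm hdual hg2 hg3 (by simp [h321]) htr1 hΩ3 hΩ2,
    LinearMap.sum_sum_apply_smul_sub_smul hgsymm hdual hg3 hg1 (by simp [h132]) htr2 hΩ1 hΩ3,
    LinearMap.sum_sum_apply_smul_sub_smul hgsymm hdual hg1 hg2 (by simp [h213]) htr3 hΩ2 hΩ1]
  have hcard : (Fintype.card (Fin (4 * n)) : ℝ) ≠ 0 := by
    rw [Fintype.card_fin]; exact_mod_cast (by omega : 4 * n ≠ 0)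
  simp only [mul_eq_zero, hcard, false_or]
  constructor
  · rintro ⟨h1, h2, h3⟩
    refine ⟨?_, ?_, ?_⟩ <;> linarith
  · rintro ⟨h1, h2, h3⟩
    simp [h1, h2, h3]

theorem stmt14
    (n : ℕ) (hn : 1 ≤ n)
    (V : Type) [AddCommGroup V] [Module ℝ V] [FiniteDimensional ℝ V]
    (hdim : Module.finrank ℝ V = 4 * n)
    (J1 J2 J3 : V →ₗ[ℝ] V)
    (hJ1 : ∀ x, J1 (J1 x) = -x) (hJ2 : ∀ x, J2 (J2 x) = -x) (hJ3 : ∀ x, J3 (J3 x) = -x)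
    (h123 : ∀ x, J1 x = J2 (J3 x)) (h132 : ∀ x, J1 x = -J3 (J2 x))
    (h231 : ∀ x, J2 x = J3 (J1 x)) (h213 : ∀ x, J2 x = -J1 (J3 x))
    (h312 : ∀ x, J3 x = J1 (J2 x)) (h321 : ∀ x, J3 x = -J2 (J1 x))
    (g : V →ₗ[ℝ] V →ₗ[ℝ] ℝ)
    (hgsymm : ∀ x y, g x y = g y x)
    (hgnd : ∀ x, (∀ y, g x y = 0) → x = 0)
    (hgJ1 : ∀ x y, g (J1 x) (J1 y) = g x y)
    (hgJ2 : ∀ x y, g (J2 x) (J2 y) = -g x y)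
    (hgJ3 : ∀ x y, g (J3 x) (J3 y) = -g x y)
    (ω1 ω2 ω3 : V →ₗ[ℝ] ℝ)
    (Ω1 Ω2 Ω3 : V)
    (hΩ1 : ∀ x, g Ω1 x = ω1 x) (hΩ2 : ∀ x, g Ω2 x = ω2 x) (hΩ3 : ∀ x, g Ω3 x = ω3 x)
    (e f : Module.Basis (Fin (4 * n)) ℝ V)
    (hdual : ∀ i j, g (f i) (e j) = if i = j then 1 else 0) :
    ((∑ i, ∑ k, g (ω3 (e i) • J2 (e k) - ω2 (e i) • J3 (e k))
                   (ω3 (f i) • J2 (f k) - ω2 (f i) • J3 (f k))) = 0 ∧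
     (∑ i, ∑ k, g (ω1 (e i) • J3 (e k) - ω3 (e i) • J1 (e k))
                   (ω1 (f i) • J3 (f k) - ω3 (f i) • J1 (f k))) = 0 ∧
     (∑ i, ∑ k, g (ω2 (e i) • J1 (e k) - ω1 (e i) • J2 (e k))
                   (ω2 (f i) • J1 (f k) - ω1 (f i) • J2 (f k))) = 0) ↔
    (ω1 Ω1 = 0 ∧ ω2 Ω2 = 0 ∧ ω3 Ω3 = 0) :=
  stmt14_general n hn V J1 J2 J3 h123 h132 h231 h213 h312 h321 g hgsymm hgJ1 hgJ2 hgJ3 ω1 ω2 ω3 Ω1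
    Ω2 Ω3 hΩ1 hΩ2 hΩ3 e f hdual
end

section
/- For each cyclic permutation (α,β,γ) of (1,2,3), let F_α(x,y,z) := ω_γ(x)·g(J_βy,z) − ω_β(x)·g(J_γy,z). Then for every basis (e₁,…,e_{4n}) of V with g-dual basis (ẽ₁,…,ẽ_{4n}) and every z ∈ V: Σᵢ F_α(ẽᵢ, eᵢ, z) = −ε_β·ω_γ(J_βz) + ε_γ·ω_β(J_γz). -/
/-!
Pairing a basis with its `g`-dual basis computes traces: `∑ᵢ φ(ẽᵢ) g(eᵢ, w) = φ(w)`, since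
`g(eᵢ, w)` is the `i`-th coordinate of `w` in the basis `ẽ`. Moving `J_β` across `g` (where it is
self-adjoint for `β = 2, 3` and skew-adjoint for `β = 1`) turns each half of `θ_α(z)` into such a
trace evaluated at `J_β z`.
-/

open LinearMap

section DualBasis

variable {ι R M : Type*} [Fintype ι] [DecidableEq ι] [CommRing R] [AddCommGroup M] [Module R M]
  {B : M →ₗ[R] M →ₗ[R] R} {e : ι → M} {f : Module.Basis ι R M}

theorem apply_eq_repr_of_dual (hdual : ∀ i j, B (e i) (f j) = if j = i then 1 else 0)
    (i : ι) (w : M) : B (e i) w = f.repr w i :=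
  calc B (e i) w = B (e i) (∑ j, f.repr w j • f j) := by rw [f.sum_repr]
    _ = f.repr w i := by
      simp only [map_sum, map_smul, smul_eq_mul, hdual, mul_ite, mul_one, mul_zero,
        Finset.sum_ite_eq', Finset.mem_univ, if_true]

theorem sum_mul_apply_eq_of_dual (hdual : ∀ i j, B (e i) (f j) = if j = i then 1 else 0)
    (φ : M →ₗ[R] R) (w : M) : ∑ i, φ (f i) * B (e i) w = φ w :=
  calc ∑ i, φ (f i) * B (e i) w = φ (∑ i, f.repr w i • f i) := by
        simp only [apply_eq_repr_of_dual hdual, map_sum, map_smul, smul_eq_mul, mul_comm]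
    _ = φ w := by rw [f.sum_repr]

theorem sum_mul_apply_map_eq_of_isAdjointPair
    (hdual : ∀ i j, B (e i) (f j) = if j = i then 1 else 0)
    {J K : M → M} (hJK : IsAdjointPair B B J K) (φ : M →ₗ[R] R) (z : M) :
    ∑ i, φ (f i) * B (J (e i)) z = φ (K z) := by
  simp only [hJK _ z]
  exact sum_mul_apply_eq_of_dual hdual φ (K z)

end DualBasis

section ComplexStructure

variable {R M : Type*} [CommRing R] [AddCommGroup M] [Module R M]
  {B : M →ₗ[R] M →ₗ[R] R} {J : M →ₗ[R] M}

theorem isAdjointPair_neg_of_isometry (hJ : ∀ x, J (J x) = -x)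
    (hB : ∀ x y, B (J x) (J y) = B x y) : IsAdjointPair B B J ⇑(-J) := fun x z ↦ by
  rw [LinearMap.neg_apply, map_neg, ← hB x (J z), hJ, map_neg, neg_neg]

theorem isAdjointPair_self_of_antiIsometry (hJ : ∀ x, J (J x) = -x)
    (hB : ∀ x y, B (J x) (J y) = -B x y) : IsAdjointPair B B J J := fun x z ↦ by
  rw [← neg_neg (B x (J z)), ← hB x (J z), hJ, map_neg, neg_neg]

end ComplexStructure

theorem stmt15_general
    (n : ℕ)
    (V : Type) [AddCommGroup V] [Module ℝ V]
    (J1 J2 J3 : V →ₗ[ℝ] V)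
    (hJ1 : ∀ x, J1 (J1 x) = -x) (hJ2 : ∀ x, J2 (J2 x) = -x) (hJ3 : ∀ x, J3 (J3 x) = -x)
    (g : V →ₗ[ℝ] V →ₗ[ℝ] ℝ)
    (hgsymm : ∀ x y, g x y = g y x)
    (hgJ1 : ∀ x y, g (J1 x) (J1 y) = g x y)
    (hgJ2 : ∀ x y, g (J2 x) (J2 y) = -g x y)
    (hgJ3 : ∀ x y, g (J3 x) (J3 y) = -g x y)
    (ω1 ω2 ω3 : V →ₗ[ℝ] ℝ)
    :
    ∀ (e f : Module.Basis (Fin (4 * n)) ℝ V),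
      (∀ i j, g (f i) (e j) = if i = j then 1 else 0) →
      ∀ z,
        (∑ i, (ω3 (f i) * g (J2 (e i)) z - ω2 (f i) * g (J3 (e i)) z))
            = ω3 (J2 z) - ω2 (J3 z) ∧
        (∑ i, (ω1 (f i) * g (J3 (e i)) z - ω3 (f i) * g (J1 (e i)) z))
            = ω1 (J3 z) + ω3 (J1 z) ∧
        (∑ i, (ω2 (f i) * g (J1 (e i)) z - ω1 (f i) * g (J2 (e i)) z))
            = -ω2 (J1 z) - ω1 (J2 z) := by
  intro e f hdual z
  have hdual' : ∀ i j, g (e i) (f j) = if j = i then 1 else 0 := fun i j ↦ by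
    rw [hgsymm, hdual]
  have trace1 (φ : V →ₗ[ℝ] ℝ) : ∑ i, φ (f i) * g (J1 (e i)) z = -φ (J1 z) := by
    rw [sum_mul_apply_map_eq_of_isAdjointPair hdual'
      (isAdjointPair_neg_of_isometry hJ1 hgJ1), LinearMap.neg_apply, map_neg]
  have trace2 (φ : V →ₗ[ℝ] ℝ) : ∑ i, φ (f i) * g (J2 (e i)) z = φ (J2 z) :=
    sum_mul_apply_map_eq_of_isAdjointPair hdual' (isAdjointPair_self_of_antiIsometry hJ2 hgJ2) φ z
  have trace3 (φ : V →ₗ[ℝ] ℝ) : ∑ i, φ (f i) * g (J3 (e i)) z = φ (J3 z) :=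
    sum_mul_apply_map_eq_of_isAdjointPair hdual' (isAdjointPair_self_of_antiIsometry hJ3 hgJ3) φ z
  simp only [Finset.sum_sub_distrib, trace1, trace2, trace3, sub_neg_eq_add, and_self]

theorem stmt15
    (n : ℕ) (hn : 1 ≤ n)
    (V : Type) [AddCommGroup V] [Module ℝ V] [FiniteDimensional ℝ V]
    (hdim : Module.finrank ℝ V = 4 * n)
    (J1 J2 J3 : V →ₗ[ℝ] V)
    (hJ1 : ∀ x, J1 (J1 x) = -x) (hJ2 : ∀ x, J2 (J2 x) = -x) (hJ3 : ∀ x, J3 (J3 x) = -x)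
    (h123 : ∀ x, J1 x = J2 (J3 x)) (h132 : ∀ x, J1 x = -J3 (J2 x))
    (h231 : ∀ x, J2 x = J3 (J1 x)) (h213 : ∀ x, J2 x = -J1 (J3 x))
    (h312 : ∀ x, J3 x = J1 (J2 x)) (h321 : ∀ x, J3 x = -J2 (J1 x))
    (g : V →ₗ[ℝ] V →ₗ[ℝ] ℝ)
    (hgsymm : ∀ x y, g x y = g y x)
    (hgnd : ∀ x, (∀ y, g x y = 0) → x = 0)
    (hgJ1 : ∀ x y, g (J1 x) (J1 y) = g x y)
    (hgJ2 : ∀ x y, g (J2 x) (J2 y) = -g x y)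
    (hgJ3 : ∀ x y, g (J3 x) (J3 y) = -g x y)
    (ω1 ω2 ω3 : V →ₗ[ℝ] ℝ)
    :
    ∀ (e f : Module.Basis (Fin (4 * n)) ℝ V),
      (∀ i j, g (f i) (e j) = if i = j then 1 else 0) →
      ∀ z,
        (∑ i, (ω3 (f i) * g (J2 (e i)) z - ω2 (f i) * g (J3 (e i)) z))
            = ω3 (J2 z) - ω2 (J3 z) ∧
        (∑ i, (ω1 (f i) * g (J3 (e i)) z - ω3 (f i) * g (J1 (e i)) z))
            = ω1 (J3 z) + ω3 (J1 z) ∧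
        (∑ i, (ω2 (f i) * g (J1 (e i)) z - ω1 (f i) * g (J2 (e i)) z))
            = -ω2 (J1 z) - ω1 (J2 z) :=
  stmt15_general n V J1 J2 J3 hJ1 hJ2 hJ3 g hgsymm hgJ1 hgJ2 hgJ3 ω1 ω2 ω3
end
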